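/- arXiv:1203.4422 — 4 statements merged into one kernel-verified Lean document; each statement's English description precedes it below -/
import Mathlib

section
/- Theorem 3 (single-domain minimax-regret prediction): the minimizer over all square-integrable Borel functions ρ:ℝ^{M₁}→ℝ^N of the worst-case single-domain regret sup_{F∈𝓕} REG₁(F,ρ) is ρ_S(X₁) = E_ν[ρ_C(X₁,X₂)|X₁], the conditional expectation under ν of the multi-domain minimax estimator ρ_C given X₁; that is, for every such ρ, sup_{F∈𝓕} REG₁(F,ρ_S) ≤ sup_{F∈𝓕} REG₁(F,ρ). -/
open MeasureTheory
open scoped RealInnerProductSpace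
set_option linter.unusedSectionVars false

noncomputable section


variable {α : Type*} {m m0 : MeasurableSpace α} {μ : @Measure α m0}
variable {E : Type*} [NormedAddCommGroup E] [InnerProductSpace ℝ E] [CompleteSpace E]

/-- A function strongly measurable w.r.t. a comap σ-algebra is constant on fibers. -/
theorem sm_comap_fiber {β γ : Type*} [TopologicalSpace γ] [T2Space γ] {mβ : MeasurableSpace β}
    {f : α → β} {g : α → γ} (hg : @StronglyMeasurable α γ _ (MeasurableSpace.comap f mβ) g)
    {x y : α} (h : f x = f y) : g x = g y := by
  have key : ∀ n, hg.approx n x = hg.approx n y := by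
    intro n
    obtain ⟨t, -, hteq⟩ := @MeasureTheory.SimpleFunc.measurableSet_fiber α γ
      (MeasurableSpace.comap f mβ) (hg.approx n) (hg.approx n x)
    have hx : x ∈ f ⁻¹' t := by rw [hteq]; exact rfl
    have hy : y ∈ f ⁻¹' t := by simpa [Set.mem_preimage, ← h] using hx
    rw [hteq] at hy
    exact (Set.mem_singleton_iff.mp hy).symm
  have hx := hg.tendsto_approx x
  rw [show (fun n => hg.approx n x) = fun n => hg.approx n y from funext key] at hx
  exact tendsto_nhds_unique hx (hg.tendsto_approx y)

theorem condexp_ae_eq_condexpL2' [IsFiniteMeasure μ] (hm : m ≤ m0) {f : α → E}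
    (hf : MemLp f 2 μ) :
    μ[f|m] =ᵐ[μ] (condExpL2 E ℝ hm (hf.toLp f) : α →₂[μ] E) := by
  haveI : IsFiniteMeasure (μ.trim hm) := isFiniteMeasure_trim hm
  refine (ae_eq_condExp_of_forall_setIntegral_eq hm (hf.integrable one_le_two)
    (fun s _ _ => (integrable_condExpL2_of_isFiniteMeasure hm).integrableOn)
    (fun s hs hμs => ?_) (aestronglyMeasurable_condExpL2 hm _)).symm
  rw [integral_condExpL2_eq hm (hf.toLp f) hs hμs.ne]
  exact setIntegral_congr_ae (hm s hs) (hf.coeFn_toLp.mono fun x hx _ => hx)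

theorem MeasureTheory.MemLp.condexp_two [IsFiniteMeasure μ] (hm : m ≤ m0) {f : α → E} (hf : MemLp f 2 μ) :
    MemLp (μ[f|m]) 2 μ :=
  (Lp.memLp _).ae_eq (condexp_ae_eq_condexpL2' hm hf).symm

/-- Orthogonality of the conditional-expectation residual to `m`-measurable `L²` functions. -/
theorem integral_inner_condexp_residual [IsFiniteMeasure μ] (hm : m ≤ m0) {f z : α → E}
    (hf : MemLp f 2 μ) (hz : MemLp z 2 μ) (hzm : AEStronglyMeasurable[m] z μ) :
    ∫ x, ⟪f x - (μ[f|m]) x, z x⟫ ∂μ = 0 := by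
  set fL := hf.toLp f with hfL
  set zL := hz.toLp z with hzL
  set cL := (condExpL2 E ℝ hm fL : α →₂[μ] E) with hcL
  have h1 : (inner ℝ (cL : α →₂[μ] E) zL : ℝ) = inner ℝ fL zL :=
    inner_condExpL2_eq_inner_fun hm fL zL (hzm.congr hz.coeFn_toLp.symm)
  have h2 : ∫ x, ⟪f x - (μ[f|m]) x, z x⟫ ∂μ = inner ℝ (fL - cL) zL := by
    rw [L2.inner_def]
    refine integral_congr_ae ?_
    filter_upwards [hf.coeFn_toLp, condexp_ae_eq_condexpL2' hm hf, hz.coeFn_toLp,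
      Lp.coeFn_sub fL cL] with x ha hb hc hd
    rw [hd]
    simp only [Pi.sub_apply, ← hfL, ← hcL, ← hzL] at *
    rw [ha, hb, hc]
  rw [h2, inner_sub_left, h1, sub_self]

/-- `∫ ‖G‖²` equals the squared `L²` norm. -/
theorem integral_norm_sq_eq (ξ : α →₂[μ] E) {G : α → E} (hG : G =ᵐ[μ] ξ) :
    ∫ x, ‖G x‖ ^ 2 ∂μ = ‖ξ‖ ^ 2 := by
  have : (‖ξ‖ : ℝ) ^ 2 = inner ℝ ξ ξ := (real_inner_self_eq_norm_sq ξ).symm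
  rw [this, L2.inner_def]
  refine integral_congr_ae ?_
  filter_upwards [hG] with x hx
  rw [hx, real_inner_self_eq_norm_sq]

theorem integral_inner_eq (ξ η : α →₂[μ] E) {G H : α → E} (hG : G =ᵐ[μ] ξ) (hH : H =ᵐ[μ] η) :
    ∫ x, ⟪G x, H x⟫ ∂μ = inner ℝ ξ η := by
  rw [L2.inner_def]
  refine integral_congr_ae ?_
  filter_upwards [hG, hH] with x hx hy
  rw [hx, hy]


end
section
variable {H : Type*} [NormedAddCommGroup H] [InnerProductSpace ℝ H]




theorem min_implies_orth (y g d : H)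
    (hmin : ∀ t : ℝ, ‖y - g‖ ^ 2 ≤ ‖y - (g + t • d)‖ ^ 2) : ⟪y - g, d⟫ = 0 := by
  set I := (⟪y - g, d⟫ : ℝ) with hI
  have key : ∀ t : ℝ, 0 ≤ t * (t * ‖d‖ ^ 2 - 2 * I) := by
    intro t
    have h := hmin t
    have hexp : ‖y - (g + t • d)‖ ^ 2 = ‖y - g‖ ^ 2 - 2 * (t * I) + t ^ 2 * ‖d‖ ^ 2 := by
      have : y - (g + t • d) = (y - g) - t • d := by abel
      rw [this, norm_sub_sq_real, inner_smul_right, norm_smul, mul_pow]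
      simp only [Real.norm_eq_abs, sq_abs, ← hI]
    rw [hexp] at h
    nlinarith
  rcases eq_or_ne (‖d‖ ^ 2) 0 with hd | hd
  · have h1 := key 1
    have h2 := key (-1)
    rw [hd] at h1 h2
    nlinarith
  · have hd0 : 0 < ‖d‖ ^ 2 := lt_of_le_of_ne (by positivity) (Ne.symm hd)
    have h1 := key (I / ‖d‖ ^ 2)
    have : I / ‖d‖ ^ 2 * ‖d‖ ^ 2 = I := div_mul_cancel₀ I hd
    rw [this] at h1
    have h2 : 0 ≤ I / ‖d‖ ^ 2 * (-I) := by linarith [h1]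
    rcases le_or_gt I 0 with h | h
    · nlinarith
    · nlinarith [div_pos h hd0]

theorem orth_implies_min (y g d : H) (horth : ⟪y - g, d⟫ = 0) :
    ‖y - g‖ ^ 2 ≤ ‖y - (g + d)‖ ^ 2 := by
  have h : y - (g + d) = (y - g) - d := by abel
  have h2 := norm_sub_sq_real (y - g) d
  rw [h, h2, horth]
  nlinarith [sq_nonneg ‖d‖]

/-- The key geometric inequality for Theorem 3. -/
theorem key_geometry (ym mm rS r q : H)
    (h1 : ⟪ym - mm, mm⟫ = 0) (h2 : ⟪ym - mm, rS⟫ = 0) (h3 : ⟪ym - mm, r⟫ = 0)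
    (h4 : ⟪q - rS, mm⟫ = 0) (h5 : ⟪q - rS, rS⟫ = 0) (h6 : ⟪q - rS, r⟫ = 0) :
    2 * (‖ym - rS‖ ^ 2 - ‖ym - mm‖ ^ 2) ≤
      (‖ym - r‖ ^ 2 - ‖ym - mm‖ ^ 2) +
        (‖(2 : ℝ) • q - ym - r‖ ^ 2 - ‖(2 : ℝ) • q - ym - ((2 : ℝ) • rS - mm)‖ ^ 2) := by
  set e := ym - mm with he
  set dd := q - rS with hd
  have hA : ym - rS = e + (mm - rS) := by rw [he]; abel
  have hB : ym - r = e + (mm - r) := by rw [he]; abel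
  have hC : (2 : ℝ) • q - ym - r = ((2:ℝ) • dd - e) + ((2:ℝ) • rS - mm - r) := by
    rw [he, hd]; module
  have hD : (2 : ℝ) • q - ym - ((2 : ℝ) • rS - mm) = (2:ℝ) • dd - e := by
    rw [he, hd]; module
  have o1 : ⟪e, mm - rS⟫ = 0 := by rw [inner_sub_right, h1, h2, sub_zero]
  have o2 : ⟪e, mm - r⟫ = 0 := by rw [inner_sub_right, h1, h3, sub_zero]
  have o3 : ⟪(2:ℝ) • dd - e, (2:ℝ) • rS - mm - r⟫ = 0 := by
    rw [inner_sub_left, inner_smul_left]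
    rw [show ((2:ℝ) • rS - mm - r : H) = (2:ℝ) • rS - mm - r from rfl]
    rw [inner_sub_right, inner_sub_right, inner_smul_right]
    rw [inner_sub_right, inner_sub_right, inner_smul_right, h1, h2, h3, h4, h5, h6]
    simp
  rw [hA, hB, hC, hD]
  rw [norm_add_sq_real, o1, norm_add_sq_real, o2, norm_add_sq_real, o3]
  -- goal now: 2*(‖e‖²+0+‖mm-rS‖² - ‖e‖²) ≤ ...
  have par : 4 * ‖mm - rS‖ ^ 2 ≤ 2 * (‖mm - r‖ ^ 2 + ‖(2:ℝ) • rS - mm - r‖ ^ 2) := by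
    have hab : (mm - r) - ((2:ℝ) • rS - mm - r) = (2:ℝ) • (mm - rS) := by module
    have h1 : ‖(mm - r) - ((2:ℝ) • rS - mm - r)‖ ^ 2 =
        ‖mm - r‖ ^ 2 - 2 * ⟪mm - r, (2:ℝ) • rS - mm - r⟫ + ‖(2:ℝ) • rS - mm - r‖ ^ 2 :=
      norm_sub_sq_real _ _
    have h2 : ‖(mm - r) - ((2:ℝ) • rS - mm - r)‖ ^ 2 = 4 * ‖mm - rS‖ ^ 2 := by
      rw [hab, norm_smul, mul_pow]
      simp only [Real.norm_eq_abs, sq_abs]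
      norm_num
    have h3 : |⟪mm - r, (2:ℝ) • rS - mm - r⟫| ≤ ‖mm - r‖ * ‖(2:ℝ) • rS - mm - r‖ :=
      abs_real_inner_le_norm _ _
    have h4 : 2 * (‖mm - r‖ * ‖(2:ℝ) • rS - mm - r‖) ≤ ‖mm - r‖ ^ 2 + ‖(2:ℝ) • rS - mm - r‖ ^ 2 := by
      nlinarith [sq_nonneg (‖mm - r‖ - ‖(2:ℝ) • rS - mm - r‖)]
    rw [abs_le] at h3
    nlinarith
  linarith


end
section
variable {α : Type*} {m0 : MeasurableSpace α} {μ : Measure α}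
variable {E : Type*} [NormedAddCommGroup E] [InnerProductSpace ℝ E] [CompleteSpace E]
variable {f g : α → E}




theorem coeFn_sub_toLp (hf : MemLp f 2 μ) (hg : MemLp g 2 μ) :
    (fun x => f x - g x) =ᵐ[μ] ⇑(hf.toLp f - hg.toLp g) := by
  filter_upwards [hf.coeFn_toLp, hg.coeFn_toLp, Lp.coeFn_sub (hf.toLp f) (hg.toLp g)]
    with x h1 h2 h3
  rw [h3, Pi.sub_apply, h1, h2]

theorem integrable_inner_of_memℒp {f g : α → E} (hf : MemLp f 2 μ) (hg : MemLp g 2 μ) :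
    Integrable (fun x => ⟪f x, g x⟫) μ := by
  refine (L2.integrable_inner (𝕜 := ℝ) (hf.toLp f) (hg.toLp g)).congr ?_
  filter_upwards [hf.coeFn_toLp, hg.coeFn_toLp] with x h1 h2
  rw [h1, h2]

theorem L2min {Y g d : α → E} (hY : MemLp Y 2 μ) (hg : MemLp g 2 μ) (hd : MemLp d 2 μ)
    (hmin : ∀ t : ℝ, ∫ x, ‖Y x - g x‖ ^ 2 ∂μ ≤ ∫ x, ‖Y x - (g x + t • d x)‖ ^ 2 ∂μ) :
    ∫ x, ⟪Y x - g x, d x⟫ ∂μ = 0 := by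
  have subid : (fun x => Y x - g x) =ᵐ[μ] ⇑(hY.toLp Y - hg.toLp g) := coeFn_sub_toLp hY hg
  have hid : ∀ t : ℝ, (fun x => Y x - (g x + t • d x)) =ᵐ[μ]
      ⇑(hY.toLp Y - (hg.toLp g + t • hd.toLp d)) := by
    intro t
    filter_upwards [hY.coeFn_toLp, hg.coeFn_toLp, hd.coeFn_toLp,
      Lp.coeFn_sub (hY.toLp Y) (hg.toLp g + t • hd.toLp d),
      Lp.coeFn_add (hg.toLp g) (t • hd.toLp d), Lp.coeFn_smul t (hd.toLp d)] with x h1 h2 h3 h4 h5 h6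
    rw [h4, Pi.sub_apply, h1, h5, Pi.add_apply, h2, h6, Pi.smul_apply, h3]
  rw [integral_inner_eq (hY.toLp Y - hg.toLp g) (hd.toLp d) subid hd.coeFn_toLp.symm]
  apply min_implies_orth
  intro t
  rw [← integral_norm_sq_eq _ subid, ← integral_norm_sq_eq _ (hid t)]
  exact hmin t

theorem L2orth_min {Y g d : α → E} (hY : MemLp Y 2 μ) (hg : MemLp g 2 μ) (hd : MemLp d 2 μ)
    (horth : ∫ x, ⟪Y x - g x, d x⟫ ∂μ = 0) :
    ∫ x, ‖Y x - g x‖ ^ 2 ∂μ ≤ ∫ x, ‖Y x - (g x + d x)‖ ^ 2 ∂μ := by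
  have subid : (fun x => Y x - g x) =ᵐ[μ] ⇑(hY.toLp Y - hg.toLp g) := coeFn_sub_toLp hY hg
  have hid : (fun x => Y x - (g x + d x)) =ᵐ[μ]
      ⇑(hY.toLp Y - (hg.toLp g + hd.toLp d)) := by
    filter_upwards [hY.coeFn_toLp, hg.coeFn_toLp, hd.coeFn_toLp,
      Lp.coeFn_sub (hY.toLp Y) (hg.toLp g + hd.toLp d),
      Lp.coeFn_add (hg.toLp g) (hd.toLp d)] with x h1 h2 h3 h4 h5
    rw [h4, Pi.sub_apply, h1, h5, Pi.add_apply, h2, h3]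
  rw [integral_norm_sq_eq _ subid, integral_norm_sq_eq _ hid]
  apply orth_implies_min
  rw [← integral_inner_eq (hY.toLp Y - hg.toLp g) (hd.toLp d) subid hd.coeFn_toLp.symm]
  exact horth

end

noncomputable section

abbrev Euc (k : ℕ) : Type := EuclideanSpace ℝ (Fin k)

abbrev XSp (M₁ M₂ : ℕ) : Type := Euc M₁ × Euc M₂

abbrev ΩSp (M₁ M₂ N : ℕ) : Type := XSp M₁ M₂ × Euc N

/-- Mean square error of a (multi-domain) estimator `ρ` under joint law `F` of `((X₁,X₂),Y)`. -/
def MSE {M₁ M₂ N : ℕ} (F : Measure (ΩSp M₁ M₂ N)) (ρ : XSp M₁ M₂ → Euc N) : ℝ :=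
  ∫ ω, ‖ω.2 - ρ ω.1‖ ^ 2 ∂F

/-- The class `C = A + B` of estimators `(x₁,x₂) ↦ φ(x₁) + ψ(x₂)`, `φ ∈ A`, `ψ ∈ B`. -/
def Cset {M₁ M₂ N : ℕ} (A : Submodule ℝ (Euc M₁ → Euc N)) (B : Submodule ℝ (Euc M₂ → Euc N)) :
    Set (XSp M₁ M₂ → Euc N) :=
  {ρ | ∃ φ ∈ A, ∃ ψ ∈ B, ρ = fun x => φ x.1 + ψ x.2}

/-- The family `𝓕` of joint distributions consistent with the partial knowledge
`(ν, φ_A, ψ_B, c)`. -/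
def SetF {M₁ M₂ N : ℕ} (ν : Measure (XSp M₁ M₂))
    (A : Submodule ℝ (Euc M₁ → Euc N)) (B : Submodule ℝ (Euc M₂ → Euc N))
    (φA : Euc M₁ → Euc N) (ψB : Euc M₂ → Euc N) (c : ℝ) :
    Set (Measure (ΩSp M₁ M₂ N)) :=
  {F | IsProbabilityMeasure F ∧ F.map Prod.fst = ν ∧
    MemLp (fun ω : ΩSp M₁ M₂ N => ω.2) 2 F ∧
    (∀ φ ∈ A, MSE F (fun x => φA x.1) ≤ MSE F (fun x => φ x.1)) ∧
    (∀ ψ ∈ B, MSE F (fun x => ψB x.2) ≤ MSE F (fun x => ψ x.2)) ∧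
    ∫ ω, ‖ω.2‖ ^ 2 ∂F = c}

/-- The σ-algebra generated by `(X₁,X₂)` on the sample space. -/
def sigmaX (M₁ M₂ N : ℕ) : MeasurableSpace (ΩSp M₁ M₂ N) :=
  MeasurableSpace.comap Prod.fst inferInstance

/-- The σ-algebra generated by `X₁` on the sample space. -/
def sigmaX1 (M₁ M₂ N : ℕ) : MeasurableSpace (ΩSp M₁ M₂ N) :=
  MeasurableSpace.comap (fun ω => ω.1.1) inferInstance

/-- The σ-algebra generated by `X₁` on the `(X₁,X₂)`-space. -/
def sigmaX1' (M₁ M₂ : ℕ) : MeasurableSpace (XSp M₁ M₂) :=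
  MeasurableSpace.comap Prod.fst inferInstance

/-- Multi-domain regret of `ρ(X₁,X₂)`: its MSE minus that of `E_F[Y | X₁,X₂]`. -/
def REG {M₁ M₂ N : ℕ} (F : Measure (ΩSp M₁ M₂ N)) (ρ : XSp M₁ M₂ → Euc N) : ℝ :=
  MSE F ρ - ∫ ω, ‖ω.2 - condExp (sigmaX M₁ M₂ N) F (fun ω' => ω'.2) ω‖ ^ 2 ∂F

/-- Mean square error of a single-domain estimator `ρ(X₁)`. -/
def MSE1 {M₁ M₂ N : ℕ} (F : Measure (ΩSp M₁ M₂ N)) (ρ : Euc M₁ → Euc N) : ℝ :=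
  ∫ ω, ‖ω.2 - ρ ω.1.1‖ ^ 2 ∂F

/-- Single-domain regret of `ρ(X₁)`: its MSE minus that of `E_F[Y | X₁]`. -/
def REG1 {M₁ M₂ N : ℕ} (F : Measure (ΩSp M₁ M₂ N)) (ρ : Euc M₁ → Euc N) : ℝ :=
  MSE1 F ρ - ∫ ω, ‖ω.2 - condExp (sigmaX1 M₁ M₂ N) F (fun ω' => ω'.2) ω‖ ^ 2 ∂F

set_option maxHeartbeats 3200000 in
theorem main_step
    (M₁ M₂ N : ℕ)
    (ν : Measure (XSp M₁ M₂)) (hνp : IsProbabilityMeasure ν)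
    (A : Submodule ℝ (Euc M₁ → Euc N)) (B : Submodule ℝ (Euc M₂ → Euc N))
    (hAmeas : ∀ φ ∈ A, Measurable φ) (hBmeas : ∀ ψ ∈ B, Measurable ψ)
    (hAL2 : ∀ φ ∈ A, MemLp φ 2 (ν.map Prod.fst))
    (hBL2 : ∀ ψ ∈ B, MemLp ψ 2 (ν.map Prod.snd))
    (φA : Euc M₁ → Euc N) (ψB : Euc M₂ → Euc N) (hφA : φA ∈ A) (hψB : ψB ∈ B)
    (c : ℝ)
    (ρC : XSp M₁ M₂ → Euc N) (hρCmem : ρC ∈ Cset A B)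
    (hρCmin : ∀ F ∈ SetF ν A B φA ψB c, ∀ ρ' ∈ Cset A B, MSE F ρC ≤ MSE F ρ')
    (ρS : Euc M₁ → Euc N) (hρSmeas : Measurable ρS)
    (hρS : (fun x : XSp M₁ M₂ => ρS x.1) =ᵐ[ν] condExp (sigmaX1' M₁ M₂) ν ρC)
    (ρ : Euc M₁ → Euc N) (hρmeas : Measurable ρ) (hρL2 : MemLp ρ 2 (ν.map Prod.fst))
    (F : Measure (ΩSp M₁ M₂ N)) (hF : F ∈ SetF ν A B φA ψB c) :
    ∃ F' ∈ SetF ν A B φA ψB c, 2 * REG1 F ρS ≤ REG1 F ρ + REG1 F' ρ := by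
  have hF' := hF
  obtain ⟨hFp, hFmarg, hY2, hminA, hminB, hYc⟩ := hF'
  haveI := hFp
  haveI := hνp
  obtain ⟨φ₀, hφ₀, ψ₀, hψ₀, hρCeq⟩ := hρCmem
  have hρCmeas : Measurable ρC := by
    rw [hρCeq]
    exact ((hAmeas φ₀ hφ₀).comp measurable_fst).add ((hBmeas ψ₀ hψ₀).comp measurable_snd)
  -- σ-algebra facts
  have hX1meas : Measurable fun ω : ΩSp M₁ M₂ N => ω.1.1 := measurable_fst.comp measurable_fst
  have hX2meas : Measurable fun ω : ΩSp M₁ M₂ N => ω.1.2 := measurable_snd.comp measurable_fst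
  have hm1 : sigmaX1 M₁ M₂ N ≤ (inferInstance : MeasurableSpace (ΩSp M₁ M₂ N)) :=
    hX1meas.comap_le
  haveI : IsFiniteMeasure (F.trim hm1) := isFiniteMeasure_trim hm1
  have hmX1' : sigmaX1' M₁ M₂ ≤ (inferInstance : MeasurableSpace (XSp M₁ M₂)) :=
    measurable_fst.comap_le
  haveI : IsFiniteMeasure (ν.trim hmX1') := isFiniteMeasure_trim hmX1'
  have hX1m : Measurable[sigmaX1 M₁ M₂ N] fun ω : ΩSp M₁ M₂ N => ω.1.1 :=
    Measurable.of_comap_le le_rfl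
  -- measure map facts
  have hmapX1 : F.map (fun ω : ΩSp M₁ M₂ N => ω.1.1) = ν.map Prod.fst := by
    rw [← hFmarg, Measure.map_map measurable_fst measurable_fst]; rfl
  have hmapX2 : F.map (fun ω : ΩSp M₁ M₂ N => ω.1.2) = ν.map Prod.snd := by
    rw [← hFmarg, Measure.map_map measurable_snd measurable_fst]; rfl
  -- MemLp transfer
  have memF_of_ν : ∀ {u : XSp M₁ M₂ → Euc N}, AEStronglyMeasurable u ν → MemLp u 2 ν →
      MemLp (fun ω : ΩSp M₁ M₂ N => u ω.1) 2 F := by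
    intro u hu h2
    exact (memLp_map_measure_iff (by rw [hFmarg]; exact hu) measurable_fst.aemeasurable).mp
      (by rw [hFmarg]; exact h2)
  have memF_of_X1 : ∀ {u : Euc M₁ → Euc N}, Measurable u → MemLp u 2 (ν.map Prod.fst) →
      MemLp (fun ω : ΩSp M₁ M₂ N => u ω.1.1) 2 F := by
    intro u hu h2
    exact (memLp_map_measure_iff (by rw [hmapX1]; exact hu.aestronglyMeasurable)
      hX1meas.aemeasurable).mp (by rw [hmapX1]; exact h2)
  have memF_of_X2 : ∀ {u : Euc M₂ → Euc N}, Measurable u → MemLp u 2 (ν.map Prod.snd) →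
      MemLp (fun ω : ΩSp M₁ M₂ N => u ω.1.2) 2 F := by
    intro u hu h2
    exact (memLp_map_measure_iff (by rw [hmapX2]; exact hu.aestronglyMeasurable)
      hX2meas.aemeasurable).mp (by rw [hmapX2]; exact h2)
  have hφ2F : ∀ {φ : Euc M₁ → Euc N}, φ ∈ A → MemLp (fun ω : ΩSp M₁ M₂ N => φ ω.1.1) 2 F :=
    fun hφ => memF_of_X1 (hAmeas _ hφ) (hAL2 _ hφ)
  have hψ2F : ∀ {ψ : Euc M₂ → Euc N}, ψ ∈ B → MemLp (fun ω : ΩSp M₁ M₂ N => ψ ω.1.2) 2 F :=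
    fun hψ => memF_of_X2 (hBmeas _ hψ) (hBL2 _ hψ)
  have hρC2ν : MemLp ρC 2 ν := by
    rw [hρCeq]
    exact ((memLp_map_measure_iff (hAmeas φ₀ hφ₀).aestronglyMeasurable
        measurable_fst.aemeasurable).mp (hAL2 φ₀ hφ₀)).add
      ((memLp_map_measure_iff (hBmeas ψ₀ hψ₀).aestronglyMeasurable
        measurable_snd.aemeasurable).mp (hBL2 ψ₀ hψ₀))
  have hρS2ν : MemLp (fun x : XSp M₁ M₂ => ρS x.1) 2 ν :=
    (hρC2ν.condexp_two hmX1').ae_eq hρS.symm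
  have hq2 : MemLp (fun ω : ΩSp M₁ M₂ N => ρC ω.1) 2 F :=
    memF_of_ν hρCmeas.aestronglyMeasurable hρC2ν
  have hr2 : MemLp (fun ω : ΩSp M₁ M₂ N => ρ ω.1.1) 2 F := memF_of_X1 hρmeas hρL2
  have hrS2 : MemLp (fun ω : ΩSp M₁ M₂ N => ρS ω.1.1) 2 F :=
    memF_of_ν (hρSmeas.comp measurable_fst).aestronglyMeasurable hρS2ν
  have hm2 : MemLp (condExp (sigmaX1 M₁ M₂ N) F (fun ω' : ΩSp M₁ M₂ N => ω'.2)) 2 F :=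
    hY2.condexp_two hm1
  have hrS_sm : StronglyMeasurable[sigmaX1 M₁ M₂ N] fun ω : ΩSp M₁ M₂ N => ρS ω.1.1 :=
    (hρSmeas.comp hX1m).stronglyMeasurable
  have hr_sm : StronglyMeasurable[sigmaX1 M₁ M₂ N] fun ω : ΩSp M₁ M₂ N => ρ ω.1.1 :=
    (hρmeas.comp hX1m).stronglyMeasurable
  -- Fact Q : ρS∘X₁ is (a.e.) the conditional expectation of ρC∘X given X₁, under F
  have hsetid : ∀ {s : Set (ΩSp M₁ M₂ N)}, MeasurableSet[sigmaX1 M₁ M₂ N] s →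
      ∃ E0 : Set (Euc M₁), MeasurableSet E0 ∧ (fun ω : ΩSp M₁ M₂ N => ω.1.1) ⁻¹' E0 = s :=
    fun hs => hs
  have hsetF : ∀ {u : XSp M₁ M₂ → Euc N}, AEStronglyMeasurable u ν →
      ∀ {E0 : Set (Euc M₁)}, MeasurableSet E0 →
      ∫ ω in (fun ω : ΩSp M₁ M₂ N => ω.1.1) ⁻¹' E0, u ω.1 ∂F
        = ∫ x in Prod.fst ⁻¹' E0, u x ∂ν := by
    intro u hu E0 hE0
    rw [← hFmarg, setIntegral_map (measurable_fst hE0)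
      (by rw [hFmarg]; exact hu) measurable_fst.aemeasurable]
    rfl
  have hQ : (fun ω : ΩSp M₁ M₂ N => ρS ω.1.1)
      =ᵐ[F] condExp (sigmaX1 M₁ M₂ N) F (fun ω : ΩSp M₁ M₂ N => ρC ω.1) := by
    refine ae_eq_condExp_of_forall_setIntegral_eq hm1 (hq2.integrable one_le_two)
      (fun s _ _ => (hrS2.integrable one_le_two).integrableOn)
      (fun s hs _ => ?_) hrS_sm.aestronglyMeasurable
    obtain ⟨E0, hE0, rfl⟩ := hsetid hs
    have e1 := hsetF (u := fun x : XSp M₁ M₂ => ρS x.1)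
      (hρSmeas.comp measurable_fst).aestronglyMeasurable hE0
    have e4 := hsetF hρCmeas.aestronglyMeasurable hE0
    rw [e1, e4]
    have e2 : ∫ x in Prod.fst ⁻¹' E0, ρS x.1 ∂ν
        = ∫ x in Prod.fst ⁻¹' E0, condExp (sigmaX1' M₁ M₂) ν ρC x ∂ν :=
      setIntegral_congr_ae (measurable_fst hE0) (hρS.mono fun x hx _ => hx)
    have e3 : ∫ x in Prod.fst ⁻¹' E0, condExp (sigmaX1' M₁ M₂) ν ρC x ∂ν
        = ∫ x in Prod.fst ⁻¹' E0, ρC x ∂ν :=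
      setIntegral_condExp hmX1' (hρC2ν.integrable one_le_two) ⟨E0, hE0, rfl⟩
    rw [e2, e3]
  -- orthogonality of residuals
  have ho_y : ∀ {z : ΩSp M₁ M₂ N → Euc N}, MemLp z 2 F →
      AEStronglyMeasurable[sigmaX1 M₁ M₂ N] z F →
      ∫ ω, ⟪ω.2 - condExp (sigmaX1 M₁ M₂ N) F (fun ω' : ΩSp M₁ M₂ N => ω'.2) ω, z ω⟫ ∂F = 0 :=
    fun hz hzm => integral_inner_condexp_residual hm1 hY2 hz hzm
  have ho_q : ∀ {z : ΩSp M₁ M₂ N → Euc N}, MemLp z 2 F →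
      AEStronglyMeasurable[sigmaX1 M₁ M₂ N] z F →
      ∫ ω, ⟪ρC ω.1 - ρS ω.1.1, z ω⟫ ∂F = 0 := by
    intro z hz hzm
    have h0 := integral_inner_condexp_residual hm1 hq2 hz hzm
    rw [← h0]
    refine integral_congr_ae ?_
    filter_upwards [hQ] with ω hω
    have : ρS ω.1.1 = condExp (sigmaX1 M₁ M₂ N) F (fun ω' : ΩSp M₁ M₂ N => ρC ω'.1) ω := hω
    rw [this]
  -- orthogonality from A-, B-, C- minimality
  have hAorth : ∀ φ ∈ A, ∫ ω, ⟪ω.2 - φA ω.1.1, φ ω.1.1⟫ ∂F = 0 := by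
    intro φ hφ
    refine L2min hY2 (hφ2F hφA) (hφ2F hφ) ?_
    intro t
    have h := hminA (φA + t • φ) (A.add_mem hφA (A.smul_mem t hφ))
    simpa only [MSE, Pi.add_apply, Pi.smul_apply] using h
  have hBorth : ∀ ψ ∈ B, ∫ ω, ⟪ω.2 - ψB ω.1.2, ψ ω.1.2⟫ ∂F = 0 := by
    intro ψ hψ
    refine L2min hY2 (hψ2F hψB) (hψ2F hψ) ?_
    intro t
    have h := hminB (ψB + t • ψ) (B.add_mem hψB (B.smul_mem t hψ))
    simpa only [MSE, Pi.add_apply, Pi.smul_apply] using h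
  have hCorth : ∀ φ ∈ A, ∀ ψ ∈ B,
      ∫ ω, ⟪ω.2 - ρC ω.1, φ ω.1.1 + ψ ω.1.2⟫ ∂F = 0 := by
    intro φ hφ ψ hψ
    refine L2min hY2 hq2 ((hφ2F hφ).add (hψ2F hψ)) ?_
    intro t
    have hmem : (fun x : XSp M₁ M₂ => (φ₀ + t • φ) x.1 + (ψ₀ + t • ψ) x.2) ∈ Cset A B :=
      ⟨_, A.add_mem hφ₀ (A.smul_mem t hφ), _, B.add_mem hψ₀ (B.smul_mem t hψ), rfl⟩
    have h := hρCmin F hF _ hmem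
    have heq : ∀ x : XSp M₁ M₂,
        (φ₀ + t • φ) x.1 + (ψ₀ + t • ψ) x.2 = ρC x + t • (φ x.1 + ψ x.2) := by
      intro x
      rw [hρCeq]
      simp only [Pi.add_apply, Pi.smul_apply, smul_add]
      abel
    simpa only [MSE, heq] using h
  -- the reflected measure F' = T_* F
  have hTmeas : Measurable (fun ω : ΩSp M₁ M₂ N => (ω.1, (2:ℝ) • ρC ω.1 - ω.2)) :=
    measurable_fst.prodMk
      (((hρCmeas.comp measurable_fst).const_smul (2:ℝ)).sub measurable_snd)
  have hu2 : MemLp (fun ω : ΩSp M₁ M₂ N => (2:ℝ) • ρC ω.1 - ω.2) 2 F :=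
    (hq2.const_smul (2:ℝ)).sub hY2
  have hF'p : IsProbabilityMeasure
      (F.map (fun ω : ΩSp M₁ M₂ N => (ω.1, (2:ℝ) • ρC ω.1 - ω.2))) :=
    Measure.isProbabilityMeasure_map hTmeas.aemeasurable
  have hF'marg : (F.map (fun ω : ΩSp M₁ M₂ N => (ω.1, (2:ℝ) • ρC ω.1 - ω.2))).map Prod.fst
      = ν := by
    rw [Measure.map_map measurable_fst hTmeas]
    exact hFmarg
  have hY'2 : MemLp (fun ω : ΩSp M₁ M₂ N => ω.2) 2
      (F.map (fun ω : ΩSp M₁ M₂ N => (ω.1, (2:ℝ) • ρC ω.1 - ω.2))) :=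
    (memLp_map_measure_iff measurable_snd.aestronglyMeasurable hTmeas.aemeasurable).mpr hu2
  have hMSE' : ∀ {g : XSp M₁ M₂ → Euc N}, Measurable g →
      MSE (F.map (fun ω : ΩSp M₁ M₂ N => (ω.1, (2:ℝ) • ρC ω.1 - ω.2))) g
        = ∫ ω, ‖(2:ℝ) • ρC ω.1 - ω.2 - g ω.1‖ ^ 2 ∂F := by
    intro g hg
    exact integral_map (μ := F) (φ := fun ω : ΩSp M₁ M₂ N => (ω.1, (2:ℝ) • ρC ω.1 - ω.2))
      (f := fun ω : ΩSp M₁ M₂ N => ‖ω.2 - g ω.1‖ ^ 2) hTmeas.aemeasurable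
      ((measurable_snd.sub (hg.comp measurable_fst)).norm.pow_const 2).aestronglyMeasurable
  have habs : ∀ z w : Euc N, w + (z - w) = z := fun z w => by abel
  have hminA' : ∀ φ ∈ A,
      MSE (F.map (fun ω : ΩSp M₁ M₂ N => (ω.1, (2:ℝ) • ρC ω.1 - ω.2))) (fun x => φA x.1)
      ≤ MSE (F.map (fun ω : ΩSp M₁ M₂ N => (ω.1, (2:ℝ) • ρC ω.1 - ω.2))) (fun x => φ x.1) := by
    intro φ hφ
    rw [hMSE' (g := fun x : XSp M₁ M₂ => φA x.1) ((hAmeas _ hφA).comp measurable_fst),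
      hMSE' (g := fun x : XSp M₁ M₂ => φ x.1) ((hAmeas _ hφ).comp measurable_fst)]
    have hw : (φ - φA) ∈ A := A.sub_mem hφ hφA
    have h1 : ∫ ω, ⟪ω.2 - φA ω.1.1, φ ω.1.1 - φA ω.1.1⟫ ∂F = 0 := by
      have h := hAorth _ hw
      simpa only [Pi.sub_apply] using h
    have h2 : ∫ ω, ⟪ω.2 - ρC ω.1, φ ω.1.1 - φA ω.1.1⟫ ∂F = 0 := by
      have h := hCorth _ hw 0 B.zero_mem
      simpa only [Pi.sub_apply, Pi.zero_apply, add_zero] using h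
    have hint1 : Integrable (fun ω : ΩSp M₁ M₂ N =>
        ⟪ω.2 - φA ω.1.1, φ ω.1.1 - φA ω.1.1⟫) F :=
      integrable_inner_of_memℒp (hY2.sub (hφ2F hφA)) ((hφ2F hφ).sub (hφ2F hφA))
    have hint2 : Integrable (fun ω : ΩSp M₁ M₂ N =>
        ⟪ρC ω.1 - ω.2, φ ω.1.1 - φA ω.1.1⟫) F :=
      integrable_inner_of_memℒp (hq2.sub hY2) ((hφ2F hφ).sub (hφ2F hφA))
    have h3 : ∫ ω, ⟪ρC ω.1 - ω.2, φ ω.1.1 - φA ω.1.1⟫ ∂F = 0 := by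
      have hpt : ∀ ω : ΩSp M₁ M₂ N, ⟪ρC ω.1 - ω.2, φ ω.1.1 - φA ω.1.1⟫
          = -⟪ω.2 - ρC ω.1, φ ω.1.1 - φA ω.1.1⟫ := by
        intro ω; rw [← inner_neg_left, neg_sub]
      rw [integral_congr_ae (Filter.Eventually.of_forall hpt), integral_neg, h2, neg_zero]
    have horth : ∫ ω, ⟪((2:ℝ) • ρC ω.1 - ω.2) - φA ω.1.1, φ ω.1.1 - φA ω.1.1⟫ ∂F = 0 := by
      have hpt : ∀ ω : ΩSp M₁ M₂ N,
          ⟪((2:ℝ) • ρC ω.1 - ω.2) - φA ω.1.1, φ ω.1.1 - φA ω.1.1⟫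
          = ⟪ω.2 - φA ω.1.1, φ ω.1.1 - φA ω.1.1⟫
            + 2 * ⟪ρC ω.1 - ω.2, φ ω.1.1 - φA ω.1.1⟫ := by
        intro ω
        have hv : ((2:ℝ) • ρC ω.1 - ω.2) - φA ω.1.1
            = (ω.2 - φA ω.1.1) + (2:ℝ) • (ρC ω.1 - ω.2) := by module
        rw [hv, inner_add_left, real_inner_smul_left]
      rw [integral_congr_ae (Filter.Eventually.of_forall hpt),
        integral_add hint1 (hint2.const_mul 2), integral_const_mul, h1, h3]
      ring
    have hle := L2orth_min hu2 (hφ2F hφA) ((hφ2F hφ).sub (hφ2F hφA)) horth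
    calc ∫ ω, ‖(2:ℝ) • ρC ω.1 - ω.2 - φA ω.1.1‖ ^ 2 ∂F
        ≤ ∫ ω, ‖(2:ℝ) • ρC ω.1 - ω.2 - (φA ω.1.1 + (φ ω.1.1 - φA ω.1.1))‖ ^ 2 ∂F := hle
      _ = ∫ ω, ‖(2:ℝ) • ρC ω.1 - ω.2 - φ ω.1.1‖ ^ 2 ∂F := by
          simp only [habs]
  have hminB' : ∀ ψ ∈ B,
      MSE (F.map (fun ω : ΩSp M₁ M₂ N => (ω.1, (2:ℝ) • ρC ω.1 - ω.2))) (fun x => ψB x.2)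
      ≤ MSE (F.map (fun ω : ΩSp M₁ M₂ N => (ω.1, (2:ℝ) • ρC ω.1 - ω.2))) (fun x => ψ x.2) := by
    intro ψ hψ
    rw [hMSE' (g := fun x : XSp M₁ M₂ => ψB x.2) ((hBmeas _ hψB).comp measurable_snd),
      hMSE' (g := fun x : XSp M₁ M₂ => ψ x.2) ((hBmeas _ hψ).comp measurable_snd)]
    have hw : (ψ - ψB) ∈ B := B.sub_mem hψ hψB
    have h1 : ∫ ω, ⟪ω.2 - ψB ω.1.2, ψ ω.1.2 - ψB ω.1.2⟫ ∂F = 0 := by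
      have h := hBorth _ hw
      simpa only [Pi.sub_apply] using h
    have h2 : ∫ ω, ⟪ω.2 - ρC ω.1, ψ ω.1.2 - ψB ω.1.2⟫ ∂F = 0 := by
      have h := hCorth 0 A.zero_mem _ hw
      simpa only [Pi.sub_apply, Pi.zero_apply, zero_add] using h
    have hint1 : Integrable (fun ω : ΩSp M₁ M₂ N =>
        ⟪ω.2 - ψB ω.1.2, ψ ω.1.2 - ψB ω.1.2⟫) F :=
      integrable_inner_of_memℒp (hY2.sub (hψ2F hψB)) ((hψ2F hψ).sub (hψ2F hψB))
    have hint2 : Integrable (fun ω : ΩSp M₁ M₂ N =>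
        ⟪ρC ω.1 - ω.2, ψ ω.1.2 - ψB ω.1.2⟫) F :=
      integrable_inner_of_memℒp (hq2.sub hY2) ((hψ2F hψ).sub (hψ2F hψB))
    have h3 : ∫ ω, ⟪ρC ω.1 - ω.2, ψ ω.1.2 - ψB ω.1.2⟫ ∂F = 0 := by
      have hpt : ∀ ω : ΩSp M₁ M₂ N, ⟪ρC ω.1 - ω.2, ψ ω.1.2 - ψB ω.1.2⟫
          = -⟪ω.2 - ρC ω.1, ψ ω.1.2 - ψB ω.1.2⟫ := by
        intro ω; rw [← inner_neg_left, neg_sub]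
      rw [integral_congr_ae (Filter.Eventually.of_forall hpt), integral_neg, h2, neg_zero]
    have horth : ∫ ω, ⟪((2:ℝ) • ρC ω.1 - ω.2) - ψB ω.1.2, ψ ω.1.2 - ψB ω.1.2⟫ ∂F = 0 := by
      have hpt : ∀ ω : ΩSp M₁ M₂ N,
          ⟪((2:ℝ) • ρC ω.1 - ω.2) - ψB ω.1.2, ψ ω.1.2 - ψB ω.1.2⟫
          = ⟪ω.2 - ψB ω.1.2, ψ ω.1.2 - ψB ω.1.2⟫
            + 2 * ⟪ρC ω.1 - ω.2, ψ ω.1.2 - ψB ω.1.2⟫ := by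
        intro ω
        have hv : ((2:ℝ) • ρC ω.1 - ω.2) - ψB ω.1.2
            = (ω.2 - ψB ω.1.2) + (2:ℝ) • (ρC ω.1 - ω.2) := by module
        rw [hv, inner_add_left, real_inner_smul_left]
      rw [integral_congr_ae (Filter.Eventually.of_forall hpt),
        integral_add hint1 (hint2.const_mul 2), integral_const_mul, h1, h3]
      ring
    have hle := L2orth_min hu2 (hψ2F hψB) ((hψ2F hψ).sub (hψ2F hψB)) horth
    calc ∫ ω, ‖(2:ℝ) • ρC ω.1 - ω.2 - ψB ω.1.2‖ ^ 2 ∂F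
        ≤ ∫ ω, ‖(2:ℝ) • ρC ω.1 - ω.2 - (ψB ω.1.2 + (ψ ω.1.2 - ψB ω.1.2))‖ ^ 2 ∂F := hle
      _ = ∫ ω, ‖(2:ℝ) • ρC ω.1 - ω.2 - ψ ω.1.2‖ ^ 2 ∂F := by
          simp only [habs]
  have hYc' : ∫ ω, ‖ω.2‖ ^ 2 ∂(F.map (fun ω : ΩSp M₁ M₂ N => (ω.1, (2:ℝ) • ρC ω.1 - ω.2)))
      = c := by
    rw [integral_map (μ := F) (φ := fun ω : ΩSp M₁ M₂ N => (ω.1, (2:ℝ) • ρC ω.1 - ω.2))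
      (f := fun ω : ΩSp M₁ M₂ N => ‖ω.2‖ ^ 2) hTmeas.aemeasurable
      (measurable_snd.norm.pow_const 2).aestronglyMeasurable]
    have horthq : ∫ ω, ⟪ω.2 - ρC ω.1, ρC ω.1⟫ ∂F = 0 := by
      have h := hCorth φ₀ hφ₀ ψ₀ hψ₀
      have hd : ∀ ω : ΩSp M₁ M₂ N, φ₀ ω.1.1 + ψ₀ ω.1.2 = ρC ω.1 := fun ω => by rw [hρCeq]
      simpa only [hd] using h
    have hYsqint : Integrable (fun ω : ΩSp M₁ M₂ N => ‖ω.2‖ ^ 2) F :=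
      (integrable_inner_of_memℒp hY2 hY2).congr
        (Filter.Eventually.of_forall fun ω => real_inner_self_eq_norm_sq _)
    have hinner_int : Integrable (fun ω : ΩSp M₁ M₂ N => ⟪ω.2 - ρC ω.1, ρC ω.1⟫) F :=
      integrable_inner_of_memℒp (hY2.sub hq2) hq2
    have hpt : ∀ (a b : Euc N), ‖(2:ℝ) • a - b‖ ^ 2 = ‖b‖ ^ 2 - 4 * ⟪b - a, a⟫ := by
      intro a b
      rw [norm_sub_sq_real, real_inner_smul_left, norm_smul, mul_pow, inner_sub_left,
        real_inner_self_eq_norm_sq, real_inner_comm b a]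
      simp only [Real.norm_eq_abs, sq_abs]
      ring
    calc ∫ ω, ‖((fun ω : ΩSp M₁ M₂ N => (ω.1, (2:ℝ) • ρC ω.1 - ω.2)) ω).2‖ ^ 2 ∂F
        = ∫ ω, (‖ω.2‖ ^ 2 - 4 * ⟪ω.2 - ρC ω.1, ρC ω.1⟫) ∂F :=
          integral_congr_ae (Filter.Eventually.of_forall fun ω => hpt (ρC ω.1) ω.2)
      _ = c := by
          rw [integral_sub hYsqint (hinner_int.const_mul 4), integral_const_mul, horthq, hYc]
          ring
  -- conditional expectation under F' is 2 ρS∘X₁ - m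
  haveI : IsFiniteMeasure
      ((F.map (fun ω : ΩSp M₁ M₂ N => (ω.1, (2:ℝ) • ρC ω.1 - ω.2))).trim hm1) := by
    haveI := hF'p
    exact isFiniteMeasure_trim hm1
  have hk_sm : StronglyMeasurable[sigmaX1 M₁ M₂ N] (fun ω : ΩSp M₁ M₂ N =>
      (2:ℝ) • ρS ω.1.1 - condExp (sigmaX1 M₁ M₂ N) F (fun ω' : ΩSp M₁ M₂ N => ω'.2) ω) :=
    ((hρSmeas.comp hX1m).stronglyMeasurable.const_smul (2:ℝ)).sub stronglyMeasurable_condExp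
  have hk_sm0 : StronglyMeasurable (fun ω : ΩSp M₁ M₂ N =>
      (2:ℝ) • ρS ω.1.1 - condExp (sigmaX1 M₁ M₂ N) F (fun ω' : ΩSp M₁ M₂ N => ω'.2) ω) :=
    hk_sm.mono hm1
  have hkT : ∀ ω : ΩSp M₁ M₂ N,
      (fun ω : ΩSp M₁ M₂ N => (2:ℝ) • ρS ω.1.1
        - condExp (sigmaX1 M₁ M₂ N) F (fun ω' : ΩSp M₁ M₂ N => ω'.2) ω)
        ((ω.1, (2:ℝ) • ρC ω.1 - ω.2))
      = (2:ℝ) • ρS ω.1.1 - condExp (sigmaX1 M₁ M₂ N) F (fun ω' : ΩSp M₁ M₂ N => ω'.2) ω :=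
    fun ω => sm_comap_fiber hk_sm rfl
  have hk2F : MemLp (fun ω : ΩSp M₁ M₂ N => (2:ℝ) • ρS ω.1.1
      - condExp (sigmaX1 M₁ M₂ N) F (fun ω' : ΩSp M₁ M₂ N => ω'.2) ω) 2 F :=
    (hrS2.const_smul (2:ℝ)).sub hm2
  have hk2F' : MemLp (fun ω : ΩSp M₁ M₂ N => (2:ℝ) • ρS ω.1.1
      - condExp (sigmaX1 M₁ M₂ N) F (fun ω' : ΩSp M₁ M₂ N => ω'.2) ω) 2
      (F.map (fun ω : ΩSp M₁ M₂ N => (ω.1, (2:ℝ) • ρC ω.1 - ω.2))) := by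
    refine (memLp_map_measure_iff hk_sm0.aestronglyMeasurable hTmeas.aemeasurable).mpr ?_
    have : ((fun ω : ΩSp M₁ M₂ N => (2:ℝ) • ρS ω.1.1
        - condExp (sigmaX1 M₁ M₂ N) F (fun ω' : ΩSp M₁ M₂ N => ω'.2) ω)
        ∘ (fun ω : ΩSp M₁ M₂ N => (ω.1, (2:ℝ) • ρC ω.1 - ω.2)))
        = fun ω : ΩSp M₁ M₂ N => (2:ℝ) • ρS ω.1.1
          - condExp (sigmaX1 M₁ M₂ N) F (fun ω' : ΩSp M₁ M₂ N => ω'.2) ω :=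
      funext fun ω => hkT ω
    rw [this]
    exact hk2F
  have hm'eq : (fun ω : ΩSp M₁ M₂ N => (2:ℝ) • ρS ω.1.1
      - condExp (sigmaX1 M₁ M₂ N) F (fun ω' : ΩSp M₁ M₂ N => ω'.2) ω)
      =ᵐ[F.map (fun ω : ΩSp M₁ M₂ N => (ω.1, (2:ℝ) • ρC ω.1 - ω.2))]
      condExp (sigmaX1 M₁ M₂ N)
        (F.map (fun ω : ΩSp M₁ M₂ N => (ω.1, (2:ℝ) • ρC ω.1 - ω.2)))
        (fun ω' : ΩSp M₁ M₂ N => ω'.2) := by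
    refine ae_eq_condExp_of_forall_setIntegral_eq hm1 (hY'2.integrable one_le_two)
      (fun s _ _ => (hk2F'.integrable one_le_two).integrableOn)
      (fun s hs _ => ?_) hk_sm.aestronglyMeasurable
    obtain ⟨E0, hE0, rfl⟩ := hsetid hs
    have hsmeas : MeasurableSet ((fun ω : ΩSp M₁ M₂ N => ω.1.1) ⁻¹' E0) := hX1meas hE0
    have l1 : ∫ ω in (fun ω : ΩSp M₁ M₂ N => ω.1.1) ⁻¹' E0,
        ((2:ℝ) • ρS ω.1.1 - condExp (sigmaX1 M₁ M₂ N) F (fun ω' : ΩSp M₁ M₂ N => ω'.2) ω)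
        ∂(F.map (fun ω : ΩSp M₁ M₂ N => (ω.1, (2:ℝ) • ρC ω.1 - ω.2)))
        = ∫ ω in (fun ω : ΩSp M₁ M₂ N => ω.1.1) ⁻¹' E0,
          ((2:ℝ) • ρS ω.1.1 - condExp (sigmaX1 M₁ M₂ N) F (fun ω' : ΩSp M₁ M₂ N => ω'.2) ω)
          ∂F := by
      rw [setIntegral_map hsmeas hk_sm0.aestronglyMeasurable hTmeas.aemeasurable]
      exact setIntegral_congr_ae hsmeas (Filter.Eventually.of_forall fun ω _ => hkT ω)
    have r1 : ∫ ω in (fun ω : ΩSp M₁ M₂ N => ω.1.1) ⁻¹' E0, ω.2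
        ∂(F.map (fun ω : ΩSp M₁ M₂ N => (ω.1, (2:ℝ) • ρC ω.1 - ω.2)))
        = ∫ ω in (fun ω : ΩSp M₁ M₂ N => ω.1.1) ⁻¹' E0, ((2:ℝ) • ρC ω.1 - ω.2) ∂F := by
      rw [setIntegral_map (f := fun ω : ΩSp M₁ M₂ N => ω.2) hsmeas
        measurable_snd.aestronglyMeasurable hTmeas.aemeasurable]
      rfl
    have l3 : ∫ ω in (fun ω : ΩSp M₁ M₂ N => ω.1.1) ⁻¹' E0,
        condExp (sigmaX1 M₁ M₂ N) F (fun ω' : ΩSp M₁ M₂ N => ω'.2) ω ∂F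
        = ∫ ω in (fun ω : ΩSp M₁ M₂ N => ω.1.1) ⁻¹' E0, ω.2 ∂F :=
      setIntegral_condExp hm1 (hY2.integrable one_le_two) hs
    have l4 : ∫ ω in (fun ω : ΩSp M₁ M₂ N => ω.1.1) ⁻¹' E0, ρS ω.1.1 ∂F
        = ∫ ω in (fun ω : ΩSp M₁ M₂ N => ω.1.1) ⁻¹' E0, ρC ω.1 ∂F := by
      rw [setIntegral_congr_ae hsmeas (hQ.mono fun ω h _ => h)]
      exact setIntegral_condExp hm1 (hq2.integrable one_le_two) hs
    have int_rS : Integrable (fun ω : ΩSp M₁ M₂ N => (2:ℝ) • ρS ω.1.1) F :=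
      (hrS2.const_smul (2:ℝ)).integrable one_le_two
    have int_q2 : Integrable (fun ω : ΩSp M₁ M₂ N => (2:ℝ) • ρC ω.1) F :=
      (hq2.const_smul (2:ℝ)).integrable one_le_two
    have lsub : ∫ ω in (fun ω : ΩSp M₁ M₂ N => ω.1.1) ⁻¹' E0,
        ((2:ℝ) • ρS ω.1.1 - condExp (sigmaX1 M₁ M₂ N) F (fun ω' : ΩSp M₁ M₂ N => ω'.2) ω) ∂F
        = (2:ℝ) • (∫ ω in (fun ω : ΩSp M₁ M₂ N => ω.1.1) ⁻¹' E0, ρS ω.1.1 ∂F)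
          - ∫ ω in (fun ω : ΩSp M₁ M₂ N => ω.1.1) ⁻¹' E0,
              condExp (sigmaX1 M₁ M₂ N) F (fun ω' : ΩSp M₁ M₂ N => ω'.2) ω ∂F := by
      rw [integral_sub int_rS.integrableOn (hm2.integrable one_le_two).integrableOn,
        integral_smul]
    have rsub : ∫ ω in (fun ω : ΩSp M₁ M₂ N => ω.1.1) ⁻¹' E0,
        ((2:ℝ) • ρC ω.1 - ω.2) ∂F
        = (2:ℝ) • (∫ ω in (fun ω : ΩSp M₁ M₂ N => ω.1.1) ⁻¹' E0, ρC ω.1 ∂F)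
          - ∫ ω in (fun ω : ΩSp M₁ M₂ N => ω.1.1) ⁻¹' E0, ω.2 ∂F := by
      rw [integral_sub int_q2.integrableOn (hY2.integrable one_le_two).integrableOn,
        integral_smul]
    rw [l1, r1, lsub, rsub, l3, l4]
  -- MSE1 values of F'
  have hMSE1ρ' : MSE1 (F.map (fun ω : ΩSp M₁ M₂ N => (ω.1, (2:ℝ) • ρC ω.1 - ω.2))) ρ
      = ∫ ω, ‖(2:ℝ) • ρC ω.1 - ω.2 - ρ ω.1.1‖ ^ 2 ∂F :=
    integral_map (μ := F) (φ := fun ω : ΩSp M₁ M₂ N => (ω.1, (2:ℝ) • ρC ω.1 - ω.2))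
      (f := fun ω : ΩSp M₁ M₂ N => ‖ω.2 - ρ ω.1.1‖ ^ 2) hTmeas.aemeasurable
      ((measurable_snd.sub (hρmeas.comp hX1meas)).norm.pow_const 2).aestronglyMeasurable
  have hD' : ∫ ω, ‖ω.2 - condExp (sigmaX1 M₁ M₂ N)
        (F.map (fun ω : ΩSp M₁ M₂ N => (ω.1, (2:ℝ) • ρC ω.1 - ω.2)))
        (fun ω' : ΩSp M₁ M₂ N => ω'.2) ω‖ ^ 2
        ∂(F.map (fun ω : ΩSp M₁ M₂ N => (ω.1, (2:ℝ) • ρC ω.1 - ω.2)))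
      = ∫ ω, ‖(2:ℝ) • ρC ω.1 - ω.2
          - ((2:ℝ) • ρS ω.1.1 - condExp (sigmaX1 M₁ M₂ N) F
              (fun ω' : ΩSp M₁ M₂ N => ω'.2) ω)‖ ^ 2 ∂F := by
    have step1 : ∫ ω, ‖ω.2 - condExp (sigmaX1 M₁ M₂ N)
          (F.map (fun ω : ΩSp M₁ M₂ N => (ω.1, (2:ℝ) • ρC ω.1 - ω.2)))
          (fun ω' : ΩSp M₁ M₂ N => ω'.2) ω‖ ^ 2
          ∂(F.map (fun ω : ΩSp M₁ M₂ N => (ω.1, (2:ℝ) • ρC ω.1 - ω.2)))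
        = ∫ ω, ‖ω.2 - ((2:ℝ) • ρS ω.1.1 - condExp (sigmaX1 M₁ M₂ N) F
            (fun ω' : ΩSp M₁ M₂ N => ω'.2) ω)‖ ^ 2
          ∂(F.map (fun ω : ΩSp M₁ M₂ N => (ω.1, (2:ℝ) • ρC ω.1 - ω.2))) := by
      refine integral_congr_ae ?_
      filter_upwards [hm'eq] with ω hω
      rw [← hω]
    refine step1.trans ?_
    refine (integral_map (μ := F)
      (φ := fun ω : ΩSp M₁ M₂ N => (ω.1, (2:ℝ) • ρC ω.1 - ω.2))
      (f := fun ω : ΩSp M₁ M₂ N => ‖ω.2 - ((2:ℝ) • ρS ω.1.1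
        - condExp (sigmaX1 M₁ M₂ N) F (fun ω' : ΩSp M₁ M₂ N => ω'.2) ω)‖ ^ 2)
      hTmeas.aemeasurable
      ((measurable_snd.sub hk_sm0.measurable).norm.pow_const 2).aestronglyMeasurable).trans ?_
    refine integral_congr_ae (Filter.Eventually.of_forall fun ω => ?_)
    have h := hkT ω
    dsimp only at h ⊢
    rw [h]
  -- Lp elements
  set yL := hY2.toLp (fun ω : ΩSp M₁ M₂ N => ω.2) with hyL
  set mL := hm2.toLp (condExp (sigmaX1 M₁ M₂ N) F (fun ω' : ΩSp M₁ M₂ N => ω'.2)) with hmL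
  set rL := hr2.toLp (fun ω : ΩSp M₁ M₂ N => ρ ω.1.1) with hrLd
  set rSL := hrS2.toLp (fun ω : ΩSp M₁ M₂ N => ρS ω.1.1) with hrSLd
  set qL := hq2.toLp (fun ω : ΩSp M₁ M₂ N => ρC ω.1) with hqLd
  have hMSEρ : MSE1 F ρ = ‖yL - rL‖ ^ 2 :=
    integral_norm_sq_eq _ (coeFn_sub_toLp hY2 hr2)
  have hMSErS : MSE1 F ρS = ‖yL - rSL‖ ^ 2 :=
    integral_norm_sq_eq _ (coeFn_sub_toLp hY2 hrS2)
  have hVF : ∫ ω, ‖ω.2 - condExp (sigmaX1 M₁ M₂ N) F (fun ω' : ΩSp M₁ M₂ N => ω'.2) ω‖ ^ 2 ∂F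
      = ‖yL - mL‖ ^ 2 :=
    integral_norm_sq_eq _ (coeFn_sub_toLp hY2 hm2)
  have id1 : (fun ω : ΩSp M₁ M₂ N => (2:ℝ) • ρC ω.1 - ω.2 - ρ ω.1.1)
      =ᵐ[F] ⇑((2:ℝ) • qL - yL - rL) := by
    filter_upwards [Lp.coeFn_sub ((2:ℝ) • qL - yL) rL, Lp.coeFn_sub ((2:ℝ) • qL) yL,
      Lp.coeFn_smul (2:ℝ) qL, hq2.coeFn_toLp, hY2.coeFn_toLp, hr2.coeFn_toLp]
      with ω h1 h2 h3 h4 h5 h6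
    simp only [h1, h2, h3, Pi.sub_apply, Pi.smul_apply, h4, h5, h6]
    rw [hqLd, hyL, hrLd, h4, h5, h6]
  have id2 : (fun ω : ΩSp M₁ M₂ N => (2:ℝ) • ρC ω.1 - ω.2
      - ((2:ℝ) • ρS ω.1.1 - condExp (sigmaX1 M₁ M₂ N) F (fun ω' : ΩSp M₁ M₂ N => ω'.2) ω))
      =ᵐ[F] ⇑((2:ℝ) • qL - yL - ((2:ℝ) • rSL - mL)) := by
    filter_upwards [Lp.coeFn_sub ((2:ℝ) • qL - yL) ((2:ℝ) • rSL - mL),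
      Lp.coeFn_sub ((2:ℝ) • qL) yL, Lp.coeFn_smul (2:ℝ) qL,
      Lp.coeFn_sub ((2:ℝ) • rSL) mL, Lp.coeFn_smul (2:ℝ) rSL,
      hq2.coeFn_toLp, hY2.coeFn_toLp, hrS2.coeFn_toLp, hm2.coeFn_toLp]
      with ω h1 h2 h3 h4 h5 h6 h7 h8 h9
    simp only [h1, h2, h3, h4, h5, Pi.sub_apply, Pi.smul_apply, h6, h7, h8, h9]
    rw [hqLd, hyL, hrSLd, hmL, h6, h7, h8, h9]
  have hMSE1ρ'L : MSE1 (F.map (fun ω : ΩSp M₁ M₂ N => (ω.1, (2:ℝ) • ρC ω.1 - ω.2))) ρ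
      = ‖(2:ℝ) • qL - yL - rL‖ ^ 2 :=
    hMSE1ρ'.trans (integral_norm_sq_eq _ id1)
  have hD'L : ∫ ω, ‖ω.2 - condExp (sigmaX1 M₁ M₂ N)
        (F.map (fun ω : ΩSp M₁ M₂ N => (ω.1, (2:ℝ) • ρC ω.1 - ω.2)))
        (fun ω' : ΩSp M₁ M₂ N => ω'.2) ω‖ ^ 2
        ∂(F.map (fun ω : ΩSp M₁ M₂ N => (ω.1, (2:ℝ) • ρC ω.1 - ω.2)))
      = ‖(2:ℝ) • qL - yL - ((2:ℝ) • rSL - mL)‖ ^ 2 :=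
    hD'.trans (integral_norm_sq_eq _ id2)
  have i1 : ⟪yL - mL, mL⟫ = 0 := by
    rw [← integral_inner_eq (yL - mL) mL (coeFn_sub_toLp hY2 hm2) hm2.coeFn_toLp.symm]
    exact ho_y hm2 stronglyMeasurable_condExp.aestronglyMeasurable
  have i2 : ⟪yL - mL, rSL⟫ = 0 := by
    rw [← integral_inner_eq (yL - mL) rSL (coeFn_sub_toLp hY2 hm2) hrS2.coeFn_toLp.symm]
    exact ho_y hrS2 hrS_sm.aestronglyMeasurable
  have i3 : ⟪yL - mL, rL⟫ = 0 := by
    rw [← integral_inner_eq (yL - mL) rL (coeFn_sub_toLp hY2 hm2) hr2.coeFn_toLp.symm]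
    exact ho_y hr2 hr_sm.aestronglyMeasurable
  have i4 : ⟪qL - rSL, mL⟫ = 0 := by
    rw [← integral_inner_eq (qL - rSL) mL (coeFn_sub_toLp hq2 hrS2) hm2.coeFn_toLp.symm]
    exact ho_q hm2 stronglyMeasurable_condExp.aestronglyMeasurable
  have i5 : ⟪qL - rSL, rSL⟫ = 0 := by
    rw [← integral_inner_eq (qL - rSL) rSL (coeFn_sub_toLp hq2 hrS2) hrS2.coeFn_toLp.symm]
    exact ho_q hrS2 hrS_sm.aestronglyMeasurable
  have i6 : ⟪qL - rSL, rL⟫ = 0 := by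
    rw [← integral_inner_eq (qL - rSL) rL (coeFn_sub_toLp hq2 hrS2) hr2.coeFn_toLp.symm]
    exact ho_q hr2 hr_sm.aestronglyMeasurable
  refine ⟨F.map (fun ω : ΩSp M₁ M₂ N => (ω.1, (2:ℝ) • ρC ω.1 - ω.2)),
    ⟨hF'p, hF'marg, hY'2, hminA', hminB', hYc'⟩, ?_⟩
  have hkey := key_geometry yL mL rSL rL qL i1 i2 i3 i4 i5 i6
  have e1 : REG1 F ρS = ‖yL - rSL‖ ^ 2 - ‖yL - mL‖ ^ 2 := by
    rw [REG1, hMSErS, hVF]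
  have e2 : REG1 F ρ = ‖yL - rL‖ ^ 2 - ‖yL - mL‖ ^ 2 := by
    rw [REG1, hMSEρ, hVF]
  have e3 : REG1 (F.map (fun ω : ΩSp M₁ M₂ N => (ω.1, (2:ℝ) • ρC ω.1 - ω.2))) ρ
      = ‖(2:ℝ) • qL - yL - rL‖ ^ 2 - ‖(2:ℝ) • qL - yL - ((2:ℝ) • rSL - mL)‖ ^ 2 := by
    rw [REG1, hMSE1ρ'L, hD'L]
  rw [e1, e2, e3]
  linarith [hkey]





end


set_option maxHeartbeats 1600000 in
/-- Theorem 3, single-domain minimax-regret prediction: the estimator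
`ρ_S(X₁) = E_ν[ρ_C(X₁,X₂) | X₁]` minimizes the worst-case single-domain regret over `𝓕`
among all square-integrable Borel estimators based on `X₁` alone. -/
theorem stmt_9
    (M₁ M₂ N : ℕ) (hM₁ : 0 < M₁) (hM₂ : 0 < M₂) (hN : 0 < N)
    (ν : Measure (XSp M₁ M₂)) (hνp : IsProbabilityMeasure ν)
    (hνmom : MemLp (id : XSp M₁ M₂ → XSp M₁ M₂) 2 ν)
    (A : Submodule ℝ (Euc M₁ → Euc N)) (B : Submodule ℝ (Euc M₂ → Euc N))
    (hAmeas : ∀ φ ∈ A, Measurable φ) (hBmeas : ∀ ψ ∈ B, Measurable ψ)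
    (hAL2 : ∀ φ ∈ A, MemLp φ 2 (ν.map Prod.fst))
    (hBL2 : ∀ ψ ∈ B, MemLp ψ 2 (ν.map Prod.snd))
    (φA : Euc M₁ → Euc N) (ψB : Euc M₂ → Euc N) (hφA : φA ∈ A) (hψB : ψB ∈ B)
    (c : ℝ) (hc : 0 < c)
    (hne : (SetF ν A B φA ψB c).Nonempty)
    (ρC : XSp M₁ M₂ → Euc N) (hρCmem : ρC ∈ Cset A B)
    (hρCmin : ∀ F ∈ SetF ν A B φA ψB c, ∀ ρ' ∈ Cset A B, MSE F ρC ≤ MSE F ρ')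
    (ρS : Euc M₁ → Euc N) (hρSmeas : Measurable ρS)
    (hρS : (fun x : XSp M₁ M₂ => ρS x.1) =ᵐ[ν] condExp (sigmaX1' M₁ M₂) ν ρC) :
    ∀ ρ : Euc M₁ → Euc N, Measurable ρ → MemLp ρ 2 (ν.map Prod.fst) →
      (⨆ F ∈ SetF ν A B φA ψB c, REG1 F ρS) ≤ ⨆ F ∈ SetF ν A B φA ψB c, REG1 F ρ := by
  intro ρ hρmeas hρL2
  haveI := hνp
  have hbound : ∀ F ∈ SetF ν A B φA ψB c,
      REG1 F ρ ≤ 2 * c + 2 * ∫ x, ‖ρ x.1‖ ^ 2 ∂ν := by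
    intro F hF
    obtain ⟨hFp, hFmarg, hY2, -, -, hYc⟩ := hF
    haveI := hFp
    have hX1meas : Measurable fun ω : ΩSp M₁ M₂ N => ω.1.1 :=
      measurable_fst.comp measurable_fst
    have hmapX1 : F.map (fun ω : ΩSp M₁ M₂ N => ω.1.1) = ν.map Prod.fst := by
      rw [← hFmarg, Measure.map_map measurable_fst measurable_fst]; rfl
    have hr2 : MemLp (fun ω : ΩSp M₁ M₂ N => ρ ω.1.1) 2 F :=
      (memLp_map_measure_iff (by rw [hmapX1]; exact hρmeas.aestronglyMeasurable)
        hX1meas.aemeasurable).mp (by rw [hmapX1]; exact hρL2)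
    have hIρ : ∫ x, ‖ρ x.1‖ ^ 2 ∂ν = ∫ ω, ‖ρ ω.1.1‖ ^ 2 ∂F := by
      rw [← hFmarg, integral_map (μ := F) (φ := Prod.fst)
        (f := fun x : XSp M₁ M₂ => ‖ρ x.1‖ ^ 2) measurable_fst.aemeasurable
        ((hρmeas.comp measurable_fst).norm.pow_const 2).aestronglyMeasurable]
    have hsqint : ∀ {h : ΩSp M₁ M₂ N → Euc N}, MemLp h 2 F →
        Integrable (fun ω => ‖h ω‖ ^ 2) F := by
      intro h h2
      exact (integrable_inner_of_memℒp h2 h2).congr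
        (Filter.Eventually.of_forall fun ω => real_inner_self_eq_norm_sq _)
    have hsubint : Integrable (fun ω : ΩSp M₁ M₂ N => ‖ω.2 - ρ ω.1.1‖ ^ 2) F :=
      hsqint (hY2.sub hr2)
    have hsumint : Integrable (fun ω : ΩSp M₁ M₂ N =>
        2 * ‖ω.2‖ ^ 2 + 2 * ‖ρ ω.1.1‖ ^ 2) F :=
      ((hsqint hY2).const_mul 2).add ((hsqint hr2).const_mul 2)
    have hmono : MSE1 F ρ ≤ ∫ ω, (2 * ‖ω.2‖ ^ 2 + 2 * ‖ρ ω.1.1‖ ^ 2) ∂F := by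
      refine integral_mono hsubint hsumint fun ω => ?_
      have h1 := norm_sub_sq_real (ω.2) (ρ ω.1.1)
      have h2 := abs_real_inner_le_norm (ω.2) (ρ ω.1.1)
      rw [abs_le] at h2
      nlinarith [sq_nonneg (‖ω.2‖ - ‖ρ ω.1.1‖)]
    have hsum : ∫ ω, (2 * ‖ω.2‖ ^ 2 + 2 * ‖ρ ω.1.1‖ ^ 2) ∂F
        = 2 * c + 2 * ∫ x, ‖ρ x.1‖ ^ 2 ∂ν := by
      rw [integral_add ((hsqint hY2).const_mul 2) ((hsqint hr2).const_mul 2),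
        integral_const_mul, integral_const_mul, hYc, hIρ]
    have hV : 0 ≤ ∫ ω, ‖ω.2 - condExp (sigmaX1 M₁ M₂ N) F
        (fun ω' : ΩSp M₁ M₂ N => ω'.2) ω‖ ^ 2 ∂F :=
      integral_nonneg fun ω => by positivity
    rw [REG1]
    linarith
  have hbddR : BddAbove (Set.range fun F => ⨆ _ : F ∈ SetF ν A B φA ψB c, REG1 F ρ) := by
    refine ⟨max (2 * c + 2 * ∫ x, ‖ρ x.1‖ ^ 2 ∂ν) 0, ?_⟩
    rintro y ⟨F, rfl⟩
    dsimp only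
    by_cases h : F ∈ SetF ν A B φA ψB c
    · rw [ciSup_pos h]
      exact le_max_of_le_left (hbound F h)
    · haveI : IsEmpty (F ∈ SetF ν A B φA ψB c) := ⟨h⟩
      rw [Real.iSup_of_isEmpty]
      exact le_max_right _ _
  have hR0 : 0 ≤ ⨆ F, ⨆ _ : F ∈ SetF ν A B φA ψB c, REG1 F ρ := by
    have h0 : (0 : Measure (ΩSp M₁ M₂ N)) ∉ SetF ν A B φA ψB c := by
      intro h
      have h1 := h.1.measure_univ
      simp at h1
    have hle := le_ciSup hbddR (0 : Measure (ΩSp M₁ M₂ N))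
    haveI : IsEmpty ((0 : Measure (ΩSp M₁ M₂ N)) ∈ SetF ν A B φA ψB c) := ⟨h0⟩
    rwa [Real.iSup_of_isEmpty] at hle
  refine ciSup_le fun F => ?_
  by_cases h : F ∈ SetF ν A B φA ψB c
  · rw [ciSup_pos h]
    obtain ⟨F', hF', hkey⟩ := main_step M₁ M₂ N ν hνp A B hAmeas hBmeas hAL2 hBL2
      φA ψB hφA hψB c ρC hρCmem hρCmin ρS hρSmeas hρS ρ hρmeas hρL2 F h
    have hle1 : REG1 F ρ ≤ ⨆ F, ⨆ _ : F ∈ SetF ν A B φA ψB c, REG1 F ρ := by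
      have hle := le_ciSup hbddR F
      rwa [ciSup_pos h] at hle
    have hle2 : REG1 F' ρ ≤ ⨆ F, ⨆ _ : F ∈ SetF ν A B φA ψB c, REG1 F ρ := by
      have hle := le_ciSup hbddR F'
      rwa [ciSup_pos hF'] at hle
    linarith
  · haveI : IsEmpty (F ∈ SetF ν A B φA ψB c) := ⟨h⟩
    rw [Real.iSup_of_isEmpty]
    exact hR0
end

section
/- Generalized minimax-regret lemma (Appendix B): let Z = g(X₁,X₂) for a fixed Borel function g. Then the minimizer, over all square-integrable Borel functions ρ of Z, of the worst-case regret sup_{F∈𝓕} E_F‖E_F[Y|Z]−ρ(Z)‖² is ρ*(Z) = E_ν[ρ_C(X₁,X₂)|Z], the conditional expectation under ν of the multi-domain minimax estimator ρ_C given Z. -/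
set_option linter.unusedSectionVars false

open MeasureTheory

noncomputable section

namespace Stmt10Aux

variable {α : Type*} {m m0 : MeasurableSpace α} {μ : Measure α}
variable {E : Type*} [NormedAddCommGroup E] [InnerProductSpace ℝ E] [CompleteSpace E]
  [SecondCountableTopology E] [MeasurableSpace E] [BorelSpace E]

lemma integrable_sq_norm {f : α → E} (hf : MemLp f 2 μ) :
    Integrable (fun x => ‖f x‖ ^ 2) μ := by
  simpa using hf.norm.integrable_sq

lemma integrable_inner' {f g : α → E} (hf : MemLp f 2 μ) (hg : MemLp g 2 μ) :
    Integrable (fun x => (inner ℝ (f x) (g x) : ℝ)) μ := by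
  refine (L2.integrable_inner (𝕜 := ℝ) (hf.toLp f) (hg.toLp g)).congr ?_
  filter_upwards [hf.coeFn_toLp, hg.coeFn_toLp] with x h1 h2
  rw [h1, h2]

lemma sq_norm_toLp {f : α → E} (hf : MemLp f 2 μ) :
    ‖hf.toLp f‖ ^ 2 = ∫ x, ‖f x‖ ^ 2 ∂μ := by
  rw [← real_inner_self_eq_norm_sq, L2.inner_def]
  refine integral_congr_ae ?_
  filter_upwards [hf.coeFn_toLp] with x hx
  rw [hx, real_inner_self_eq_norm_sq]

lemma condexp_ae_eq_condexpL2' (hm : m ≤ m0) [IsFiniteMeasure μ] {f : α → E}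
    (hf : MemLp f 2 μ) :
    μ[f|m] =ᵐ[μ] ((condExpL2 E ℝ hm (hf.toLp f) : Lp E 2 μ) : α → E) := by
  refine (ae_eq_condExp_of_forall_setIntegral_eq hm (hf.integrable one_le_two) ?_ ?_ ?_).symm
  · intro s _ hμs
    exact integrableOn_condExpL2_of_measure_ne_top hm hμs.ne _
  · intro s hs hμs
    rw [integral_condExpL2_eq hm (hf.toLp f) hs hμs.ne]
    exact setIntegral_congr_ae (hm s hs) ((hf.coeFn_toLp).mono fun x hx _ => hx)
  · exact aestronglyMeasurable_condExpL2 hm _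

lemma memℒp_condexp_two (hm : m ≤ m0) [IsFiniteMeasure μ] {f : α → E}
    (hf : MemLp f 2 μ) : MemLp (μ[f|m]) 2 μ :=
  (Lp.memLp _).ae_eq (condexp_ae_eq_condexpL2' hm hf).symm

/-- Pythagoras identity for conditional expectation of an `L²` function. -/
lemma pythagoras (hm : m ≤ m0) [IsProbabilityMeasure μ] {f w : α → E}
    (hf : MemLp f 2 μ) (hw : MemLp w 2 μ) (hwm : AEStronglyMeasurable[m] w μ) :
    ∫ x, ‖f x - w x‖ ^ 2 ∂μ
      = (∫ x, ‖f x - (μ[f|m]) x‖ ^ 2 ∂μ) + ∫ x, ‖(μ[f|m]) x - w x‖ ^ 2 ∂μ := by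
  set e := μ[f|m] with he_def
  have he2 : MemLp e 2 μ := memℒp_condexp_two hm hf
  set U := hf.toLp f
  set Eh := he2.toLp e
  set W := hw.toLp w
  have hEh : (condExpL2 E ℝ hm U : Lp E 2 μ) = Eh := by
    rw [Lp.ext_iff]
    exact ((condexp_ae_eq_condexpL2' hm hf).symm).trans (he2.coeFn_toLp).symm
  have key : ∀ (G : Lp E 2 μ), AEStronglyMeasurable[m] (G : α → E) μ →
      (inner ℝ (U - Eh) G : ℝ) = 0 := by
    intro G hG
    rw [inner_sub_left, ← hEh, inner_condExpL2_eq_inner_fun hm U G hG, sub_self]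
  have hWm : AEStronglyMeasurable[m] (W : α → E) μ :=
    hwm.congr (hw.coeFn_toLp).symm
  have hEhm : AEStronglyMeasurable[m] (Eh : α → E) μ := by
    refine AEStronglyMeasurable.congr ?_ (he2.coeFn_toLp).symm
    exact ⟨e, stronglyMeasurable_condExp, Filter.EventuallyEq.rfl⟩
  have horth : (inner ℝ (U - Eh) (Eh - W) : ℝ) = 0 := by
    rw [inner_sub_right, key Eh hEhm, key W hWm, sub_zero]
  have hnorm : ‖U - W‖ ^ 2 = ‖U - Eh‖ ^ 2 + ‖Eh - W‖ ^ 2 := by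
    have : U - W = (U - Eh) + (Eh - W) := by abel
    rw [this, norm_add_sq_real, horth]; ring
  have key2 : ∀ (u v : α → E) (hu : MemLp u 2 μ) (hv : MemLp v 2 μ),
      ∫ x, ‖u x - v x‖ ^ 2 ∂μ = ‖hu.toLp u - hv.toLp v‖ ^ 2 := by
    intro u v hu hv
    calc ∫ x, ‖u x - v x‖ ^ 2 ∂μ = ∫ x, ‖(u - v) x‖ ^ 2 ∂μ := by simp [Pi.sub_apply]
    _ = ‖(hu.sub hv).toLp (u - v)‖ ^ 2 := (sq_norm_toLp _).symm
    _ = ‖hu.toLp u - hv.toLp v‖ ^ 2 := by rw [MemLp.toLp_sub]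
  rw [key2 f w hf hw, key2 f e hf he2, key2 e w he2 hw, hnorm]


/-- A function strongly measurable w.r.t. `comap h` is invariant under any map preserving `h`. -/
lemma comap_invariant {α γ E : Type*} [TopologicalSpace E] [T2Space E]
    {mγ : MeasurableSpace γ} {h : α → γ} {T : α → α} (hT : ∀ a, h (T a) = h a)
    {f : α → E} (hf : @StronglyMeasurable α E _ (MeasurableSpace.comap h mγ) f) (a : α) :
    f (T a) = f a := by
  have heq : ∀ n, hf.approx n (T a) = hf.approx n a := by
    intro n
    have hfib : MeasurableSet[MeasurableSpace.comap h mγ]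
        (hf.approx n ⁻¹' {hf.approx n a}) := @SimpleFunc.measurableSet_fiber α E (MeasurableSpace.comap h mγ) (hf.approx n) _
    obtain ⟨B, hB, hpre⟩ := hfib
    have ha : a ∈ h ⁻¹' B := by rw [hpre]; rfl
    have hTa : T a ∈ h ⁻¹' B := by simpa [Set.mem_preimage, hT a] using ha
    rw [hpre] at hTa
    exact hTa
  have h1 := hf.tendsto_approx (T a)
  have h2 := hf.tendsto_approx a
  rw [show (fun n => hf.approx n (T a)) = fun n => hf.approx n a from funext heq] at h1
  exact tendsto_nhds_unique h1 h2

lemma eq_zero_of_quadratic {d n : ℝ} (hn : 0 ≤ n) (h : ∀ t : ℝ, 0 ≤ t ^ 2 * n - 2 * t * d) :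
    d = 0 := by
  by_contra hd
  have h2 := h (d / (n + 1))
  have hn1 : (0:ℝ) < n + 1 := by linarith
  have hd2 : 0 < d ^ 2 := by positivity
  rw [div_pow] at h2
  have key : d ^ 2 / (n + 1) ^ 2 * n - 2 * (d / (n + 1)) * d
      = (d ^ 2 * (n - 2 * (n + 1))) / (n + 1) ^ 2 := by
    field_simp
  rw [key] at h2
  have hneg : (d ^ 2 * (n - 2 * (n + 1))) / (n + 1) ^ 2 < 0 := by
    apply div_neg_of_neg_of_pos
    · have : n - 2 * (n + 1) < 0 := by linarith
      exact mul_neg_of_pos_of_neg hd2 this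
    · positivity
  linarith


end Stmt10Aux

section Defs


/-- Regret, with respect to `E_F[Y | Z]`, of an estimator based on `Z = g(X₁,X₂)` alone. -/
def REGZ {M₁ M₂ N K : ℕ} (g : XSp M₁ M₂ → Euc K) (F : Measure (ΩSp M₁ M₂ N))
    (ρ : Euc K → Euc N) : ℝ :=
  (∫ ω, ‖ω.2 - ρ (g ω.1)‖ ^ 2 ∂F) -
    ∫ ω, ‖ω.2 - condExp
      (MeasurableSpace.comap (fun ω' : ΩSp M₁ M₂ N => g ω'.1) inferInstance) F
      (fun ω' => ω'.2) ω‖ ^ 2 ∂F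


end Defs

namespace Stmt10Aux

lemma regz_formula {M₁ M₂ N K : ℕ} (g : XSp M₁ M₂ → Euc K) (hg : Measurable g)
    (F : Measure (ΩSp M₁ M₂ N)) (hFp : IsProbabilityMeasure F)
    (hY2 : MemLp (fun ω : ΩSp M₁ M₂ N => ω.2) 2 F)
    (χ : Euc K → Euc N) (hχ : Measurable χ)
    (hχ2 : MemLp (fun ω : ΩSp M₁ M₂ N => χ (g ω.1)) 2 F) :
    REGZ g F χ = ∫ ω, ‖(condExp (MeasurableSpace.comap (fun ω' : ΩSp M₁ M₂ N => g ω'.1)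
      inferInstance) F (fun ω' => ω'.2)) ω - χ (g ω.1)‖ ^ 2 ∂F := by
  haveI := hFp
  have hgf : Measurable (fun ω : ΩSp M₁ M₂ N => g ω.1) := hg.comp measurable_fst
  have hmZ : (MeasurableSpace.comap (fun ω' : ΩSp M₁ M₂ N => g ω'.1) inferInstance)
      ≤ (inferInstance : MeasurableSpace (ΩSp M₁ M₂ N)) := measurable_iff_comap_le.mp hgf
  have hZmeas : @Measurable _ _ (MeasurableSpace.comap (fun ω' : ΩSp M₁ M₂ N => g ω'.1)
      inferInstance) _ (fun ω : ΩSp M₁ M₂ N => g ω.1) := measurable_iff_comap_le.mpr le_rfl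
  have hp := Stmt10Aux.pythagoras (E := Euc N) hmZ hY2 hχ2
    ⟨fun ω => χ (g ω.1), (hχ.comp hZmeas).stronglyMeasurable, Filter.EventuallyEq.rfl⟩
  beta_reduce at hp
  unfold REGZ
  linarith [hp]

end Stmt10Aux

namespace Stmt10Aux

variable {M₁ M₂ N K : ℕ}

lemma cset_measurable {A : Submodule ℝ (Euc M₁ → Euc N)} {B : Submodule ℝ (Euc M₂ → Euc N)}
    (hAmeas : ∀ φ ∈ A, Measurable φ) (hBmeas : ∀ ψ ∈ B, Measurable ψ)
    {v : XSp M₁ M₂ → Euc N} (hv : v ∈ Cset A B) : Measurable v := by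
  obtain ⟨φ, hφ, ψ, hψ, rfl⟩ := hv
  exact ((hAmeas φ hφ).comp measurable_fst).add ((hBmeas ψ hψ).comp measurable_snd)

lemma cset_memℒp {ν : Measure (XSp M₁ M₂)} {A : Submodule ℝ (Euc M₁ → Euc N)}
    {B : Submodule ℝ (Euc M₂ → Euc N)}
    (hAmeas : ∀ φ ∈ A, Measurable φ) (hBmeas : ∀ ψ ∈ B, Measurable ψ)
    (hAL2 : ∀ φ ∈ A, MemLp φ 2 (ν.map Prod.fst)) (hBL2 : ∀ ψ ∈ B, MemLp ψ 2 (ν.map Prod.snd))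
    {v : XSp M₁ M₂ → Euc N} (hv : v ∈ Cset A B) : MemLp v 2 ν := by
  obtain ⟨φ, hφ, ψ, hψ, rfl⟩ := hv
  have h1 : MemLp (fun x : XSp M₁ M₂ => φ x.1) 2 ν :=
    (memLp_map_measure_iff (hAmeas φ hφ).stronglyMeasurable.aestronglyMeasurable
      measurable_fst.aemeasurable).mp (hAL2 φ hφ)
  have h2 : MemLp (fun x : XSp M₁ M₂ => ψ x.2) 2 ν :=
    (memLp_map_measure_iff (hBmeas ψ hψ).stronglyMeasurable.aestronglyMeasurable
      measurable_snd.aemeasurable).mp (hBL2 ψ hψ)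
  exact h1.add h2

lemma cset_add_smul {A : Submodule ℝ (Euc M₁ → Euc N)} {B : Submodule ℝ (Euc M₂ → Euc N)}
    {v w : XSp M₁ M₂ → Euc N} (hv : v ∈ Cset A B) (hw : w ∈ Cset A B) (t : ℝ) :
    (fun x => v x + t • w x) ∈ Cset A B := by
  obtain ⟨φ₁, hφ₁, ψ₁, hψ₁, rfl⟩ := hv
  obtain ⟨φ₂, hφ₂, ψ₂, hψ₂, rfl⟩ := hw
  refine ⟨φ₁ + t • φ₂, A.add_mem hφ₁ (A.smul_mem t hφ₂),
    ψ₁ + t • ψ₂, B.add_mem hψ₁ (B.smul_mem t hψ₂), ?_⟩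
  funext x
  simp only [Pi.add_apply, Pi.smul_apply, smul_add]
  abel

lemma cset_sub {A : Submodule ℝ (Euc M₁ → Euc N)} {B : Submodule ℝ (Euc M₂ → Euc N)}
    {v w : XSp M₁ M₂ → Euc N} (hv : v ∈ Cset A B) (hw : w ∈ Cset A B) :
    (fun x => v x - w x) ∈ Cset A B := by
  have := cset_add_smul hv hw (-1)
  simpa [sub_eq_add_neg] using this

lemma memℒp_pull {ν : Measure (XSp M₁ M₂)} {F : Measure (ΩSp M₁ M₂ N)}
    (hFfst : F.map Prod.fst = ν) {u : XSp M₁ M₂ → Euc N} (hum : Measurable u)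
    (hu2 : MemLp u 2 ν) : MemLp (fun ω : ΩSp M₁ M₂ N => u ω.1) 2 F := by
  have h : MemLp u 2 (F.map Prod.fst) := by rw [hFfst]; exact hu2
  exact (memLp_map_measure_iff hum.stronglyMeasurable.aestronglyMeasurable
    measurable_fst.aemeasurable).mp h

/-- Variational orthogonality: the MSE-minimizer `ρC` over `Cset A B` satisfies
`E⟪Y - ρC(X), v(X)⟫ = 0` for all `v ∈ Cset A B`. -/
lemma vc_orth {ν : Measure (XSp M₁ M₂)} {A : Submodule ℝ (Euc M₁ → Euc N)}
    {B : Submodule ℝ (Euc M₂ → Euc N)}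
    (hAmeas : ∀ φ ∈ A, Measurable φ) (hBmeas : ∀ ψ ∈ B, Measurable ψ)
    (hAL2 : ∀ φ ∈ A, MemLp φ 2 (ν.map Prod.fst)) (hBL2 : ∀ ψ ∈ B, MemLp ψ 2 (ν.map Prod.snd))
    {F : Measure (ΩSp M₁ M₂ N)} (hFp : IsProbabilityMeasure F) (hFfst : F.map Prod.fst = ν)
    (hFY2 : MemLp (fun ω : ΩSp M₁ M₂ N => ω.2) 2 F)
    {ρC : XSp M₁ M₂ → Euc N} (hρCmem : ρC ∈ Cset A B)
    (hmin : ∀ ρ' ∈ Cset A B, MSE F ρC ≤ MSE F ρ')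
    {v : XSp M₁ M₂ → Euc N} (hv : v ∈ Cset A B) :
    ∫ ω, (inner ℝ (ω.2 - ρC ω.1) (v ω.1) : ℝ) ∂F = 0 := by
  haveI := hFp
  have hvm := cset_measurable hAmeas hBmeas hv
  have hv2F : MemLp (fun ω : ΩSp M₁ M₂ N => v ω.1) 2 F :=
    memℒp_pull hFfst hvm (cset_memℒp hAmeas hBmeas hAL2 hBL2 hv)
  have hρC2F : MemLp (fun ω : ΩSp M₁ M₂ N => ρC ω.1) 2 F :=
    memℒp_pull hFfst (cset_measurable hAmeas hBmeas hρCmem)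
      (cset_memℒp hAmeas hBmeas hAL2 hBL2 hρCmem)
  have ha2 : MemLp (fun ω : ΩSp M₁ M₂ N => ω.2 - ρC ω.1) 2 F := hFY2.sub hρC2F
  have hn : 0 ≤ ∫ ω, ‖v ω.1‖ ^ 2 ∂F := integral_nonneg fun ω => by positivity
  refine eq_zero_of_quadratic hn fun t => ?_
  have hmem : (fun x => ρC x + t • v x) ∈ Cset A B := cset_add_smul hρCmem hv t
  have hle := hmin _ hmem
  have IA : Integrable (fun ω : ΩSp M₁ M₂ N => ‖ω.2 - ρC ω.1‖ ^ 2) F := integrable_sq_norm ha2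
  have IB : Integrable (fun ω : ΩSp M₁ M₂ N =>
      2 * t * (inner ℝ (ω.2 - ρC ω.1) (v ω.1) : ℝ)) F :=
    (integrable_inner' ha2 hv2F).const_mul (2 * t)
  have IC : Integrable (fun ω : ΩSp M₁ M₂ N => t ^ 2 * ‖v ω.1‖ ^ 2) F :=
    (integrable_sq_norm hv2F).const_mul (t ^ 2)
  have hexp : MSE F (fun x => ρC x + t • v x)
      = MSE F ρC - 2 * t * (∫ ω, (inner ℝ (ω.2 - ρC ω.1) (v ω.1) : ℝ) ∂F)
        + t ^ 2 * ∫ ω, ‖v ω.1‖ ^ 2 ∂F := by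
    unfold MSE
    have hpt : ∀ ω : ΩSp M₁ M₂ N, ‖ω.2 - (ρC ω.1 + t • v ω.1)‖ ^ 2
        = ‖ω.2 - ρC ω.1‖ ^ 2 - 2 * t * (inner ℝ (ω.2 - ρC ω.1) (v ω.1) : ℝ)
          + t ^ 2 * ‖v ω.1‖ ^ 2 := by
      intro ω
      have hr : ω.2 - (ρC ω.1 + t • v ω.1) = (ω.2 - ρC ω.1) - t • v ω.1 := by abel
      rw [hr, norm_sub_sq_real, real_inner_smul_right, norm_smul]
      simp only [Real.norm_eq_abs, mul_pow, sq_abs]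
      ring
    simp_rw [hpt]
    have IAB : Integrable (fun ω : ΩSp M₁ M₂ N =>
        ‖ω.2 - ρC ω.1‖ ^ 2 - 2 * t * (inner ℝ (ω.2 - ρC ω.1) (v ω.1) : ℝ)) F := IA.sub IB
    rw [integral_add IAB IC, integral_sub IA IB, MeasureTheory.integral_const_mul, MeasureTheory.integral_const_mul]
  rw [hexp] at hle
  linarith

end Stmt10Aux

namespace Stmt10Aux

/-- MSE is unchanged under the reflection `Y ↦ 2 ρC(X) - Y` for estimators `u` with
`ρC - u ∈ Cset A B`. -/
lemma mse_flip {M₁ M₂ N : ℕ} {ν : Measure (XSp M₁ M₂)} {A : Submodule ℝ (Euc M₁ → Euc N)}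
    {B : Submodule ℝ (Euc M₂ → Euc N)}
    (hAmeas : ∀ φ ∈ A, Measurable φ) (hBmeas : ∀ ψ ∈ B, Measurable ψ)
    (hAL2 : ∀ φ ∈ A, MemLp φ 2 (ν.map Prod.fst)) (hBL2 : ∀ ψ ∈ B, MemLp ψ 2 (ν.map Prod.snd))
    {F : Measure (ΩSp M₁ M₂ N)} (hFp : IsProbabilityMeasure F) (hFfst : F.map Prod.fst = ν)
    (hFY2 : MemLp (fun ω : ΩSp M₁ M₂ N => ω.2) 2 F)
    {ρC : XSp M₁ M₂ → Euc N} (hρCmem : ρC ∈ Cset A B)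
    (hmin : ∀ ρ' ∈ Cset A B, MSE F ρC ≤ MSE F ρ')
    {u : XSp M₁ M₂ → Euc N} (hum : Measurable u) (hu2 : MemLp u 2 ν)
    (hmem : (fun x => ρC x - u x) ∈ Cset A B) :
    MSE (F.map (fun ω : ΩSp M₁ M₂ N => (ω.1, (2:ℝ) • ρC ω.1 - ω.2))) u = MSE F u := by
  haveI := hFp
  have hρCmeas : Measurable ρC := cset_measurable hAmeas hBmeas hρCmem
  have hρC2F : MemLp (fun ω : ΩSp M₁ M₂ N => ρC ω.1) 2 F :=
    memℒp_pull hFfst hρCmeas (cset_memℒp hAmeas hBmeas hAL2 hBL2 hρCmem)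
  have hu2F : MemLp (fun ω : ΩSp M₁ M₂ N => u ω.1) 2 F := memℒp_pull hFfst hum hu2
  have hT : Measurable (fun ω : ΩSp M₁ M₂ N => (ω.1, (2:ℝ) • ρC ω.1 - ω.2)) :=
    measurable_fst.prodMk (((hρCmeas.comp measurable_fst).const_smul (2:ℝ)).sub measurable_snd)
  have h0 := vc_orth hAmeas hBmeas hAL2 hBL2 hFp hFfst hFY2 hρCmem hmin hmem
  beta_reduce at h0
  unfold MSE
  have hsm : AEStronglyMeasurable (fun ω : ΩSp M₁ M₂ N => ‖ω.2 - u ω.1‖ ^ 2)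
      (F.map (fun ω : ΩSp M₁ M₂ N => (ω.1, (2:ℝ) • ρC ω.1 - ω.2))) :=
    (by fun_prop : Measurable (fun ω : ΩSp M₁ M₂ N => ‖ω.2 - u ω.1‖ ^ 2)).aestronglyMeasurable
  rw [integral_map hT.aemeasurable hsm]
  have hpt : ∀ ω : ΩSp M₁ M₂ N,
      ‖((fun ω : ΩSp M₁ M₂ N => (ω.1, (2:ℝ) • ρC ω.1 - ω.2)) ω).2
          - u (((fun ω : ΩSp M₁ M₂ N => (ω.1, (2:ℝ) • ρC ω.1 - ω.2)) ω).1)‖ ^ 2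
        = ‖ω.2 - u ω.1‖ ^ 2
          + (-4) * (inner ℝ (ω.2 - ρC ω.1) (ρC ω.1 - u ω.1) : ℝ) := by
    intro ω
    show ‖(2:ℝ) • ρC ω.1 - ω.2 - u ω.1‖ ^ 2 = _
    have hv1 : (2:ℝ) • ρC ω.1 - ω.2 - u ω.1 = (ρC ω.1 - u ω.1) - (ω.2 - ρC ω.1) := by
      rw [two_smul]; abel
    have hv2 : ω.2 - u ω.1 = (ω.2 - ρC ω.1) + (ρC ω.1 - u ω.1) := by abel
    rw [hv1, hv2, norm_sub_sq_real, norm_add_sq_real,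
      real_inner_comm (ρC ω.1 - u ω.1) (ω.2 - ρC ω.1)]
    ring
  simp_rw [hpt]
  have IA : Integrable (fun ω : ΩSp M₁ M₂ N => ‖ω.2 - u ω.1‖ ^ 2) F :=
    integrable_sq_norm (hFY2.sub hu2F)
  have IB : Integrable (fun ω : ΩSp M₁ M₂ N =>
      (-4) * (inner ℝ (ω.2 - ρC ω.1) (ρC ω.1 - u ω.1) : ℝ)) F := by
    refine Integrable.const_mul ?_ (-4)
    have hd2F : MemLp (fun ω : ΩSp M₁ M₂ N => ρC ω.1 - u ω.1) 2 F := hρC2F.sub hu2F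
    exact integrable_inner' (hFY2.sub hρC2F) hd2F
  rw [integral_add IA IB, MeasureTheory.integral_const_mul, h0]
  ring

end Stmt10Aux

namespace Stmt10Aux

lemma flip_mem_setF {M₁ M₂ N : ℕ} {ν : Measure (XSp M₁ M₂)} {A : Submodule ℝ (Euc M₁ → Euc N)}
    {B : Submodule ℝ (Euc M₂ → Euc N)}
    (hAmeas : ∀ φ ∈ A, Measurable φ) (hBmeas : ∀ ψ ∈ B, Measurable ψ)
    (hAL2 : ∀ φ ∈ A, MemLp φ 2 (ν.map Prod.fst)) (hBL2 : ∀ ψ ∈ B, MemLp ψ 2 (ν.map Prod.snd))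
    {φA : Euc M₁ → Euc N} {ψB : Euc M₂ → Euc N} (hφA : φA ∈ A) (hψB : ψB ∈ B) {c : ℝ}
    {F : Measure (ΩSp M₁ M₂ N)} (hF : F ∈ SetF ν A B φA ψB c)
    {ρC : XSp M₁ M₂ → Euc N} (hρCmem : ρC ∈ Cset A B)
    (hmin : ∀ ρ' ∈ Cset A B, MSE F ρC ≤ MSE F ρ') :
    F.map (fun ω : ΩSp M₁ M₂ N => (ω.1, (2:ℝ) • ρC ω.1 - ω.2)) ∈ SetF ν A B φA ψB c := by
  obtain ⟨hFp, hFfst, hFY2, hFA, hFB, hFc⟩ := hF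
  haveI := hFp
  haveI : IsProbabilityMeasure ν := by
    rw [← hFfst]; exact Measure.isProbabilityMeasure_map measurable_fst.aemeasurable
  have hρCmeas : Measurable ρC := cset_measurable hAmeas hBmeas hρCmem
  have hρC2F : MemLp (fun ω : ΩSp M₁ M₂ N => ρC ω.1) 2 F :=
    memℒp_pull hFfst hρCmeas (cset_memℒp hAmeas hBmeas hAL2 hBL2 hρCmem)
  have hT : Measurable (fun ω : ΩSp M₁ M₂ N => (ω.1, (2:ℝ) • ρC ω.1 - ω.2)) :=
    measurable_fst.prodMk (((hρCmeas.comp measurable_fst).const_smul (2:ℝ)).sub measurable_snd)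
  have hflip := fun u hum hu2 hmem => mse_flip (u := u) hAmeas hBmeas hAL2 hBL2 hFp hFfst hFY2
    hρCmem hmin hum hu2 hmem
  -- memberships needed for the flips
  have hmemA : ∀ φ ∈ A, (fun x : XSp M₁ M₂ => ρC x - (fun x : XSp M₁ M₂ => φ x.1) x) ∈ Cset A B := by
    intro φ hφ
    exact cset_sub hρCmem ⟨φ, hφ, 0, B.zero_mem, by funext x; simp⟩
  have hmemB : ∀ ψ ∈ B, (fun x : XSp M₁ M₂ => ρC x - (fun x : XSp M₁ M₂ => ψ x.2) x) ∈ Cset A B := by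
    intro ψ hψ
    exact cset_sub hρCmem ⟨0, A.zero_mem, ψ, hψ, by funext x; simp⟩
  have hA2ν : ∀ φ ∈ A, MemLp (fun x : XSp M₁ M₂ => φ x.1) 2 ν := by
    intro φ hφ
    exact (memLp_map_measure_iff (hAmeas φ hφ).stronglyMeasurable.aestronglyMeasurable
      measurable_fst.aemeasurable).mp (hAL2 φ hφ)
  have hB2ν : ∀ ψ ∈ B, MemLp (fun x : XSp M₁ M₂ => ψ x.2) 2 ν := by
    intro ψ hψ
    exact (memLp_map_measure_iff (hBmeas ψ hψ).stronglyMeasurable.aestronglyMeasurable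
      measurable_snd.aemeasurable).mp (hBL2 ψ hψ)
  refine ⟨Measure.isProbabilityMeasure_map hT.aemeasurable, ?_, ?_, ?_, ?_, ?_⟩
  · rw [Measure.map_map measurable_fst hT]
    exact hFfst
  · refine (memLp_map_measure_iff measurable_snd.stronglyMeasurable.aestronglyMeasurable
      hT.aemeasurable).mpr ?_
    exact (hρC2F.const_smul (2:ℝ)).sub hFY2
  · intro φ hφ
    have hm1 : Measurable φA := hAmeas φA hφA
    have hm2 : Measurable φ := hAmeas φ hφ
    rw [hflip (fun x : XSp M₁ M₂ => φA x.1) (by fun_prop) (hA2ν φA hφA) (hmemA φA hφA),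
      hflip (fun x : XSp M₁ M₂ => φ x.1) (by fun_prop) (hA2ν φ hφ) (hmemA φ hφ)]
    exact hFA φ hφ
  · intro ψ hψ
    have hm1 : Measurable ψB := hBmeas ψB hψB
    have hm2 : Measurable ψ := hBmeas ψ hψ
    rw [hflip (fun x : XSp M₁ M₂ => ψB x.2) (by fun_prop) (hB2ν ψB hψB) (hmemB ψB hψB),
      hflip (fun x : XSp M₁ M₂ => ψ x.2) (by fun_prop) (hB2ν ψ hψ) (hmemB ψ hψ)]
    exact hFB ψ hψ
  · have h0 : (fun x : XSp M₁ M₂ => ρC x - (fun _ : XSp M₁ M₂ => (0:Euc N)) x) ∈ Cset A B := by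
      simpa using hρCmem
    have hz := hflip (fun _ : XSp M₁ M₂ => (0:Euc N)) measurable_const (memLp_const 0) h0
    unfold MSE at hz
    simp only [sub_zero] at hz
    exact hz.trans hFc

end Stmt10Aux


namespace Stmt10Aux

lemma invariant_of_measurableSet {α E : Type*} [TopologicalSpace E] [T2Space E]
    {m : MeasurableSpace α} {T : α → α} (hT : ∀ s : Set α, MeasurableSet[m] s → T ⁻¹' s = s)
    {f : α → E} (hf : StronglyMeasurable[m] f) (a : α) : f (T a) = f a := by
  have heq : ∀ n, hf.approx n (T a) = hf.approx n a := by
    intro n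
    have hfib := @SimpleFunc.measurableSet_fiber α E m (hf.approx n) (hf.approx n a)
    have hpre := hT _ hfib
    have ha : a ∈ (hf.approx n) ⁻¹' {hf.approx n a} := rfl
    have hb : a ∈ T ⁻¹' ((hf.approx n) ⁻¹' {hf.approx n a}) := by rw [hpre]; exact ha
    exact hb
  have h1 := hf.tendsto_approx (T a)
  have h2 := hf.tendsto_approx a
  rw [show (fun n => hf.approx n (T a)) = fun n => hf.approx n a from funext heq] at h1
  exact tendsto_nhds_unique h1 h2

lemma condexp_flip {M₁ M₂ N K : ℕ} {ν : Measure (XSp M₁ M₂)}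
    {F : Measure (ΩSp M₁ M₂ N)} (hFp : IsProbabilityMeasure F) (hFfst : F.map Prod.fst = ν)
    (hFY2 : MemLp (fun ω : ΩSp M₁ M₂ N => ω.2) 2 F)
    {ρC : XSp M₁ M₂ → Euc N} (hρCmeas : Measurable ρC) (hρC2ν : MemLp ρC 2 ν)
    {g : XSp M₁ M₂ → Euc K} (hg : Measurable g)
    {ρStar : Euc K → Euc N} (hρStarMeas : Measurable ρStar)
    (hρStar : (fun x : XSp M₁ M₂ => ρStar (g x)) =ᵐ[ν]
      condExp (MeasurableSpace.comap g inferInstance) ν ρC)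
    (mZp : {m : MeasurableSpace (ΩSp M₁ M₂ N) // m ≤ Prod.instMeasurableSpace})
    (hZmeas : @Measurable _ _ mZp.1 _ (fun ω : ΩSp M₁ M₂ N => g ω.1))
    (hset : ∀ s : Set (ΩSp M₁ M₂ N), MeasurableSet[mZp.1] s →
      ∃ B : Set (Euc K), MeasurableSet B ∧ (fun ω : ΩSp M₁ M₂ N => g ω.1) ⁻¹' B = s) :
    condExp mZp.1 (F.map (fun ω : ΩSp M₁ M₂ N => (ω.1, (2:ℝ) • ρC ω.1 - ω.2))) (fun ω' => ω'.2)
      =ᵐ[F.map (fun ω : ΩSp M₁ M₂ N => (ω.1, (2:ℝ) • ρC ω.1 - ω.2))]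
      (fun ω : ΩSp M₁ M₂ N => (2:ℝ) • ρStar (g ω.1) - condExp mZp.1 F (fun ω' => ω'.2) ω) := by
  haveI := hFp
  haveI : IsProbabilityMeasure ν := by
    rw [← hFfst]; exact Measure.isProbabilityMeasure_map measurable_fst.aemeasurable
  have hT : Measurable (fun ω : ΩSp M₁ M₂ N => (ω.1, (2:ℝ) • ρC ω.1 - ω.2)) :=
    measurable_fst.prodMk (((hρCmeas.comp measurable_fst).const_smul (2:ℝ)).sub measurable_snd)
  haveI : IsProbabilityMeasure (F.map (fun ω : ΩSp M₁ M₂ N => (ω.1, (2:ℝ) • ρC ω.1 - ω.2))) := Measure.isProbabilityMeasure_map hT.aemeasurable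
  have hgf : Measurable (fun ω : ΩSp M₁ M₂ N => g ω.1) := hg.comp measurable_fst
  have hmg : MeasurableSpace.comap g inferInstance
      ≤ (inferInstance : MeasurableSpace (XSp M₁ M₂)) := measurable_iff_comap_le.mp hg
  have hTset : ∀ s : Set (ΩSp M₁ M₂ N), MeasurableSet[mZp.1] s → (fun ω : ΩSp M₁ M₂ N => (ω.1, (2:ℝ) • ρC ω.1 - ω.2)) ⁻¹' s = s := by
    intro s hs
    obtain ⟨B₀, hB₀, rfl⟩ := hset s hs
    rfl
  have heFsm : StronglyMeasurable[mZp.1] (condExp mZp.1 F (fun ω' : ΩSp M₁ M₂ N => ω'.2)) :=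
    stronglyMeasurable_condExp
  have heT : ∀ ω, condExp mZp.1 F (fun ω' : ΩSp M₁ M₂ N => ω'.2) ((fun ω : ΩSp M₁ M₂ N => (ω.1, (2:ℝ) • ρC ω.1 - ω.2)) ω)
      = condExp mZp.1 F (fun ω' : ΩSp M₁ M₂ N => ω'.2) ω :=
    invariant_of_measurableSet hTset heFsm
  have hhT : ∀ ω : ΩSp M₁ M₂ N,
      (2:ℝ) • ρStar (g ((fun ω : ΩSp M₁ M₂ N => (ω.1, (2:ℝ) • ρC ω.1 - ω.2)) ω).1) - condExp mZp.1 F (fun ω' : ΩSp M₁ M₂ N => ω'.2) ((fun ω : ΩSp M₁ M₂ N => (ω.1, (2:ℝ) • ρC ω.1 - ω.2)) ω)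
      = (2:ℝ) • ρStar (g ω.1) - condExp mZp.1 F (fun ω' : ΩSp M₁ M₂ N => ω'.2) ω := by
    intro ω
    rw [heT ω]
  have hws2F : MemLp (fun ω : ΩSp M₁ M₂ N => ρStar (g ω.1)) 2 F := by
    refine memℒp_pull hFfst (hρStarMeas.comp hg) ?_
    exact (memℒp_condexp_two hmg hρC2ν).ae_eq hρStar.symm
  have hsm_h : StronglyMeasurable[mZp.1] (fun ω : ΩSp M₁ M₂ N =>
      (2:ℝ) • ρStar (g ω.1) - condExp mZp.1 F (fun ω' : ΩSp M₁ M₂ N => ω'.2) ω) :=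
    (((hρStarMeas.comp hZmeas).stronglyMeasurable).const_smul (2:ℝ)).sub heFsm
  have hhintF : Integrable (fun ω : ΩSp M₁ M₂ N =>
      (2:ℝ) • ρStar (g ω.1) - condExp mZp.1 F (fun ω' : ΩSp M₁ M₂ N => ω'.2) ω) F :=
    ((hws2F.integrable one_le_two).smul (2:ℝ)).sub integrable_condExp
  have hhint : Integrable (fun ω : ΩSp M₁ M₂ N =>
      (2:ℝ) • ρStar (g ω.1) - condExp mZp.1 F (fun ω' : ΩSp M₁ M₂ N => ω'.2) ω) (F.map (fun ω : ΩSp M₁ M₂ N => (ω.1, (2:ℝ) • ρC ω.1 - ω.2))) := by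
    refine (integrable_map_measure ((hsm_h.mono mZp.2).aestronglyMeasurable)
      hT.aemeasurable).mpr ?_
    refine hhintF.congr (Filter.Eventually.of_forall fun ω => ?_)
    exact (hhT ω).symm
  have hY2' : MemLp (fun ω : ΩSp M₁ M₂ N => ω.2) 2 (F.map (fun ω : ΩSp M₁ M₂ N => (ω.1, (2:ℝ) • ρC ω.1 - ω.2))) := by
    refine (memLp_map_measure_iff measurable_snd.stronglyMeasurable.aestronglyMeasurable
      hT.aemeasurable).mpr ?_
    exact ((memℒp_pull hFfst hρCmeas hρC2ν).const_smul (2:ℝ)).sub hFY2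
  refine (ae_eq_condExp_of_forall_setIntegral_eq mZp.2 (hY2'.integrable one_le_two)
    (fun s _ _ => hhint.integrableOn) ?_ ⟨_, hsm_h, Filter.EventuallyEq.rfl⟩).symm
  intro s hs _
  obtain ⟨B₀, hB₀, rfl⟩ := hset s hs
  have hsMeas : MeasurableSet ((fun ω : ΩSp M₁ M₂ N => g ω.1) ⁻¹' B₀) := hgf hB₀
  have hsmZ : MeasurableSet[mZp.1] ((fun ω : ΩSp M₁ M₂ N => g ω.1) ⁻¹' B₀) := by
    exact hZmeas hB₀
  rw [setIntegral_map hsMeas ((hsm_h.mono mZp.2).aestronglyMeasurable) hT.aemeasurable,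
    setIntegral_map hsMeas measurable_snd.stronglyMeasurable.aestronglyMeasurable
      hT.aemeasurable]
  have hTpre : (fun ω : ΩSp M₁ M₂ N => (ω.1, (2:ℝ) • ρC ω.1 - ω.2)) ⁻¹' ((fun ω : ΩSp M₁ M₂ N => g ω.1) ⁻¹' B₀)
      = (fun ω : ΩSp M₁ M₂ N => g ω.1) ⁻¹' B₀ := rfl
  rw [hTpre]
  have hcongr : ∫ ω in (fun ω : ΩSp M₁ M₂ N => g ω.1) ⁻¹' B₀,
        ((2:ℝ) • ρStar (g ((fun ω : ΩSp M₁ M₂ N => (ω.1, (2:ℝ) • ρC ω.1 - ω.2)) ω).1)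
          - condExp mZp.1 F (fun ω' : ΩSp M₁ M₂ N => ω'.2) ((fun ω : ΩSp M₁ M₂ N => (ω.1, (2:ℝ) • ρC ω.1 - ω.2)) ω)) ∂F
      = ∫ ω in (fun ω : ΩSp M₁ M₂ N => g ω.1) ⁻¹' B₀,
        ((2:ℝ) • ρStar (g ω.1) - condExp mZp.1 F (fun ω' : ΩSp M₁ M₂ N => ω'.2) ω) ∂F :=
    integral_congr_ae (Filter.Eventually.of_forall fun ω => hhT ω)
  rw [hcongr]
  have hIρC : IntegrableOn (fun ω : ΩSp M₁ M₂ N => ρC ω.1)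
      ((fun ω : ΩSp M₁ M₂ N => g ω.1) ⁻¹' B₀) F :=
    ((memℒp_pull hFfst hρCmeas hρC2ν).integrable one_le_two).integrableOn
  have hIws : IntegrableOn (fun ω : ΩSp M₁ M₂ N => ρStar (g ω.1))
      ((fun ω : ΩSp M₁ M₂ N => g ω.1) ⁻¹' B₀) F :=
    (hws2F.integrable one_le_two).integrableOn
  have hIY : IntegrableOn (fun ω : ΩSp M₁ M₂ N => ω.2)
      ((fun ω : ΩSp M₁ M₂ N => g ω.1) ⁻¹' B₀) F :=
    (hFY2.integrable one_le_two).integrableOn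
  have he_eq : ∫ ω in (fun ω : ΩSp M₁ M₂ N => g ω.1) ⁻¹' B₀,
        condExp mZp.1 F (fun ω' : ΩSp M₁ M₂ N => ω'.2) ω ∂F
      = ∫ ω in (fun ω : ΩSp M₁ M₂ N => g ω.1) ⁻¹' B₀, ω.2 ∂F :=
    setIntegral_condExp mZp.2 (hFY2.integrable one_le_two) hsmZ
  have hws_eq : ∫ ω in (fun ω : ΩSp M₁ M₂ N => g ω.1) ⁻¹' B₀, ρStar (g ω.1) ∂F
      = ∫ ω in (fun ω : ΩSp M₁ M₂ N => g ω.1) ⁻¹' B₀, ρC ω.1 ∂F := by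
    have e1 : ∫ ω in (fun ω : ΩSp M₁ M₂ N => g ω.1) ⁻¹' B₀, ρStar (g ω.1) ∂F
        = ∫ x in g ⁻¹' B₀, ρStar (g x) ∂ν := by
      rw [← hFfst, setIntegral_map (hg hB₀)
        ((by fun_prop : Measurable (fun x : XSp M₁ M₂ => ρStar (g x))).aestronglyMeasurable)
        measurable_fst.aemeasurable]
      rfl
    have e3 : ∫ ω in (fun ω : ΩSp M₁ M₂ N => g ω.1) ⁻¹' B₀, ρC ω.1 ∂F
        = ∫ x in g ⁻¹' B₀, ρC x ∂ν := by
      rw [← hFfst, setIntegral_map (hg hB₀)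
        (hρCmeas.stronglyMeasurable.aestronglyMeasurable) measurable_fst.aemeasurable]
      rfl
    have e2 : ∫ x in g ⁻¹' B₀, ρStar (g x) ∂ν = ∫ x in g ⁻¹' B₀, ρC x ∂ν := by
      rw [setIntegral_congr_ae (hg hB₀) (hρStar.mono fun x hx _ => hx)]
      exact setIntegral_condExp hmg (hρC2ν.integrable one_le_two) ⟨B₀, hB₀, rfl⟩
    rw [e1, e2, ← e3]
  have hsplit : ∫ ω in (fun ω : ΩSp M₁ M₂ N => g ω.1) ⁻¹' B₀,
        ((2:ℝ) • ρStar (g ω.1) - condExp mZp.1 F (fun ω' : ΩSp M₁ M₂ N => ω'.2) ω) ∂F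
      = (2:ℝ) • (∫ ω in (fun ω : ΩSp M₁ M₂ N => g ω.1) ⁻¹' B₀, ρStar (g ω.1) ∂F)
        - ∫ ω in (fun ω : ΩSp M₁ M₂ N => g ω.1) ⁻¹' B₀,
            condExp mZp.1 F (fun ω' : ΩSp M₁ M₂ N => ω'.2) ω ∂F := by
    have hIws2 : IntegrableOn (fun ω : ΩSp M₁ M₂ N => (2:ℝ) • ρStar (g ω.1))
        ((fun ω : ΩSp M₁ M₂ N => g ω.1) ⁻¹' B₀) F := hIws.smul (2:ℝ)
    rw [integral_sub hIws2 integrable_condExp.integrableOn, integral_smul]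
  have hsplit2 : ∫ ω in (fun ω : ΩSp M₁ M₂ N => g ω.1) ⁻¹' B₀, ((fun ω : ΩSp M₁ M₂ N => (ω.1, (2:ℝ) • ρC ω.1 - ω.2)) ω).2 ∂F
      = (2:ℝ) • (∫ ω in (fun ω : ΩSp M₁ M₂ N => g ω.1) ⁻¹' B₀, ρC ω.1 ∂F)
        - ∫ ω in (fun ω : ΩSp M₁ M₂ N => g ω.1) ⁻¹' B₀, ω.2 ∂F := by
    show ∫ ω in (fun ω : ΩSp M₁ M₂ N => g ω.1) ⁻¹' B₀, ((2:ℝ) • ρC ω.1 - ω.2) ∂F = _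
    have hIρC2 : IntegrableOn (fun ω : ΩSp M₁ M₂ N => (2:ℝ) • ρC ω.1)
        ((fun ω : ΩSp M₁ M₂ N => g ω.1) ⁻¹' B₀) F := hIρC.smul (2:ℝ)
    rw [integral_sub hIρC2 hIY, integral_smul]
  rw [hsplit, hsplit2, hws_eq, he_eq]

end Stmt10Aux

/-- generalized minimax-regret lemma, Appendix B: for `Z = g(X₁,X₂)`
with `g` a fixed Borel function, the estimator `ρ*(Z) = E_ν[ρ_C(X₁,X₂) | Z]` minimizes the
worst-case regret `sup_(F∈𝓕) E_F‖E_F[Y|Z] − ρ(Z)‖²` among all square-integrable Borel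
functions `ρ` of `Z`. -/
theorem stmt_10
    (M₁ M₂ N : ℕ) (hM₁ : 0 < M₁) (hM₂ : 0 < M₂) (hN : 0 < N)
    (ν : Measure (XSp M₁ M₂)) (hνp : IsProbabilityMeasure ν)
    (hνmom : MemLp (id : XSp M₁ M₂ → XSp M₁ M₂) 2 ν)
    (A : Submodule ℝ (Euc M₁ → Euc N)) (B : Submodule ℝ (Euc M₂ → Euc N))
    (hAmeas : ∀ φ ∈ A, Measurable φ) (hBmeas : ∀ ψ ∈ B, Measurable ψ)
    (hAL2 : ∀ φ ∈ A, MemLp φ 2 (ν.map Prod.fst))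
    (hBL2 : ∀ ψ ∈ B, MemLp ψ 2 (ν.map Prod.snd))
    (φA : Euc M₁ → Euc N) (ψB : Euc M₂ → Euc N) (hφA : φA ∈ A) (hψB : ψB ∈ B)
    (c : ℝ) (hc : 0 < c)
    (hne : (SetF ν A B φA ψB c).Nonempty)
    (ρC : XSp M₁ M₂ → Euc N) (hρCmem : ρC ∈ Cset A B)
    (hρCmin : ∀ F ∈ SetF ν A B φA ψB c, ∀ ρ' ∈ Cset A B, MSE F ρC ≤ MSE F ρ')
    (K : ℕ) (g : XSp M₁ M₂ → Euc K) (hg : Measurable g)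
    (ρStar : Euc K → Euc N) (hρStarMeas : Measurable ρStar)
    (hρStar : (fun x : XSp M₁ M₂ => ρStar (g x)) =ᵐ[ν]
      condExp (MeasurableSpace.comap g inferInstance) ν ρC) :
    ∀ ρ : Euc K → Euc N, Measurable ρ → MemLp ρ 2 (ν.map g) →
      (⨆ F ∈ SetF ν A B φA ψB c, REGZ g F ρStar) ≤
        ⨆ F ∈ SetF ν A B φA ψB c, REGZ g F ρ := by
  classical
  intro ρ hρmeas hρ2
  obtain ⟨F₀, hF₀⟩ := hne
  have hgf : Measurable (fun ω : ΩSp M₁ M₂ N => g ω.1) := hg.comp measurable_fst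
  have hmgf : (MeasurableSpace.comap (fun ω' : ΩSp M₁ M₂ N => g ω'.1) inferInstance) ≤ (inferInstance : MeasurableSpace (ΩSp M₁ M₂ N)) :=
    measurable_iff_comap_le.mp hgf
  have hmg : MeasurableSpace.comap g inferInstance
      ≤ (inferInstance : MeasurableSpace (XSp M₁ M₂)) := measurable_iff_comap_le.mp hg
  have hρCmeas : Measurable ρC := Stmt10Aux.cset_measurable hAmeas hBmeas hρCmem
  have hρC2ν : MemLp ρC 2 ν := Stmt10Aux.cset_memℒp hAmeas hBmeas hAL2 hBL2 hρCmem
  have hρStar2ν : MemLp (fun x : XSp M₁ M₂ => ρStar (g x)) 2 ν :=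
    (Stmt10Aux.memℒp_condexp_two hmg hρC2ν).ae_eq hρStar.symm
  have hρ2ν : MemLp (fun x : XSp M₁ M₂ => ρ (g x)) 2 ν :=
    (memLp_map_measure_iff hρmeas.stronglyMeasurable.aestronglyMeasurable
      hg.aemeasurable).mp hρ2
  have hregz : ∀ (F' : Measure (ΩSp M₁ M₂ N)), IsProbabilityMeasure F' →
      F'.map Prod.fst = ν → MemLp (fun ω : ΩSp M₁ M₂ N => ω.2) 2 F' →
      ∀ (χ : Euc K → Euc N), Measurable χ → MemLp (fun x : XSp M₁ M₂ => χ (g x)) 2 ν →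
      REGZ g F' χ = ∫ ω, ‖(condExp (MeasurableSpace.comap (fun ω' : ΩSp M₁ M₂ N => g ω'.1) inferInstance) F' (fun ω' => ω'.2)) ω - χ (g ω.1)‖ ^ 2 ∂F' := by
    intro F' h1 h2 h3 χ h4 h5
    exact Stmt10Aux.regz_formula g hg F' h1 h3 χ h4 (Stmt10Aux.memℒp_pull h2 (h4.comp hg) h5)
  -- upper bound for the regret of ρ, uniform over SetF
  have hb2 : ∀ F' ∈ SetF ν A B φA ψB c, REGZ g F' ρ
      ≤ 2 * c + 2 * ∫ x, ‖ρ (g x)‖ ^ 2 ∂ν := by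
    rintro F' ⟨h1, h2, h3, _, _, h6⟩
    haveI := h1
    have hwρ2 : MemLp (fun ω : ΩSp M₁ M₂ N => ρ (g ω.1)) 2 F' :=
      Stmt10Aux.memℒp_pull h2 (hρmeas.comp hg) hρ2ν
    have hIA : Integrable (fun ω : ΩSp M₁ M₂ N => ‖ω.2 - ρ (g ω.1)‖ ^ 2) F' :=
      Stmt10Aux.integrable_sq_norm (h3.sub hwρ2)
    have hI1 : Integrable (fun ω : ΩSp M₁ M₂ N => 2 * ‖ω.2‖ ^ 2) F' :=
      (Stmt10Aux.integrable_sq_norm h3).const_mul 2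
    have hI2 : Integrable (fun ω : ΩSp M₁ M₂ N => 2 * ‖ρ (g ω.1)‖ ^ 2) F' :=
      (Stmt10Aux.integrable_sq_norm hwρ2).const_mul 2
    have hmono : ∫ ω, ‖ω.2 - ρ (g ω.1)‖ ^ 2 ∂F'
        ≤ ∫ ω, (2 * ‖ω.2‖ ^ 2 + 2 * ‖ρ (g ω.1)‖ ^ 2) ∂F' := by
      refine integral_mono hIA (hI1.add hI2) fun ω => ?_
      have h := norm_sub_le ω.2 (ρ (g ω.1))
      nlinarith [norm_nonneg ω.2, norm_nonneg (ρ (g ω.1)),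
        sq_nonneg (‖ω.2‖ - ‖ρ (g ω.1)‖), norm_nonneg (ω.2 - ρ (g ω.1))]
    have hpush : ∫ x, ‖ρ (g x)‖ ^ 2 ∂ν = ∫ ω, ‖ρ (g ω.1)‖ ^ 2 ∂F' := by
      rw [← h2, integral_map measurable_fst.aemeasurable
        ((by fun_prop : Measurable (fun x : XSp M₁ M₂ => ‖ρ (g x)‖ ^ 2)).aestronglyMeasurable)]
    have hsum : ∫ ω, (2 * ‖ω.2‖ ^ 2 + 2 * ‖ρ (g ω.1)‖ ^ 2) ∂F'
        = 2 * c + 2 * ∫ x, ‖ρ (g x)‖ ^ 2 ∂ν := by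
      rw [integral_add hI1 hI2, MeasureTheory.integral_const_mul,
        MeasureTheory.integral_const_mul, h6, hpush]
    have hm0 : 0 ≤ ∫ ω, ‖ω.2 - condExp (MeasurableSpace.comap (fun ω' : ΩSp M₁ M₂ N => g ω'.1) inferInstance) F' (fun ω' => ω'.2) ω‖ ^ 2 ∂F' :=
      integral_nonneg fun ω => by positivity
    unfold REGZ
    linarith
  -- nonnegativity of the regret of ρ
  have hnn : ∀ F' ∈ SetF ν A B φA ψB c, 0 ≤ REGZ g F' ρ := by
    rintro F' ⟨h1, h2, h3, _, _, _⟩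
    haveI := h1
    rw [hregz F' h1 h2 h3 ρ hρmeas hρ2ν]
    exact integral_nonneg fun ω => by positivity
  -- main step: reflection argument
  have hmain : ∀ F' ∈ SetF ν A B φA ψB c, ∃ F'' ∈ SetF ν A B φA ψB c,
      2 * REGZ g F' ρStar ≤ REGZ g F' ρ + REGZ g F'' ρ := by
    intro F' hF'
    obtain ⟨h1, h2, h3, h4, h5, h6⟩ := id hF'
    haveI := h1
    have hT : Measurable (fun ω : ΩSp M₁ M₂ N => (ω.1, (2:ℝ) • ρC ω.1 - ω.2)) :=
      measurable_fst.prodMk (((hρCmeas.comp measurable_fst).const_smul (2:ℝ)).sub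
        measurable_snd)
    haveI : IsProbabilityMeasure (F'.map (fun ω : ΩSp M₁ M₂ N => (ω.1, (2:ℝ) • ρC ω.1 - ω.2))) := Measure.isProbabilityMeasure_map hT.aemeasurable
    have hflipmem := Stmt10Aux.flip_mem_setF hAmeas hBmeas hAL2 hBL2 hφA hψB hF' hρCmem
      (hρCmin F' hF')
    refine ⟨F'.map (fun ω : ΩSp M₁ M₂ N => (ω.1, (2:ℝ) • ρC ω.1 - ω.2)), hflipmem, ?_⟩
    obtain ⟨k1, k2, k3, _, _, _⟩ := id hflipmem
    -- conditional expectation under the flipped measure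
    have hcond : condExp (MeasurableSpace.comap (fun ω' : ΩSp M₁ M₂ N => g ω'.1) inferInstance) (F'.map (fun ω : ΩSp M₁ M₂ N => (ω.1, (2:ℝ) • ρC ω.1 - ω.2))) (fun ω' => ω'.2) =ᵐ[F'.map (fun ω : ΩSp M₁ M₂ N => (ω.1, (2:ℝ) • ρC ω.1 - ω.2))]
        (fun ω : ΩSp M₁ M₂ N => (2:ℝ) • ρStar (g ω.1)
          - condExp (MeasurableSpace.comap (fun ω' : ΩSp M₁ M₂ N => g ω'.1) inferInstance) F' (fun ω' => ω'.2) ω) :=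
      Stmt10Aux.condexp_flip h1 h2 h3 hρCmeas hρC2ν hg hρStarMeas hρStar
        ⟨(MeasurableSpace.comap (fun ω' : ΩSp M₁ M₂ N => g ω'.1) inferInstance), hmgf⟩ (measurable_iff_comap_le.mpr le_rfl)
        (fun s hs => MeasurableSpace.measurableSet_comap.mp hs)
    -- invariance of the conditional expectation under the reflection
    have heT : ∀ ω, condExp (MeasurableSpace.comap (fun ω' : ΩSp M₁ M₂ N => g ω'.1) inferInstance) F' (fun ω' : ΩSp M₁ M₂ N => ω'.2) ((fun ω : ΩSp M₁ M₂ N => (ω.1, (2:ℝ) • ρC ω.1 - ω.2)) ω)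
        = condExp (MeasurableSpace.comap (fun ω' : ΩSp M₁ M₂ N => g ω'.1) inferInstance) F' (fun ω' : ΩSp M₁ M₂ N => ω'.2) ω := by
      refine Stmt10Aux.invariant_of_measurableSet (fun s hs => ?_) stronglyMeasurable_condExp
      obtain ⟨B₀, hB₀, rfl⟩ := MeasurableSpace.measurableSet_comap.mp hs
      rfl
    have hEm : Measurable (condExp (MeasurableSpace.comap (fun ω' : ΩSp M₁ M₂ N => g ω'.1) inferInstance) F' (fun ω' : ΩSp M₁ M₂ N => ω'.2)) :=
      (stronglyMeasurable_condExp.mono hmgf).measurable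
    -- the three regret formulas
    have r1 : REGZ g F' ρ = ∫ ω, ‖condExp (MeasurableSpace.comap (fun ω' : ΩSp M₁ M₂ N => g ω'.1) inferInstance) F' (fun ω' => ω'.2) ω - ρ (g ω.1)‖ ^ 2 ∂F' :=
      hregz F' h1 h2 h3 ρ hρmeas hρ2ν
    have rs : REGZ g F' ρStar
        = ∫ ω, ‖condExp (MeasurableSpace.comap (fun ω' : ΩSp M₁ M₂ N => g ω'.1) inferInstance) F' (fun ω' => ω'.2) ω - ρStar (g ω.1)‖ ^ 2 ∂F' :=
      hregz F' h1 h2 h3 ρStar hρStarMeas hρStar2ν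
    have r2 : REGZ g (F'.map (fun ω : ΩSp M₁ M₂ N => (ω.1, (2:ℝ) • ρC ω.1 - ω.2))) ρ
        = ∫ ω, ‖condExp (MeasurableSpace.comap (fun ω' : ΩSp M₁ M₂ N => g ω'.1) inferInstance) (F'.map (fun ω : ΩSp M₁ M₂ N => (ω.1, (2:ℝ) • ρC ω.1 - ω.2))) (fun ω' => ω'.2) ω - ρ (g ω.1)‖ ^ 2 ∂(F'.map (fun ω : ΩSp M₁ M₂ N => (ω.1, (2:ℝ) • ρC ω.1 - ω.2))) :=
      hregz (F'.map (fun ω : ΩSp M₁ M₂ N => (ω.1, (2:ℝ) • ρC ω.1 - ω.2))) k1 k2 k3 ρ hρmeas hρ2ν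
    have r2' : REGZ g (F'.map (fun ω : ΩSp M₁ M₂ N => (ω.1, (2:ℝ) • ρC ω.1 - ω.2))) ρ
        = ∫ ω, ‖((2:ℝ) • ρStar (g ω.1) - condExp (MeasurableSpace.comap (fun ω' : ΩSp M₁ M₂ N => g ω'.1) inferInstance) F' (fun ω' => ω'.2) ω)
            - ρ (g ω.1)‖ ^ 2 ∂F' := by
      rw [r2]
      have step1 : ∫ ω, ‖condExp (MeasurableSpace.comap (fun ω' : ΩSp M₁ M₂ N => g ω'.1) inferInstance) (F'.map (fun ω : ΩSp M₁ M₂ N => (ω.1, (2:ℝ) • ρC ω.1 - ω.2))) (fun ω' => ω'.2) ω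
            - ρ (g ω.1)‖ ^ 2 ∂(F'.map (fun ω : ΩSp M₁ M₂ N => (ω.1, (2:ℝ) • ρC ω.1 - ω.2)))
          = ∫ ω, ‖((2:ℝ) • ρStar (g ω.1) - condExp (MeasurableSpace.comap (fun ω' : ΩSp M₁ M₂ N => g ω'.1) inferInstance) F' (fun ω' => ω'.2) ω)
            - ρ (g ω.1)‖ ^ 2 ∂(F'.map (fun ω : ΩSp M₁ M₂ N => (ω.1, (2:ℝ) • ρC ω.1 - ω.2))) := by
        refine integral_congr_ae (hcond.mono fun ω hω => ?_)
        beta_reduce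
        rw [hω]
      rw [step1, integral_map hT.aemeasurable
        ((by fun_prop : Measurable (fun ω : ΩSp M₁ M₂ N =>
          ‖((2:ℝ) • ρStar (g ω.1) - condExp (MeasurableSpace.comap (fun ω' : ΩSp M₁ M₂ N => g ω'.1) inferInstance) F' (fun ω' => ω'.2) ω)
            - ρ (g ω.1)‖ ^ 2)).aestronglyMeasurable)]
      refine integral_congr_ae (Filter.Eventually.of_forall fun ω => ?_)
      show ‖((2:ℝ) • ρStar (g ((fun ω : ΩSp M₁ M₂ N => (ω.1, (2:ℝ) • ρC ω.1 - ω.2)) ω).1)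
          - condExp (MeasurableSpace.comap (fun ω' : ΩSp M₁ M₂ N => g ω'.1) inferInstance) F' (fun ω' => ω'.2) ((fun ω : ΩSp M₁ M₂ N => (ω.1, (2:ℝ) • ρC ω.1 - ω.2)) ω)) - ρ (g ((fun ω : ΩSp M₁ M₂ N => (ω.1, (2:ℝ) • ρC ω.1 - ω.2)) ω).1)‖ ^ 2 = _
      rw [heT ω]
    -- L² memberships over F'
    have heF2 : MemLp (condExp (MeasurableSpace.comap (fun ω' : ΩSp M₁ M₂ N => g ω'.1) inferInstance) F' (fun ω' : ΩSp M₁ M₂ N => ω'.2)) 2 F' :=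
      Stmt10Aux.memℒp_condexp_two hmgf h3
    have hws2 : MemLp (fun ω : ΩSp M₁ M₂ N => ρStar (g ω.1)) 2 F' :=
      Stmt10Aux.memℒp_pull h2 (hρStarMeas.comp hg) hρStar2ν
    have hwρ2 : MemLp (fun ω : ΩSp M₁ M₂ N => ρ (g ω.1)) 2 F' :=
      Stmt10Aux.memℒp_pull h2 (hρmeas.comp hg) hρ2ν
    have IL : Integrable (fun ω : ΩSp M₁ M₂ N =>
        2 * ‖condExp (MeasurableSpace.comap (fun ω' : ΩSp M₁ M₂ N => g ω'.1) inferInstance) F' (fun ω' => ω'.2) ω - ρStar (g ω.1)‖ ^ 2) F' :=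
      (Stmt10Aux.integrable_sq_norm (heF2.sub hws2)).const_mul 2
    have IR1 : Integrable (fun ω : ΩSp M₁ M₂ N =>
        ‖condExp (MeasurableSpace.comap (fun ω' : ΩSp M₁ M₂ N => g ω'.1) inferInstance) F' (fun ω' => ω'.2) ω - ρ (g ω.1)‖ ^ 2) F' :=
      Stmt10Aux.integrable_sq_norm (heF2.sub hwρ2)
    have IR2 : Integrable (fun ω : ΩSp M₁ M₂ N =>
        ‖((2:ℝ) • ρStar (g ω.1) - condExp (MeasurableSpace.comap (fun ω' : ΩSp M₁ M₂ N => g ω'.1) inferInstance) F' (fun ω' => ω'.2) ω)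
          - ρ (g ω.1)‖ ^ 2) F' :=
      Stmt10Aux.integrable_sq_norm (((hws2.const_smul (2:ℝ)).sub heF2).sub hwρ2)
    have hpoint : ∀ ω : ΩSp M₁ M₂ N,
        2 * ‖condExp (MeasurableSpace.comap (fun ω' : ΩSp M₁ M₂ N => g ω'.1) inferInstance) F' (fun ω' => ω'.2) ω - ρStar (g ω.1)‖ ^ 2
          ≤ ‖condExp (MeasurableSpace.comap (fun ω' : ΩSp M₁ M₂ N => g ω'.1) inferInstance) F' (fun ω' => ω'.2) ω - ρ (g ω.1)‖ ^ 2
            + ‖((2:ℝ) • ρStar (g ω.1) - condExp (MeasurableSpace.comap (fun ω' : ΩSp M₁ M₂ N => g ω'.1) inferInstance) F' (fun ω' => ω'.2) ω)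
              - ρ (g ω.1)‖ ^ 2 := by
      intro ω
      set e := condExp (MeasurableSpace.comap (fun ω' : ΩSp M₁ M₂ N => g ω'.1) inferInstance) F' (fun ω' : ΩSp M₁ M₂ N => ω'.2) ω with he
      set sv := ρStar (g ω.1) with hsv
      set q := ρ (g ω.1) with hq
      have huv : (e - q) - (((2:ℝ) • sv - e) - q) = (2:ℝ) • (e - sv) := by
        rw [smul_sub, two_smul, two_smul]
        abel
      have h1 : ‖(e - q) - (((2:ℝ) • sv - e) - q)‖ = 2 * ‖e - sv‖ := by
        rw [huv, norm_smul]
        simp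
      have h2 : ‖(e - q) - (((2:ℝ) • sv - e) - q)‖ ≤ ‖e - q‖ + ‖((2:ℝ) • sv - e) - q‖ :=
        norm_sub_le _ _
      nlinarith [norm_nonneg (e - q), norm_nonneg (((2:ℝ) • sv - e) - q),
        norm_nonneg (e - sv), sq_nonneg (‖e - q‖ - ‖((2:ℝ) • sv - e) - q‖)]
    have hint : ∫ ω, 2 * ‖condExp (MeasurableSpace.comap (fun ω' : ΩSp M₁ M₂ N => g ω'.1) inferInstance) F' (fun ω' => ω'.2) ω - ρStar (g ω.1)‖ ^ 2 ∂F'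
        ≤ ∫ ω, (‖condExp (MeasurableSpace.comap (fun ω' : ΩSp M₁ M₂ N => g ω'.1) inferInstance) F' (fun ω' => ω'.2) ω - ρ (g ω.1)‖ ^ 2
          + ‖((2:ℝ) • ρStar (g ω.1) - condExp (MeasurableSpace.comap (fun ω' : ΩSp M₁ M₂ N => g ω'.1) inferInstance) F' (fun ω' => ω'.2) ω)
            - ρ (g ω.1)‖ ^ 2) ∂F' :=
      integral_mono IL (IR1.add IR2) hpoint
    rw [integral_add IR1 IR2, MeasureTheory.integral_const_mul] at hint
    rw [rs, r1, r2']
    linarith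
  -- assembling the supremum inequality
  have hbddR : BddAbove (Set.range fun F' : Measure (ΩSp M₁ M₂ N) =>
      ⨆ _ : F' ∈ SetF ν A B φA ψB c, REGZ g F' ρ) := by
    refine ⟨max (2 * c + 2 * ∫ x, ‖ρ (g x)‖ ^ 2 ∂ν) 0, ?_⟩
    rintro x ⟨F', rfl⟩
    beta_reduce
    by_cases hF' : F' ∈ SetF ν A B φA ψB c
    · rw [ciSup_pos hF']
      exact le_max_of_le_left (hb2 F' hF')
    · haveI : IsEmpty (F' ∈ SetF ν A B φA ψB c) := ⟨hF'⟩
      rw [Real.iSup_of_isEmpty]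
      exact le_max_right _ _
  have hle_RHS : ∀ F' ∈ SetF ν A B φA ψB c,
      REGZ g F' ρ ≤ ⨆ F'' ∈ SetF ν A B φA ψB c, REGZ g F'' ρ := by
    intro F' hF'
    have h := le_ciSup hbddR F'
    rwa [ciSup_pos hF'] at h
  have hRHS0 : 0 ≤ ⨆ F'' ∈ SetF ν A B φA ψB c, REGZ g F'' ρ :=
    le_trans (hnn F₀ hF₀) (hle_RHS F₀ hF₀)
  refine Real.iSup_le (fun F' => ?_) hRHS0
  by_cases hF' : F' ∈ SetF ν A B φA ψB c
  · rw [ciSup_pos hF']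
    obtain ⟨F'', hF'', hineq⟩ := hmain F' hF'
    have hA1 := hle_RHS F' hF'
    have hA2 := hle_RHS F'' hF''
    linarith
  · haveI : IsEmpty (F' ∈ SetF ν A B φA ψB c) := ⟨hF'⟩
    rw [Real.iSup_of_isEmpty]
    exact hRHS0
end
end

section
/- Theorem 4 (semi-parametric decomposition): for F ∈ 𝓕, let D = {(x₁,x₂) ↦ ψ(x₂) − η_ψ(x₁) : ψ ∈ B}, where for each ψ ∈ B, η_ψ ∈ A is the A-optimal estimator of ψ(X₂) from X₁ (the minimizer over η ∈ A of E_ν‖ψ(X₂)−η(X₁)‖²), and let ρ_{A,B} be the minimizer over d ∈ D of E_F‖Y − d(X₁,X₂)‖². Then the C-optimal estimator decomposes as ρ_C(X₁,X₂) = φ_A(X₁) + ρ_{A,B}(X₁,X₂) ν-almost everywhere. -/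
open MeasureTheory

noncomputable section

section AuxLemmas

open scoped RealInnerProductSpace

variable {α : Type*} [MeasurableSpace α] {μ : Measure α} {n : ℕ}

lemma aux_integrable_inner {f g : α → Euc n} (hf : MemLp f 2 μ) (hg : MemLp g 2 μ) :
    Integrable (fun x => ⟪f x, g x⟫) μ := by
  have h := L2.integrable_inner (𝕜 := ℝ) (hf.toLp f) (hg.toLp g)
  refine h.congr ?_
  filter_upwards [hf.coeFn_toLp, hg.coeFn_toLp] with x hx hy
  rw [hx, hy]

lemma aux_integrable_sq {f : α → Euc n} (hf : MemLp f 2 μ) :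
    Integrable (fun x => ‖f x‖ ^ 2) μ := by
  have h := hf.integrable_norm_rpow two_ne_zero ENNReal.ofNat_ne_top
  have e : ((2 : ENNReal)).toReal = ((2 : ℕ) : ℝ) := by simp
  rw [e] at h
  refine h.congr (Filter.Eventually.of_forall fun x => ?_)
  simp [Real.rpow_natCast]

lemma aux_expand {f g : α → Euc n} (hf : MemLp f 2 μ) (hg : MemLp g 2 μ) :
    ∫ x, ‖f x - g x‖ ^ 2 ∂μ
      = ∫ x, ‖f x‖ ^ 2 ∂μ - 2 * ∫ x, ⟪f x, g x⟫ ∂μ + ∫ x, ‖g x‖ ^ 2 ∂μ := by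
  have h1 := aux_integrable_sq hf
  have h2 := aux_integrable_inner hf hg
  have h3 := aux_integrable_sq hg
  calc ∫ x, ‖f x - g x‖ ^ 2 ∂μ
      = ∫ x, (‖f x‖ ^ 2 - 2 * ⟪f x, g x⟫ + ‖g x‖ ^ 2) ∂μ := by
        congr 1; funext x; exact norm_sub_sq_real _ _
    _ = ∫ x, ‖f x‖ ^ 2 ∂μ - 2 * ∫ x, ⟪f x, g x⟫ ∂μ + ∫ x, ‖g x‖ ^ 2 ∂μ := by
        have h2' : Integrable (fun x => 2 * ⟪f x, g x⟫) μ := h2.const_mul 2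
        have h12 : Integrable (fun x => ‖f x‖ ^ 2 - 2 * ⟪f x, g x⟫) μ := h1.sub h2'
        rw [integral_add h12 h3, integral_sub h1 h2', integral_const_mul]

lemma aux_quad {a b : ℝ} (ha : 0 ≤ a) (h : ∀ t : ℝ, 0 ≤ a * t ^ 2 - 2 * b * t) : b = 0 := by
  by_contra hb
  have h2 : (0:ℝ) < a + 1 := by linarith
  have h1 := h (b / (a + 1))
  have hb2 : 0 < b ^ 2 := by positivity
  have key : a * (b / (a + 1)) ^ 2 - 2 * b * (b / (a + 1))
      = (a * b ^ 2 - 2 * b ^ 2 * (a + 1)) / (a + 1) ^ 2 := by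
    field_simp
  rw [key] at h1
  have hpos : (0:ℝ) < (a + 1) ^ 2 := by positivity
  have h4 : 0 ≤ a * b ^ 2 - 2 * b ^ 2 * (a + 1) := by
    calc (0:ℝ) = 0 * (a + 1) ^ 2 := by ring
      _ ≤ (a * b ^ 2 - 2 * b ^ 2 * (a + 1)) / (a + 1) ^ 2 * (a + 1) ^ 2 :=
          mul_le_mul_of_nonneg_right h1 hpos.le
      _ = a * b ^ 2 - 2 * b ^ 2 * (a + 1) := by field_simp
  nlinarith [mul_nonneg ha hb2.le]

lemma aux_ortho {u s : α → Euc n} (hu : MemLp u 2 μ) (hs : MemLp s 2 μ)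
    (h : ∀ t : ℝ, ∫ x, ‖u x‖ ^ 2 ∂μ ≤ ∫ x, ‖u x - t • s x‖ ^ 2 ∂μ) :
    ∫ x, ⟪u x, s x⟫ ∂μ = 0 := by
  have hαnn : 0 ≤ ∫ x, ‖s x‖ ^ 2 ∂μ := integral_nonneg fun x => sq_nonneg _
  refine aux_quad hαnn fun t => ?_
  have hexp := aux_expand hu (hs.const_smul t)
  simp only [Pi.smul_apply] at hexp
  have e1 : ∫ x, ⟪u x, t • s x⟫ ∂μ = t * ∫ x, ⟪u x, s x⟫ ∂μ := by
    simp_rw [real_inner_smul_right]; exact integral_const_mul t _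
  have e2 : ∫ x, ‖t • s x‖ ^ 2 ∂μ = t ^ 2 * ∫ x, ‖s x‖ ^ 2 ∂μ := by
    simp_rw [norm_smul, Real.norm_eq_abs, mul_pow, sq_abs]
    exact integral_const_mul _ _
  rw [e1, e2] at hexp
  have ht := h t
  rw [hexp] at ht
  nlinarith [ht]

lemma aux_transfer {β : Type*} [MeasurableSpace β] {T : α → β}
    (hT : Measurable T) {ν' : Measure β} (hmap : μ.map T = ν') {f : β → ℝ}
    (hf : AEStronglyMeasurable f ν') :
    ∫ y, f y ∂ν' = ∫ x, f (T x) ∂μ := by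
  subst hmap
  exact integral_map hT.aemeasurable hf

lemma aux_memLp_comp {β : Type*} [MeasurableSpace β] {T : α → β}
    (hT : Measurable T) {g : β → Euc n} (hg : MemLp g 2 (μ.map T)) :
    MemLp (fun x => g (T x)) 2 μ := by
  rw [memLp_map_measure_iff hg.aestronglyMeasurable hT.aemeasurable] at hg
  exact hg

end AuxLemmas

open scoped RealInnerProductSpace

/-- Theorem 4, semi-parametric decomposition: with `ρ_(A,B)` the MMSE
estimator of `Y` among all functions `ψ(X₂) − η_ψ(X₁)` (`ψ ∈ B`, `η_ψ` the `A`-optimal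
estimator of `ψ(X₂)` from `X₁`), the `C`-optimal estimator decomposes as
`ρ_C(X₁,X₂) = φ_A(X₁) + ρ_(A,B)(X₁,X₂)` `ν`-almost everywhere. -/
theorem stmt_11
    (M₁ M₂ N : ℕ) (hM₁ : 0 < M₁) (hM₂ : 0 < M₂) (hN : 0 < N)
    (ν : Measure (XSp M₁ M₂)) (hνp : IsProbabilityMeasure ν)
    (hνmom : MemLp (id : XSp M₁ M₂ → XSp M₁ M₂) 2 ν)
    (A : Submodule ℝ (Euc M₁ → Euc N)) (B : Submodule ℝ (Euc M₂ → Euc N))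
    (hAmeas : ∀ φ ∈ A, Measurable φ) (hBmeas : ∀ ψ ∈ B, Measurable ψ)
    (hAL2 : ∀ φ ∈ A, MemLp φ 2 (ν.map Prod.fst))
    (hBL2 : ∀ ψ ∈ B, MemLp ψ 2 (ν.map Prod.snd))
    (φA : Euc M₁ → Euc N) (ψB : Euc M₂ → Euc N) (hφA : φA ∈ A) (hψB : ψB ∈ B)
    (c : ℝ) (hc : 0 < c)
    (hne : (SetF ν A B φA ψB c).Nonempty)
    (η : (Euc M₂ → Euc N) → Euc M₁ → Euc N)
    (hηA : ∀ ψ ∈ B, η ψ ∈ A)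
    (hηopt : ∀ ψ ∈ B, ∀ φ ∈ A,
      ∫ x, ‖ψ x.2 - η ψ x.1‖ ^ 2 ∂ν ≤ ∫ x, ‖ψ x.2 - φ x.1‖ ^ 2 ∂ν)
    (F : Measure (ΩSp M₁ M₂ N)) (hF : F ∈ SetF ν A B φA ψB c)
    (ρAB : XSp M₁ M₂ → Euc N)
    (hρABmem : ∃ ψ ∈ B, ρAB = fun x => ψ x.2 - η ψ x.1)
    (hρABmin : ∀ ψ ∈ B, MSE F ρAB ≤ MSE F (fun x => ψ x.2 - η ψ x.1))
    (ρC : XSp M₁ M₂ → Euc N) (hρCmem : ρC ∈ Cset A B)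
    (hρCmin : ∀ ρ ∈ Cset A B, MSE F ρC ≤ MSE F ρ) :
    ρC =ᵐ[ν] fun x => φA x.1 + ρAB x := by
  classical
  obtain ⟨hFp, hmapF, hYF, hAopt, hBopt, -⟩ := hF
  haveI := hFp
  haveI := hνp
  obtain ⟨ψ₀, hψ₀, hρABeq⟩ := hρABmem
  obtain ⟨φ₁, hφ₁, ψ₁, hψ₁, hρCeq⟩ := hρCmem
  -- maps of measures
  have hmap1 : F.map (fun ω : ΩSp M₁ M₂ N => ω.1.1) = ν.map Prod.fst := by
    rw [← hmapF, Measure.map_map measurable_fst measurable_fst]; rfl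
  have hmap2 : F.map (fun ω : ΩSp M₁ M₂ N => ω.1.2) = ν.map Prod.snd := by
    rw [← hmapF, Measure.map_map measurable_snd measurable_fst]; rfl
  -- MemLp of compositions
  have compA : ∀ φ ∈ A, MemLp (fun ω : ΩSp M₁ M₂ N => φ ω.1.1) 2 F := by
    intro φ hφ
    have h := hAL2 φ hφ
    rw [← hmap1] at h
    exact aux_memLp_comp (measurable_fst.comp measurable_fst) h
  have compB : ∀ ψ ∈ B, MemLp (fun ω : ΩSp M₁ M₂ N => ψ ω.1.2) 2 F := by
    intro ψ hψ
    have h := hBL2 ψ hψ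
    rw [← hmap2] at h
    exact aux_memLp_comp (measurable_snd.comp measurable_fst) h
  have compAν : ∀ φ ∈ A, MemLp (fun x : XSp M₁ M₂ => φ x.1) 2 ν :=
    fun φ hφ => aux_memLp_comp measurable_fst (hAL2 φ hφ)
  have compBν : ∀ ψ ∈ B, MemLp (fun x : XSp M₁ M₂ => ψ x.2) 2 ν :=
    fun ψ hψ => aux_memLp_comp measurable_snd (hBL2 ψ hψ)
  have haF : MemLp (fun ω : ΩSp M₁ M₂ N => φA ω.1.1) 2 F := compA φA hφA
  have hdF : ∀ ψ ∈ B, MemLp (fun ω : ΩSp M₁ M₂ N => ψ ω.1.2 - η ψ ω.1.1) 2 F :=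
    fun ψ hψ => (compB ψ hψ).sub (compA _ (hηA ψ hψ))
  -- first-order condition: Y - φA ⟂ A under F
  have orthoYA : ∀ φ ∈ A, ∫ ω, ⟪ω.2 - φA ω.1.1, φ ω.1.1⟫ ∂F = 0 := by
    intro φ hφ
    refine aux_ortho (hYF.sub (compA φA hφA)) (compA φ hφ) fun t => ?_
    have h := hAopt (φA + t • φ) (A.add_mem hφA (A.smul_mem t hφ))
    simpa only [MSE, Pi.add_apply, Pi.smul_apply, sub_add_eq_sub_sub] using h
  -- first-order condition: ψ - η ψ ⟂ A under ν
  have orthoDν : ∀ ψ ∈ B, ∀ φ ∈ A, ∫ x, ⟪ψ x.2 - η ψ x.1, φ x.1⟫ ∂ν = 0 := by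
    intro ψ hψ φ hφ
    refine aux_ortho ((compBν ψ hψ).sub (compAν _ (hηA ψ hψ))) (compAν φ hφ) fun t => ?_
    have h := hηopt ψ hψ (η ψ + t • φ) (A.add_mem (hηA ψ hψ) (A.smul_mem t hφ))
    simpa only [Pi.add_apply, Pi.smul_apply, sub_add_eq_sub_sub] using h
  have orthoDA : ∀ ψ ∈ B, ∀ φ ∈ A, ∫ ω, ⟪ψ ω.1.2 - η ψ ω.1.1, φ ω.1.1⟫ ∂F = 0 := by
    intro ψ hψ φ hφ
    have hm : AEStronglyMeasurable (fun x : XSp M₁ M₂ => ⟪ψ x.2 - η ψ x.1, φ x.1⟫) ν :=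
      ((((hBmeas ψ hψ).comp measurable_snd).sub
        ((hAmeas _ (hηA ψ hψ)).comp measurable_fst)).inner
        ((hAmeas φ hφ).comp measurable_fst)).aestronglyMeasurable
    exact (aux_transfer measurable_fst hmapF hm).symm.trans (orthoDν ψ hψ φ hφ)
  -- key identity: adding φA to a "debiased" estimator shifts the MSE by a constant
  have keyEq : ∀ ψ ∈ B,
      ∫ ω, ‖ω.2 - (φA ω.1.1 + (ψ ω.1.2 - η ψ ω.1.1))‖ ^ 2 ∂F
        = ∫ ω, ‖ω.2 - (ψ ω.1.2 - η ψ ω.1.1)‖ ^ 2 ∂F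
          - 2 * ∫ ω, ⟪ω.2, φA ω.1.1⟫ ∂F + ∫ ω, ‖φA ω.1.1‖ ^ 2 ∂F := by
    intro ψ hψ
    have hd := hdF ψ hψ
    have hud : MemLp (fun ω : ΩSp M₁ M₂ N => ω.2 - (ψ ω.1.2 - η ψ ω.1.1)) 2 F := hYF.sub hd
    have hexp := aux_expand hud haF
    have hsplit : ∫ ω, ⟪ω.2 - (ψ ω.1.2 - η ψ ω.1.1), φA ω.1.1⟫ ∂F
        = ∫ ω, ⟪ω.2, φA ω.1.1⟫ ∂F := by
      have h1 : Integrable (fun ω : ΩSp M₁ M₂ N => ⟪ω.2, φA ω.1.1⟫) F :=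
        aux_integrable_inner hYF haF
      have h2 : Integrable (fun ω : ΩSp M₁ M₂ N => ⟪ψ ω.1.2 - η ψ ω.1.1, φA ω.1.1⟫) F :=
        aux_integrable_inner hd haF
      have e : (fun ω : ΩSp M₁ M₂ N => ⟪ω.2 - (ψ ω.1.2 - η ψ ω.1.1), φA ω.1.1⟫)
          = fun ω => ⟪ω.2, φA ω.1.1⟫ - ⟪ψ ω.1.2 - η ψ ω.1.1, φA ω.1.1⟫ := by
        funext ω; rw [inner_sub_left]
      rw [e, integral_sub h1 h2, orthoDA ψ hψ φA hφA, sub_zero]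
    have hL : (fun ω : ΩSp M₁ M₂ N => ‖ω.2 - (φA ω.1.1 + (ψ ω.1.2 - η ψ ω.1.1))‖ ^ 2)
        = fun ω => ‖(ω.2 - (ψ ω.1.2 - η ψ ω.1.1)) - φA ω.1.1‖ ^ 2 := by
      funext ω; congr 1; congr 1; abel
    rw [hL, hexp, hsplit]
  -- comparison within the class for fixed debiasing direction
  have compare : ∀ ψ ∈ B, ∀ b ∈ A,
      ∫ ω, ‖ω.2 - (φA ω.1.1 + (ψ ω.1.2 - η ψ ω.1.1))‖ ^ 2 ∂F
        ≤ ∫ ω, ‖ω.2 - (b ω.1.1 + (ψ ω.1.2 - η ψ ω.1.1))‖ ^ 2 ∂F := by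
    intro ψ hψ b hb
    have hbA := A.sub_mem hb hφA
    have hp : MemLp (fun ω : ΩSp M₁ M₂ N =>
        ω.2 - (φA ω.1.1 + (ψ ω.1.2 - η ψ ω.1.1))) 2 F := hYF.sub (haF.add (hdF ψ hψ))
    have hq : MemLp (fun ω : ΩSp M₁ M₂ N => b ω.1.1 - φA ω.1.1) 2 F :=
      (compA b hb).sub haF
    have hexp := aux_expand hp hq
    have hcross : ∫ ω, ⟪ω.2 - (φA ω.1.1 + (ψ ω.1.2 - η ψ ω.1.1)),
        b ω.1.1 - φA ω.1.1⟫ ∂F = 0 := by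
      have e : (fun ω : ΩSp M₁ M₂ N => ⟪ω.2 - (φA ω.1.1 + (ψ ω.1.2 - η ψ ω.1.1)),
          b ω.1.1 - φA ω.1.1⟫)
          = fun ω => ⟪ω.2 - φA ω.1.1, (b - φA) ω.1.1⟫
            - ⟪ψ ω.1.2 - η ψ ω.1.1, (b - φA) ω.1.1⟫ := by
        funext ω
        have e0 : ω.2 - (φA ω.1.1 + (ψ ω.1.2 - η ψ ω.1.1))
            = (ω.2 - φA ω.1.1) - (ψ ω.1.2 - η ψ ω.1.1) := by abel
        rw [e0, inner_sub_left]; rfl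
      have hYa : MemLp (fun ω : ΩSp M₁ M₂ N => ω.2 - φA ω.1.1) 2 F := hYF.sub haF
      have j1 : Integrable (fun ω : ΩSp M₁ M₂ N => ⟪ω.2 - φA ω.1.1, (b - φA) ω.1.1⟫) F :=
        aux_integrable_inner hYa (compA _ hbA)
      have j2 : Integrable (fun ω : ΩSp M₁ M₂ N => ⟪ψ ω.1.2 - η ψ ω.1.1, (b - φA) ω.1.1⟫) F :=
        aux_integrable_inner (hdF ψ hψ) (compA _ hbA)
      rw [e, integral_sub j1 j2, orthoYA _ hbA, orthoDA ψ hψ _ hbA, sub_zero]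
    calc ∫ ω, ‖ω.2 - (φA ω.1.1 + (ψ ω.1.2 - η ψ ω.1.1))‖ ^ 2 ∂F
        ≤ ∫ ω, ‖ω.2 - (φA ω.1.1 + (ψ ω.1.2 - η ψ ω.1.1))‖ ^ 2 ∂F
            + ∫ ω, ‖b ω.1.1 - φA ω.1.1‖ ^ 2 ∂F :=
          le_add_of_nonneg_right (integral_nonneg fun ω => sq_nonneg _)
      _ = ∫ ω, ‖(ω.2 - (φA ω.1.1 + (ψ ω.1.2 - η ψ ω.1.1))) - (b ω.1.1 - φA ω.1.1)‖ ^ 2 ∂F := by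
          rw [hexp, hcross]; ring
      _ = ∫ ω, ‖ω.2 - (b ω.1.1 + (ψ ω.1.2 - η ψ ω.1.1))‖ ^ 2 ∂F := by
          congr 1; funext ω; congr 1; abel
  -- φA + ρAB is optimal in Cset A B
  have hABopt : ∀ ρ ∈ Cset A B, MSE F (fun x => φA x.1 + ρAB x) ≤ MSE F ρ := by
    intro ρ hρ
    obtain ⟨φ, hφ, ψ, hψ, rfl⟩ := hρ
    have hb := A.add_mem hφ (hηA ψ hψ)
    have h1 : MSE F (fun x => φ x.1 + ψ x.2)
        = ∫ ω, ‖ω.2 - ((φ + η ψ) ω.1.1 + (ψ ω.1.2 - η ψ ω.1.1))‖ ^ 2 ∂F := by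
      simp only [MSE, Pi.add_apply]
      congr 1; funext ω; congr 2; abel
    have h2 := compare ψ hψ (φ + η ψ) hb
    have h3 := keyEq ψ hψ
    have h4 := keyEq ψ₀ hψ₀
    have h5 := hρABmin ψ hψ
    have h6 : MSE F ρAB = ∫ ω, ‖ω.2 - (ψ₀ ω.1.2 - η ψ₀ ω.1.1)‖ ^ 2 ∂F := by
      rw [hρABeq]; rfl
    have h7 : MSE F (fun x => ψ x.2 - η ψ x.1)
        = ∫ ω, ‖ω.2 - (ψ ω.1.2 - η ψ ω.1.1)‖ ^ 2 ∂F := rfl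
    have h8 : MSE F (fun x => φA x.1 + ρAB x)
        = ∫ ω, ‖ω.2 - (φA ω.1.1 + (ψ₀ ω.1.2 - η ψ₀ ω.1.1))‖ ^ 2 ∂F := by
      rw [hρABeq]; rfl
    rw [h6, h7] at h5
    rw [h1, h8]
    linarith
  -- both ρC and φA + ρAB are minimizers; use strict convexity (parallelogram law)
  have hhC : (fun x : XSp M₁ M₂ => φA x.1 + ρAB x) ∈ Cset A B := by
    refine ⟨φA - η ψ₀, A.sub_mem hφA (hηA ψ₀ hψ₀), ψ₀, hψ₀, ?_⟩
    funext x
    simp only [hρABeq, Pi.sub_apply]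
    abel
  have hρCmem' : ρC ∈ Cset A B := ⟨φ₁, hφ₁, ψ₁, hψ₁, hρCeq⟩
  have m1 : MSE F ρC ≤ MSE F (fun x => φA x.1 + ρAB x) := hρCmin _ hhC
  have m2 : MSE F (fun x => φA x.1 + ρAB x) ≤ MSE F ρC := hABopt ρC hρCmem'
  have hmidC : (fun x : XSp M₁ M₂ => (2⁻¹ : ℝ) • (ρC x + (φA x.1 + ρAB x))) ∈ Cset A B := by
    refine ⟨(2⁻¹ : ℝ) • (φ₁ + (φA - η ψ₀)),
      A.smul_mem _ (A.add_mem hφ₁ (A.sub_mem hφA (hηA ψ₀ hψ₀))),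
      (2⁻¹ : ℝ) • (ψ₁ + ψ₀), B.smul_mem _ (B.add_mem hψ₁ hψ₀), ?_⟩
    funext x
    simp only [hρCeq, hρABeq, Pi.smul_apply, Pi.add_apply, Pi.sub_apply, smul_add, smul_sub]
    abel
  have hgF : MemLp (fun ω : ΩSp M₁ M₂ N => ρC ω.1) 2 F := by
    have e : (fun ω : ΩSp M₁ M₂ N => ρC ω.1) = fun ω => φ₁ ω.1.1 + ψ₁ ω.1.2 := by
      funext ω; rw [hρCeq]
    rw [e]; exact (compA φ₁ hφ₁).add (compB ψ₁ hψ₁)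
  have hhF : MemLp (fun ω : ΩSp M₁ M₂ N => φA ω.1.1 + ρAB ω.1) 2 F := by
    have e : (fun ω : ΩSp M₁ M₂ N => φA ω.1.1 + ρAB ω.1)
        = fun ω => φA ω.1.1 + (ψ₀ ω.1.2 - η ψ₀ ω.1.1) := by
      funext ω; rw [hρABeq]
    rw [e]; exact haF.add ((compB ψ₀ hψ₀).sub (compA _ (hηA ψ₀ hψ₀)))
  have i1 : Integrable (fun ω : ΩSp M₁ M₂ N => ‖ω.2 - ρC ω.1‖ ^ 2) F :=
    aux_integrable_sq (hYF.sub hgF)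
  have i2 : Integrable (fun ω : ΩSp M₁ M₂ N => ‖ω.2 - (φA ω.1.1 + ρAB ω.1)‖ ^ 2) F :=
    aux_integrable_sq (hYF.sub hhF)
  have i3 : Integrable (fun ω : ΩSp M₁ M₂ N => ‖ρC ω.1 - (φA ω.1.1 + ρAB ω.1)‖ ^ 2) F :=
    aux_integrable_sq (hgF.sub hhF)
  have imid : Integrable (fun ω : ΩSp M₁ M₂ N =>
      ‖ω.2 - (2⁻¹ : ℝ) • (ρC ω.1 + (φA ω.1.1 + ρAB ω.1))‖ ^ 2) F :=
    aux_integrable_sq (hYF.sub ((hgF.add hhF).const_smul (2⁻¹ : ℝ)))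
  have par : ∀ ω : ΩSp M₁ M₂ N,
      4 * ‖ω.2 - (2⁻¹ : ℝ) • (ρC ω.1 + (φA ω.1.1 + ρAB ω.1))‖ ^ 2
        = 2 * ‖ω.2 - ρC ω.1‖ ^ 2 + 2 * ‖ω.2 - (φA ω.1.1 + ρAB ω.1)‖ ^ 2
          - ‖ρC ω.1 - (φA ω.1.1 + ρAB ω.1)‖ ^ 2 := by
    intro ω
    set y := ω.2 with hy
    set gv := ρC ω.1 with hgv
    set hv := φA ω.1.1 + ρAB ω.1 with hhv
    have hpar := parallelogram_law_with_norm ℝ (y - gv) (y - hv)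
    have e1 : (y - gv) + (y - hv) = (2 : ℝ) • (y - (2⁻¹ : ℝ) • (gv + hv)) := by
      rw [smul_sub, smul_smul]
      norm_num
      rw [two_smul]
      abel
    have e2 : (y - gv) - (y - hv) = hv - gv := by abel
    rw [e1, e2, norm_smul] at hpar
    have h2n : ‖(2 : ℝ)‖ = 2 := by norm_num
    rw [h2n, show ‖hv - gv‖ = ‖gv - hv‖ from norm_sub_rev _ _] at hpar
    linear_combination hpar
  have keyint : ∫ ω, ‖ρC ω.1 - (φA ω.1.1 + ρAB ω.1)‖ ^ 2 ∂F
      = 2 * MSE F ρC + 2 * MSE F (fun x => φA x.1 + ρAB x)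
        - 4 * MSE F (fun x : XSp M₁ M₂ => (2⁻¹ : ℝ) • (ρC x + (φA x.1 + ρAB x))) := by
    have e1 : MSE F ρC = ∫ ω, ‖ω.2 - ρC ω.1‖ ^ 2 ∂F := rfl
    have e2 : MSE F (fun x => φA x.1 + ρAB x)
        = ∫ ω, ‖ω.2 - (φA ω.1.1 + ρAB ω.1)‖ ^ 2 ∂F := rfl
    have e3 : MSE F (fun x : XSp M₁ M₂ => (2⁻¹ : ℝ) • (ρC x + (φA x.1 + ρAB x)))
        = ∫ ω, ‖ω.2 - (2⁻¹ : ℝ) • (ρC ω.1 + (φA ω.1.1 + ρAB ω.1))‖ ^ 2 ∂F := rfl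
    rw [e1, e2, e3]
    have s1 : ∫ ω, (2 * ‖ω.2 - ρC ω.1‖ ^ 2 + 2 * ‖ω.2 - (φA ω.1.1 + ρAB ω.1)‖ ^ 2
          - 4 * ‖ω.2 - (2⁻¹ : ℝ) • (ρC ω.1 + (φA ω.1.1 + ρAB ω.1))‖ ^ 2) ∂F
        = 2 * ∫ ω, ‖ω.2 - ρC ω.1‖ ^ 2 ∂F
          + 2 * ∫ ω, ‖ω.2 - (φA ω.1.1 + ρAB ω.1)‖ ^ 2 ∂F
          - 4 * ∫ ω, ‖ω.2 - (2⁻¹ : ℝ) • (ρC ω.1 + (φA ω.1.1 + ρAB ω.1))‖ ^ 2 ∂F := by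
      have j1 : Integrable (fun ω : ΩSp M₁ M₂ N => 2 * ‖ω.2 - ρC ω.1‖ ^ 2) F := i1.const_mul 2
      have j2 : Integrable (fun ω : ΩSp M₁ M₂ N =>
          2 * ‖ω.2 - (φA ω.1.1 + ρAB ω.1)‖ ^ 2) F := i2.const_mul 2
      have j3 : Integrable (fun ω : ΩSp M₁ M₂ N => 2 * ‖ω.2 - ρC ω.1‖ ^ 2
          + 2 * ‖ω.2 - (φA ω.1.1 + ρAB ω.1)‖ ^ 2) F := j1.add j2
      have j4 : Integrable (fun ω : ΩSp M₁ M₂ N =>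
          4 * ‖ω.2 - (2⁻¹ : ℝ) • (ρC ω.1 + (φA ω.1.1 + ρAB ω.1))‖ ^ 2) F := imid.const_mul 4
      rw [integral_sub j3 j4, integral_add j1 j2,
        integral_const_mul, integral_const_mul, integral_const_mul]
    rw [← s1]
    congr 1; funext ω
    linarith [par ω]
  have mmid := hρCmin _ hmidC
  have hMSEeq : MSE F ρC = MSE F (fun x => φA x.1 + ρAB x) := le_antisymm m1 m2
  have hint0 : ∫ ω, ‖ρC ω.1 - (φA ω.1.1 + ρAB ω.1)‖ ^ 2 ∂F ≤ 0 := by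
    rw [keyint]
    linarith
  have hint : ∫ ω, ‖ρC ω.1 - (φA ω.1.1 + ρAB ω.1)‖ ^ 2 ∂F = 0 :=
    le_antisymm hint0 (integral_nonneg fun ω => sq_nonneg _)
  have haeF : ∀ᵐ ω ∂F, ρC ω.1 = φA ω.1.1 + ρAB ω.1 := by
    have h0 := (integral_eq_zero_iff_of_nonneg (fun ω => sq_nonneg _) i3).mp hint
    filter_upwards [h0] with ω hω
    have h1 : ‖ρC ω.1 - (φA ω.1.1 + ρAB ω.1)‖ ^ 2 = 0 := hω
    have h2 : ρC ω.1 - (φA ω.1.1 + ρAB ω.1) = 0 :=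
      norm_eq_zero.mp ((pow_eq_zero_iff two_ne_zero).mp h1)
    exact sub_eq_zero.mp h2
  -- transfer to ν
  have hmeasρC : Measurable ρC := by
    rw [hρCeq]
    exact ((hAmeas φ₁ hφ₁).comp measurable_fst).add ((hBmeas ψ₁ hψ₁).comp measurable_snd)
  have hmeash : Measurable (fun x : XSp M₁ M₂ => φA x.1 + ρAB x) := by
    simp only [hρABeq]
    exact ((hAmeas φA hφA).comp measurable_fst).add
      (((hBmeas ψ₀ hψ₀).comp measurable_snd).sub
        ((hAmeas _ (hηA ψ₀ hψ₀)).comp measurable_fst))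
  have hset : MeasurableSet {x : XSp M₁ M₂ | ¬ ρC x = φA x.1 + ρAB x} :=
    (measurableSet_eq_fun hmeasρC hmeash).compl
  have hν0 : ν {x : XSp M₁ M₂ | ¬ ρC x = φA x.1 + ρAB x} = 0 := by
    rw [← hmapF, Measure.map_apply measurable_fst hset]
    rw [ae_iff] at haeF
    exact haeF
  change ∀ᵐ x ∂ν, ρC x = φA x.1 + ρAB x
  exact ae_iff.mpr hν0
end
end

section
/- Single-domain training for multi-domain regression (Section 4.1): if B = {0} (no labeled examples from the second domain), then C = A and the multi-domain minimax-MSE estimator equals the single-domain predictor: ρ_C(X₁,X₂) = φ_A(X₁) ν-almost everywhere. Consequently, for any estimator ρ(X₁,X₂) that differs from φ_A(X₁) on a set of positive ν-measure, there exists F ∈ 𝓕 under which φ_A(X₁) attains strictly smaller MSE than ρ. -/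
open MeasureTheory
open scoped ENNReal

noncomputable section

/-! ### Auxiliary lemmas -/

section Aux

open scoped ENNReal

variable {α : Type*} [MeasurableSpace α]

lemma sqInt {E : Type*} [NormedAddCommGroup E] {μ : Measure α} {f : α → E}
    (hf : MemLp f 2 μ) : Integrable (fun x => ‖f x‖ ^ 2) μ := by
  have h := hf.integrable_norm_rpow two_ne_zero ENNReal.ofNat_ne_top
  have h2 : (2 : ℝ≥0∞).toReal = (2:ℝ) := by simp
  rw [h2] at h
  convert h using 2 with x
  rw [← Real.rpow_natCast (‖f x‖) 2]
  norm_num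

lemma memL2_add_measure {E : Type*} [NormedAddCommGroup E] {μ ν : Measure α} {f : α → E}
    (hμ : MemLp f 2 μ) (hν : MemLp f 2 ν) : MemLp f 2 (μ + ν) := by
  refine ⟨hμ.1.add_measure hν.1, ?_⟩
  rw [eLpNorm_lt_top_iff_lintegral_rpow_enorm_lt_top two_ne_zero ENNReal.ofNat_ne_top,
    lintegral_add_measure]
  exact ENNReal.add_lt_top.2
    ⟨lintegral_rpow_enorm_lt_top_of_eLpNorm_lt_top two_ne_zero ENNReal.ofNat_ne_top hμ.2,
     lintegral_rpow_enorm_lt_top_of_eLpNorm_lt_top two_ne_zero ENNReal.ofNat_ne_top hν.2⟩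

lemma intInner {F : Type*} [NormedAddCommGroup F] [InnerProductSpace ℝ F]
    {μ : Measure α} {u w : α → F} (hu : MemLp u 2 μ) (hw : MemLp w 2 μ) :
    Integrable (fun x => (inner ℝ (u x) (w x) : ℝ)) μ := by
  have hi : Integrable (fun x => 2⁻¹ * (‖u x‖ ^ 2 + ‖w x‖ ^ 2)) μ :=
    ((sqInt hu).add (sqInt hw)).const_mul _
  refine hi.mono' (hu.1.inner hw.1) (Filter.Eventually.of_forall fun x => ?_)
  have h1 : |(inner ℝ (u x) (w x) : ℝ)| ≤ ‖u x‖ * ‖w x‖ := abs_real_inner_le_norm _ _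
  have := sq_nonneg (‖u x‖ - ‖w x‖)
  rw [Real.norm_eq_abs]
  nlinarith

lemma expand_quad {F : Type*} [NormedAddCommGroup F] [InnerProductSpace ℝ F]
    {μ : Measure α} (u w : α → F) (hu : MemLp u 2 μ) (hw : MemLp w 2 μ) (t : ℝ) :
    ∫ x, ‖u x - t • w x‖ ^ 2 ∂μ
      = (∫ x, ‖u x‖ ^ 2 ∂μ) - 2 * t * (∫ x, (inner ℝ (u x) (w x) : ℝ) ∂μ)
        + t ^ 2 * ∫ x, ‖w x‖ ^ 2 ∂μ := by
  have h1 : ∀ x, ‖u x - t • w x‖ ^ 2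
      = ‖u x‖ ^ 2 - 2 * t * (inner ℝ (u x) (w x) : ℝ) + t ^ 2 * ‖w x‖ ^ 2 := by
    intro x
    rw [norm_sub_sq_real, real_inner_smul_right, norm_smul]
    rw [mul_pow, Real.norm_eq_abs, sq_abs]
    ring
  rw [integral_congr_ae (Filter.Eventually.of_forall h1)]
  have hA := sqInt hu
  have hB := (intInner hu hw).const_mul (2 * t)
  have hC := (sqInt hw).const_mul (t ^ 2)
  rw [show (fun a => ‖u a‖ ^ 2 - 2 * t * (inner ℝ (u a) (w a) : ℝ) + t ^ 2 * ‖w a‖ ^ 2)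
      = fun a => ((fun x => ‖u x‖ ^ 2) - fun x => 2 * t * (inner ℝ (u x) (w x) : ℝ)) a
        + t ^ 2 * ‖w a‖ ^ 2 from rfl,
    integral_add (hA.sub hB) hC]
  simp only [Pi.sub_apply]
  rw [integral_sub hA hB, integral_const_mul, integral_const_mul]

lemma pull1 {M₁ M₂ N : ℕ} {ν : Measure (XSp M₁ M₂)} {φ : Euc M₁ → Euc N}
    (h : MemLp φ 2 (ν.map Prod.fst)) : MemLp (fun x : XSp M₁ M₂ => φ x.1) 2 ν :=
  (memLp_map_measure_iff h.aestronglyMeasurable measurable_fst.aemeasurable).mp h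

lemma pullF {M₁ M₂ N : ℕ} {F : Measure (ΩSp M₁ M₂ N)} {ν : Measure (XSp M₁ M₂)}
    (hmap : F.map Prod.fst = ν) {φ : Euc M₁ → Euc N} (h : MemLp φ 2 (ν.map Prod.fst)) :
    MemLp (fun ω : ΩSp M₁ M₂ N => φ ω.1.1) 2 F := by
  have h2 : MemLp (fun x : XSp M₁ M₂ => φ x.1) 2 (F.map Prod.fst) := by
    rw [hmap]; exact pull1 h
  exact (memLp_map_measure_iff h2.aestronglyMeasurable measurable_fst.aemeasurable).mp h2

lemma transfer {M₁ M₂ N : ℕ} {F : Measure (ΩSp M₁ M₂ N)} {ν : Measure (XSp M₁ M₂)}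
    (hmap : F.map Prod.fst = ν) (h : XSp M₁ M₂ → ℝ) (hh : Measurable h) :
    ∫ ω, h ω.1 ∂F = ∫ x, h x ∂ν := by
  rw [← hmap, integral_map measurable_fst.aemeasurable hh.aestronglyMeasurable]

lemma mse_mix {M₁ M₂ N : ℕ} (ν : Measure (XSp M₁ M₂)) [IsProbabilityMeasure ν]
    (φA : Euc M₁ → Euc N) (hφm : Measurable φA)
    (hφ2 : MemLp (fun x : XSp M₁ M₂ => φA x.1) 2 ν)
    (v : Euc N) (g : XSp M₁ M₂ → Euc N) (hgm : Measurable g) (hg2 : MemLp g 2 ν) :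
    MSE ((2⁻¹ : ℝ≥0∞) • ν.map (fun x => (x, φA x.1 + v)) +
         (2⁻¹ : ℝ≥0∞) • ν.map (fun x => (x, φA x.1 - v))) g
      = ∫ x, ‖φA x.1 - g x‖ ^ 2 ∂ν + ‖v‖ ^ 2 := by
  have hTp : Measurable (fun x : XSp M₁ M₂ => ((x, φA x.1 + v) : ΩSp M₁ M₂ N)) :=
    measurable_id.prodMk ((hφm.comp measurable_fst).add_const v)
  have hTm : Measurable (fun x : XSp M₁ M₂ => ((x, φA x.1 - v) : ΩSp M₁ M₂ N)) :=
    measurable_id.prodMk ((hφm.comp measurable_fst).sub_const v)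
  have hh : Measurable (fun ω : ΩSp M₁ M₂ N => ‖ω.2 - g ω.1‖ ^ 2) :=
    (measurable_snd.sub (hgm.comp measurable_fst)).norm.pow_const 2
  have hu2 : MemLp (fun x : XSp M₁ M₂ => φA x.1 - g x) 2 ν := hφ2.sub hg2
  have hup : Integrable (fun x : XSp M₁ M₂ => ‖(φA x.1 - g x) + v‖ ^ 2) ν :=
    sqInt (hu2.add (memLp_const v))
  have hum : Integrable (fun x : XSp M₁ M₂ => ‖(φA x.1 - g x) - v‖ ^ 2) ν :=
    sqInt (hu2.sub (memLp_const v))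
  have hupc : Integrable (fun x : XSp M₁ M₂ => ‖(φA x.1 + v) - g x‖ ^ 2) ν := by
    refine hup.congr (Filter.Eventually.of_forall fun x => ?_)
    dsimp only
    rw [show φA x.1 - g x + v = φA x.1 + v - g x from by abel]
  have humc : Integrable (fun x : XSp M₁ M₂ => ‖(φA x.1 - v) - g x‖ ^ 2) ν := by
    refine hum.congr (Filter.Eventually.of_forall fun x => ?_)
    dsimp only
    rw [show φA x.1 - g x - v = φA x.1 - v - g x from by abel]
  have hip : ∫ ω, ‖ω.2 - g ω.1‖ ^ 2 ∂(ν.map (fun x => (x, φA x.1 + v)))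
      = ∫ x, ‖(φA x.1 - g x) + v‖ ^ 2 ∂ν := by
    rw [integral_map hTp.aemeasurable hh.aestronglyMeasurable]
    refine integral_congr_ae (Filter.Eventually.of_forall fun x => ?_)
    dsimp
    rw [show φA x.1 + v - g x = φA x.1 - g x + v from by abel]
  have him : ∫ ω, ‖ω.2 - g ω.1‖ ^ 2 ∂(ν.map (fun x => (x, φA x.1 - v)))
      = ∫ x, ‖(φA x.1 - g x) - v‖ ^ 2 ∂ν := by
    rw [integral_map hTm.aemeasurable hh.aestronglyMeasurable]
    refine integral_congr_ae (Filter.Eventually.of_forall fun x => ?_)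
    dsimp
    rw [show φA x.1 - v - g x = φA x.1 - g x - v from by abel]
  have hIp : Integrable (fun ω : ΩSp M₁ M₂ N => ‖ω.2 - g ω.1‖ ^ 2)
      ((2⁻¹ : ℝ≥0∞) • ν.map (fun x => (x, φA x.1 + v))) := by
    refine Integrable.smul_measure ?_ (by norm_num)
    exact (integrable_map_measure hh.aestronglyMeasurable hTp.aemeasurable).mpr hupc
  have hIm : Integrable (fun ω : ΩSp M₁ M₂ N => ‖ω.2 - g ω.1‖ ^ 2)
      ((2⁻¹ : ℝ≥0∞) • ν.map (fun x => (x, φA x.1 - v))) := by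
    refine Integrable.smul_measure ?_ (by norm_num)
    exact (integrable_map_measure hh.aestronglyMeasurable hTm.aemeasurable).mpr humc
  rw [MSE, integral_add_measure hIp hIm, integral_smul_measure, integral_smul_measure,
    hip, him]
  have htr : (2⁻¹ : ℝ≥0∞).toReal = (2⁻¹ : ℝ) := by simp
  rw [htr]
  have hpar : (∫ x, ‖(φA x.1 - g x) + v‖ ^ 2 ∂ν) + ∫ x, ‖(φA x.1 - g x) - v‖ ^ 2 ∂ν
      = 2 * (∫ x, ‖φA x.1 - g x‖ ^ 2 ∂ν) + 2 * ‖v‖ ^ 2 := by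
    rw [← integral_add hup hum]
    have : ∀ x : XSp M₁ M₂, ‖(φA x.1 - g x) + v‖ ^ 2 + ‖(φA x.1 - g x) - v‖ ^ 2
        = 2 * ‖φA x.1 - g x‖ ^ 2 + 2 * ‖v‖ ^ 2 := by
      intro x
      have h1 := norm_add_sq_real (φA x.1 - g x) v
      have h2 := norm_sub_sq_real (φA x.1 - g x) v
      linarith
    rw [integral_congr_ae (Filter.Eventually.of_forall this), integral_add
      (((sqInt hu2).const_mul 2)) (integrable_const _), integral_const_mul, integral_const]
    simp [measure_univ]
  rw [smul_eq_mul, smul_eq_mul]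
  linarith

lemma key_le {M₁ M₂ N : ℕ} (F : Measure (ΩSp M₁ M₂ N)) [IsProbabilityMeasure F]
    (φA : Euc M₁ → Euc N)
    (hφ2 : MemLp (fun ω : ΩSp M₁ M₂ N => φA ω.1.1) 2 F)
    (hY2 : MemLp (fun ω : ΩSp M₁ M₂ N => ω.2) 2 F)
    (hmin : ∀ t : ℝ, MSE F (fun x => φA x.1) ≤ MSE F (fun x => ((1 + t) • φA) x.1))
    (c : ℝ) (hmom : ∫ ω, ‖ω.2‖ ^ 2 ∂F = c) :
    ∫ ω, ‖φA ω.1.1‖ ^ 2 ∂F ≤ c := by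
  set u : ΩSp M₁ M₂ N → Euc N := fun ω => ω.2 - φA ω.1.1 with hu
  set w : ΩSp M₁ M₂ N → Euc N := fun ω => φA ω.1.1 with hwdef
  have hu2 : MemLp u 2 F := hY2.sub hφ2
  set L := ∫ ω, (inner ℝ (u ω) (w ω) : ℝ) ∂F with hL
  set K := ∫ ω, ‖w ω‖ ^ 2 ∂F with hKdef
  set Iu := ∫ ω, ‖u ω‖ ^ 2 ∂F with hIu
  have hexp : ∀ t : ℝ, ∫ ω, ‖u ω - t • w ω‖ ^ 2 ∂F = Iu - 2 * t * L + t ^ 2 * K :=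
    fun t => expand_quad u w hu2 hφ2 t
  have hmseA : MSE F (fun x => φA x.1) = Iu := rfl
  have hq : ∀ t : ℝ, Iu ≤ Iu - 2 * t * L + t ^ 2 * K := by
    intro t
    have h := hmin t
    rw [hmseA] at h
    refine h.trans_eq ?_
    rw [← hexp t, MSE]
    refine integral_congr_ae (Filter.Eventually.of_forall fun ω => ?_)
    have : ω.2 - ((1 + t) • φA) ω.1.1 = u ω - t • w ω := by
      simp only [Pi.smul_apply, hu, hwdef, add_smul, one_smul]
      abel
    dsimp only
    rw [this]
  have hK0 : 0 ≤ K := integral_nonneg fun ω => sq_nonneg _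
  have hIu0 : 0 ≤ Iu := integral_nonneg fun ω => sq_nonneg _
  have hL0 : L = 0 := by
    by_contra hLne
    have hK1 : (0:ℝ) < K + 1 := by linarith
    set s := L / (K + 1) with hs
    have hsK : s * (K + 1) = L := div_mul_cancel₀ _ (ne_of_gt hK1)
    have h := hq s
    have hs0 : s ≠ 0 := by
      intro h0
      rw [h0, zero_mul] at hsK
      exact hLne hsK.symm
    have hs2 : 0 < s ^ 2 := by positivity
    have h2 : (0:ℝ) ≤ -2 * s * (s * (K + 1)) + s ^ 2 * K := by rw [hsK]; linarith
    nlinarith [h2, mul_nonneg hs2.le hK0, hs2]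
  have hc : c = Iu + 2 * L + K := by
    rw [← hmom]
    have h := hexp (-1)
    have heq : ∀ ω : ΩSp M₁ M₂ N, ‖u ω - (-1 : ℝ) • w ω‖ ^ 2 = ‖ω.2‖ ^ 2 := by
      intro ω
      have : u ω - (-1 : ℝ) • w ω = ω.2 := by
        simp only [hu, hwdef, neg_smul, one_smul, sub_neg_eq_add]
        abel
      rw [this]
    rw [integral_congr_ae (Filter.Eventually.of_forall heq)] at h
    rw [h]; ring
  rw [hc, hL0]
  show K ≤ _
  linarith

lemma mid_zero {M₁ M₂ N : ℕ} (F : Measure (ΩSp M₁ M₂ N)) [IsProbabilityMeasure F]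
    (φ φA : Euc M₁ → Euc N)
    (hφ2 : MemLp (fun ω : ΩSp M₁ M₂ N => φ ω.1.1) 2 F)
    (hφA2 : MemLp (fun ω : ΩSp M₁ M₂ N => φA ω.1.1) 2 F)
    (hY2 : MemLp (fun ω : ΩSp M₁ M₂ N => ω.2) 2 F)
    (h1 : MSE F (fun x => φ x.1) ≤ MSE F (fun x => φA x.1))
    (h2 : MSE F (fun x => φA x.1) ≤ MSE F (fun x => ((2⁻¹ : ℝ) • (φ + φA)) x.1)) :
    ∫ ω, ‖φA ω.1.1 - φ ω.1.1‖ ^ 2 ∂F = 0 := by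
  set u : ΩSp M₁ M₂ N → Euc N := fun ω => ω.2 - φA ω.1.1 with hu
  set w : ΩSp M₁ M₂ N → Euc N := fun ω => φA ω.1.1 - φ ω.1.1 with hw
  have hu2 : MemLp u 2 F := hY2.sub hφA2
  have hw2 : MemLp w 2 F := hφA2.sub hφ2
  set L := ∫ ω, (inner ℝ (u ω) (w ω) : ℝ) ∂F with hL
  set K := ∫ ω, ‖w ω‖ ^ 2 ∂F with hK
  set Iu := ∫ ω, ‖u ω‖ ^ 2 ∂F with hIu
  have e1 := expand_quad u w hu2 hw2 (-1)
  have e2 := expand_quad u w hu2 hw2 (-(2⁻¹ : ℝ))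
  have mφA : MSE F (fun x => φA x.1) = Iu := rfl
  have mφ : MSE F (fun x => φ x.1) = ∫ ω, ‖u ω - (-1 : ℝ) • w ω‖ ^ 2 ∂F := by
    rw [MSE]
    refine integral_congr_ae (Filter.Eventually.of_forall fun ω => ?_)
    have : u ω - (-1 : ℝ) • w ω = ω.2 - φ ω.1.1 := by
      simp only [hu, hw, neg_smul, one_smul, sub_neg_eq_add]
      abel
    dsimp only
    rw [this]
  have mmid : MSE F (fun x => ((2⁻¹ : ℝ) • (φ + φA)) x.1)
      = ∫ ω, ‖u ω - (-(2⁻¹ : ℝ)) • w ω‖ ^ 2 ∂F := by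
    rw [MSE]
    refine integral_congr_ae (Filter.Eventually.of_forall fun ω => ?_)
    have : u ω - (-(2⁻¹ : ℝ)) • w ω = ω.2 - ((2⁻¹ : ℝ) • (φ + φA)) ω.1.1 := by
      simp only [hu, hw, neg_smul, sub_neg_eq_add, Pi.smul_apply, Pi.add_apply, smul_sub,
        smul_add]
      module
    dsimp only
    rw [this]
  have hK0 : 0 ≤ K := integral_nonneg fun ω => sq_nonneg _
  rw [mφ, e1, mφA] at h1
  rw [mφA, mmid, e2] at h2
  show K = 0
  nlinarith

end Aux

/-- Section 4.1, single-domain training: if `B = {0}` then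
`ρ_C(X₁,X₂) = φ_A(X₁)` `ν`-a.e., and for any estimator `ρ(X₁,X₂)` differing from `φ_A(X₁)`
on a set of positive `ν`-measure there exists `F ∈ 𝓕` under which `φ_A(X₁)` attains
strictly smaller MSE than `ρ`. -/

theorem stmt_13
    (M₁ M₂ N : ℕ) (hM₁ : 0 < M₁) (hM₂ : 0 < M₂) (hN : 0 < N)
    (ν : Measure (XSp M₁ M₂)) (hνp : IsProbabilityMeasure ν)
    (hνmom : MemLp (id : XSp M₁ M₂ → XSp M₁ M₂) 2 ν)
    (A : Submodule ℝ (Euc M₁ → Euc N))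
    (hAmeas : ∀ φ ∈ A, Measurable φ)
    (hAL2 : ∀ φ ∈ A, MemLp φ 2 (ν.map Prod.fst))
    (φA : Euc M₁ → Euc N) (hφA : φA ∈ A)
    (c : ℝ) (hc : 0 < c)
    (hne : (SetF ν A (⊥ : Submodule ℝ (Euc M₂ → Euc N)) φA 0 c).Nonempty)
    (ρC : XSp M₁ M₂ → Euc N)
    (hρCmem : ρC ∈ Cset A (⊥ : Submodule ℝ (Euc M₂ → Euc N)))
    (hρCmin : ∀ F ∈ SetF ν A (⊥ : Submodule ℝ (Euc M₂ → Euc N)) φA 0 c,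
      ∀ ρ ∈ Cset A (⊥ : Submodule ℝ (Euc M₂ → Euc N)), MSE F ρC ≤ MSE F ρ) :
    ρC =ᵐ[ν] (fun x => φA x.1) ∧
    ∀ ρ : XSp M₁ M₂ → Euc N, Measurable ρ → MemLp ρ 2 ν →
      ¬ (ρ =ᵐ[ν] fun x => φA x.1) →
      ∃ F ∈ SetF ν A (⊥ : Submodule ℝ (Euc M₂ → Euc N)) φA 0 c,
        MSE F (fun x => φA x.1) < MSE F ρ := by
  classical
  haveI := hνp
  obtain ⟨F₀, hF₀⟩ := hne
  obtain ⟨hF₀p, hF₀map, hF₀Y, hF₀A, hF₀B, hF₀c⟩ := hF₀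
  haveI := hF₀p
  have hφAm : Measurable φA := hAmeas φA hφA
  have hφA2ν : MemLp (fun x : XSp M₁ M₂ => φA x.1) 2 ν := pull1 (hAL2 φA hφA)
  have hφA2F₀ : MemLp (fun ω : ΩSp M₁ M₂ N => φA ω.1.1) 2 F₀ := pullF hF₀map (hAL2 φA hφA)
  constructor
  · -- Part 1
    obtain ⟨φ, hφmem, ψ, hψmem, hρCeq⟩ := hρCmem
    have hψ0 : ψ = 0 := (Submodule.mem_bot ℝ).mp hψmem
    have hρCφ : ρC = fun x : XSp M₁ M₂ => φ x.1 := by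
      rw [hρCeq, hψ0]; funext x; simp
    have hφm : Measurable φ := hAmeas φ hφmem
    have hφ2F₀ : MemLp (fun ω : ΩSp M₁ M₂ N => φ ω.1.1) 2 F₀ := pullF hF₀map (hAL2 φ hφmem)
    have hmemC : (fun x : XSp M₁ M₂ => φA x.1) ∈ Cset A (⊥ : Submodule ℝ (Euc M₂ → Euc N)) :=
      ⟨φA, hφA, 0, Submodule.zero_mem _, by funext x; simp⟩
    have h1 : MSE F₀ (fun x => φ x.1) ≤ MSE F₀ (fun x => φA x.1) := by
      have := hρCmin F₀ ⟨hF₀p, hF₀map, hF₀Y, hF₀A, hF₀B, hF₀c⟩ _ hmemC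
      rwa [hρCφ] at this
    have h2 : MSE F₀ (fun x => φA x.1) ≤ MSE F₀ (fun x => ((2⁻¹ : ℝ) • (φ + φA)) x.1) :=
      hF₀A _ (A.smul_mem _ (A.add_mem hφmem hφA))
    have hzero := mid_zero F₀ φ φA hφ2F₀ hφA2F₀ hF₀Y h1 h2
    have hmeasd : Measurable (fun x : XSp M₁ M₂ => ‖φA x.1 - φ x.1‖ ^ 2) :=
      ((hφAm.comp measurable_fst).sub (hφm.comp measurable_fst)).norm.pow_const 2
    have hzν : ∫ x, ‖φA x.1 - φ x.1‖ ^ 2 ∂ν = 0 := by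
      rw [← transfer hF₀map _ hmeasd]
      exact hzero
    have hint : Integrable (fun x : XSp M₁ M₂ => ‖φA x.1 - φ x.1‖ ^ 2) ν :=
      sqInt (hφA2ν.sub (pull1 (hAL2 φ hφmem)))
    have hae := (integral_eq_zero_iff_of_nonneg (fun x => sq_nonneg _) hint).mp hzν
    rw [hρCφ]
    filter_upwards [hae] with x hx
    simp only [Pi.zero_apply] at hx
    have hn : ‖φA x.1 - φ x.1‖ = 0 := by
      have := (pow_eq_zero_iff (two_ne_zero)).mp hx
      exact this
    have := sub_eq_zero.mp (norm_eq_zero.mp hn)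
    exact this.symm
  · -- Part 2
    intro ρ hρm hρ2 hρne
    set a := ∫ x, ‖φA x.1‖ ^ 2 ∂ν with ha
    have hminF₀ : ∀ t : ℝ, MSE F₀ (fun x => φA x.1) ≤ MSE F₀ (fun x => ((1 + t) • φA) x.1) :=
      fun t => hF₀A _ (A.smul_mem _ hφA)
    have hKc := key_le F₀ φA hφA2F₀ hF₀Y hminF₀ c hF₀c
    have hac : a ≤ c := by
      rw [ha, ← transfer hF₀map (fun x : XSp M₁ M₂ => ‖φA x.1‖ ^ 2)
        ((hφAm.comp measurable_fst).norm.pow_const 2)]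
      exact hKc
    set v : Euc N := Real.sqrt (c - a) • EuclideanSpace.single (⟨0, hN⟩ : Fin N) (1:ℝ) with hv
    have hnv : ‖v‖ ^ 2 = c - a := by
      rw [hv, norm_smul, EuclideanSpace.norm_single]
      rw [Real.norm_eq_abs, abs_of_nonneg (Real.sqrt_nonneg _), norm_one, mul_one]
      exact Real.sq_sqrt (by linarith)
    set Tp := fun x : XSp M₁ M₂ => ((x, φA x.1 + v) : ΩSp M₁ M₂ N) with hTpdef
    set Tm := fun x : XSp M₁ M₂ => ((x, φA x.1 - v) : ΩSp M₁ M₂ N) with hTmdef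
    have hTpm : Measurable Tp := measurable_id.prodMk ((hφAm.comp measurable_fst).add_const v)
    have hTmm : Measurable Tm := measurable_id.prodMk ((hφAm.comp measurable_fst).sub_const v)
    set F := (2⁻¹ : ℝ≥0∞) • ν.map Tp + (2⁻¹ : ℝ≥0∞) • ν.map Tm with hFdef
    have hmse : ∀ g : XSp M₁ M₂ → Euc N, Measurable g → MemLp g 2 ν →
        MSE F g = ∫ x, ‖φA x.1 - g x‖ ^ 2 ∂ν + ‖v‖ ^ 2 := by
      intro g hgm hg2
      exact mse_mix ν φA hφAm hφA2ν v g hgm hg2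
    haveI hPp : IsProbabilityMeasure (ν.map Tp) := Measure.isProbabilityMeasure_map hTpm.aemeasurable
    haveI hPm : IsProbabilityMeasure (ν.map Tm) := Measure.isProbabilityMeasure_map hTmm.aemeasurable
    have hFp : IsProbabilityMeasure F := by
      constructor
      rw [hFdef]
      simp only [Measure.coe_add, Pi.add_apply, Measure.smul_apply, smul_eq_mul, measure_univ,
        mul_one]
      exact ENNReal.inv_two_add_inv_two
    have hhalf : (2⁻¹ : ℝ≥0∞) • ν + (2⁻¹ : ℝ≥0∞) • ν = ν := by
      ext s hs
      simp only [Measure.coe_add, Pi.add_apply, Measure.smul_apply, smul_eq_mul]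
      rw [← add_mul, ENNReal.inv_two_add_inv_two, one_mul]
    have hmap1 : (ν.map Tp).map Prod.fst = ν := by
      rw [Measure.map_map measurable_fst hTpm]
      have h : (Prod.fst ∘ Tp) = id := rfl
      rw [h, Measure.map_id]
    have hmap2 : (ν.map Tm).map Prod.fst = ν := by
      rw [Measure.map_map measurable_fst hTmm]
      have h : (Prod.fst ∘ Tm) = id := rfl
      rw [h, Measure.map_id]
    have hFmap : F.map Prod.fst = ν := by
      rw [hFdef, Measure.map_add _ _ measurable_fst, Measure.map_smul, Measure.map_smul,
        hmap1, hmap2, hhalf]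
    have hY2F : MemLp (fun ω : ΩSp M₁ M₂ N => ω.2) 2 F := by
      have hp : MemLp (fun ω : ΩSp M₁ M₂ N => ω.2) 2 (ν.map Tp) :=
        (memLp_map_measure_iff measurable_snd.aestronglyMeasurable hTpm.aemeasurable).mpr
          (hφA2ν.add (memLp_const v))
      have hm : MemLp (fun ω : ΩSp M₁ M₂ N => ω.2) 2 (ν.map Tm) :=
        (memLp_map_measure_iff measurable_snd.aestronglyMeasurable hTmm.aemeasurable).mpr
          (hφA2ν.sub (memLp_const v))
      rw [hFdef]
      exact memL2_add_measure (hp.smul_measure (by norm_num)) (hm.smul_measure (by norm_num))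
    have hMSEφA : MSE F (fun x => φA x.1) = ‖v‖ ^ 2 := by
      rw [hmse (fun x : XSp M₁ M₂ => φA x.1) (hφAm.comp measurable_fst) hφA2ν]
      simp
    have hminA : ∀ φ ∈ A, MSE F (fun x => φA x.1) ≤ MSE F (fun x => φ x.1) := by
      intro φ hφ
      rw [hMSEφA, hmse (fun x : XSp M₁ M₂ => φ x.1) ((hAmeas φ hφ).comp measurable_fst)
        (pull1 (hAL2 φ hφ))]
      have : (0:ℝ) ≤ ∫ x, ‖φA x.1 - φ x.1‖ ^ 2 ∂ν := integral_nonneg fun x => sq_nonneg _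
      linarith
    have hminB : ∀ ψ ∈ (⊥ : Submodule ℝ (Euc M₂ → Euc N)),
        MSE F (fun x => (0 : Euc M₂ → Euc N) x.2) ≤ MSE F (fun x => ψ x.2) := by
      intro ψ hψ
      rw [(Submodule.mem_bot ℝ).mp hψ]
    have hmom : ∫ ω, ‖ω.2‖ ^ 2 ∂F = c := by
      have h0 : (fun ω : ΩSp M₁ M₂ N => ‖ω.2‖ ^ 2)
          = fun ω : ΩSp M₁ M₂ N => ‖ω.2 - (fun _ : XSp M₁ M₂ => (0:Euc N)) ω.1‖ ^ 2 := by
        funext ω; simp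
      rw [h0]
      have h1 := hmse (fun _ => (0:Euc N)) measurable_const (memLp_const 0)
      rw [MSE] at h1
      rw [h1, hnv]
      have h2 : ∫ x, ‖φA x.1 - (fun _ : XSp M₁ M₂ => (0:Euc N)) x‖ ^ 2 ∂ν = a := by
        rw [ha]
        refine integral_congr_ae (Filter.Eventually.of_forall fun x => ?_)
        simp
      rw [h2]
      ring
    refine ⟨F, ⟨hFp, hFmap, hY2F, hminA, hminB, hmom⟩, ?_⟩
    rw [hMSEφA, hmse ρ hρm hρ2]
    have hnn : (0:ℝ) ≤ ∫ x, ‖φA x.1 - ρ x‖ ^ 2 ∂ν := integral_nonneg fun x => sq_nonneg _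
    rcases hnn.lt_or_eq with h | h
    · linarith
    · exfalso
      apply hρne
      have hae := (integral_eq_zero_iff_of_nonneg (fun x => sq_nonneg _)
        (sqInt (hφA2ν.sub hρ2))).mp h.symm
      filter_upwards [hae] with x hx
      simp only [Pi.zero_apply] at hx
      have hn : ‖φA x.1 - ρ x‖ = 0 := (pow_eq_zero_iff (two_ne_zero)).mp hx
      exact (sub_eq_zero.mp (norm_eq_zero.mp hn)).symm
end
end
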